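/- arXiv:2102.03822 — 7 statements merged into one kernel-verified Lean document; each statement's English description precedes it below -/
import Mathlib

section
/- Let q be an odd prime power, d a non-square in F_q*, and α in F_{q^2} with α² = d. If q ≡ 1 (mod 4), then the set {α} ∪ {c in F_q : c − α is a square in F_{q^2}} is a maximal clique of size (q+1)/2 in the Paley graph P(q²). If q ≡ 3 (mod 4), then the set {α, −α} ∪ {c in F_q : c − α is a square in F_{q^2}} is a maximal clique of size (q+3)/2 in P(q²). -/
/-- A clique in the Paley graph P(q^2): any two distinct elements differ by a square. -/
def paleyClique {F : Type*} [Field F] (C : Set F) : Prop :=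
  ∀ x ∈ C, ∀ y ∈ C, x ≠ y → IsSquare (x - y)

/-- An independent set in the Paley graph P(q^2). -/
def paleyIndep {F : Type*} [Field F] (C : Set F) : Prop :=
  ∀ x ∈ C, ∀ y ∈ C, x ≠ y → ¬ IsSquare (x - y)

/-- A maximal clique in the Paley graph P(q^2). -/
def maxPaleyClique {F : Type*} [Field F] (C : Set F) : Prop :=
  paleyClique C ∧ ∀ C' : Set F, paleyClique C' → C ⊆ C' → C' = C

/-- A maximal independent set in the Paley graph P(q^2). -/
def maxPaleyIndep {F : Type*} [Field F] (C : Set F) : Prop :=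
  paleyIndep C ∧ ∀ C' : Set F, paleyIndep C' → C ⊆ C' → C' = C

/-!
Write `F = K(α)` with `#K = q`. Raising to the `q`-th power is the conjugation `a + bα ↦ a - bα`,
so by Euler's criterion `a + bα` is a square in `F` iff its norm `a² - b²d` is a square in `K`.
Hence all of `K` consists of squares of `F`, `c - α` is a square iff `c² - d` is a square in `K`
(there are `(q - 1) / 2` such `c`, counted on the hyperbola `x² - y² = d`), and `2α` is a square
iff `-d` is, i.e. iff `q ≡ 3 (mod 4)`. For maximality, a vertex `a + bα` with `b ≠ 0` adjacent to
every such `c` makes `c ↦ (a - c) / b` a permutation of them; comparing the power sums `∑ c = 0`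
and `∑ c² = -d / 4` forces `a = 0` and `b = ±1`.
-/

open Finset

theorem Finset.sum_comp_of_mapsTo_of_injOn {ι M : Type*} [AddCommMonoid M] {s : Finset ι}
    {f : ι → ι} (hf : ∀ x ∈ s, f x ∈ s) (hinj : Set.InjOn f s) (h : ι → M) :
    ∑ x ∈ s, h (f x) = ∑ x ∈ s, h x :=
  sum_nbij f hf hinj ((s.finite_toSet.injOn_iff_bijOn_of_mapsTo hf).mp hinj).surjOn
    fun _ _ => rfl

theorem isSquare_sq_mul_iff {K : Type*} [Field K] {b : K} (hb : b ≠ 0) (w : K) :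
    IsSquare (b ^ 2 * w) ↔ IsSquare w := by
  refine ⟨fun ⟨r, hr⟩ => ⟨r / b, ?_⟩, fun ⟨r, hr⟩ => ⟨b * r, by rw [hr]; ring⟩⟩
  field_simp
  linear_combination hr

theorem isSquare_mul_iff_of_not_isSquare {k : Type*} [Field k] [Fintype k] {δ a : k}
    (hδ : ¬IsSquare δ) (ha : a ≠ 0) : IsSquare (a * δ) ↔ ¬IsSquare a := by
  classical
  have hδ0 : δ ≠ 0 := by rintro rfl; exact hδ IsSquare.zero
  rw [← quadraticChar_one_iff_isSquare (mul_ne_zero ha hδ0),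
    ← quadraticChar_neg_one_iff_not_isSquare, map_mul,
    quadraticChar_neg_one_iff_not_isSquare.mpr hδ, mul_neg_one, neg_eq_iff_eq_neg]

section Hyperbola

variable {k : Type*} [Field k] [Fintype k] [DecidableEq k]

def hyperbola (g : k) : Finset (k × k) :=
  univ.filter fun p => p.1 ^ 2 - p.2 ^ 2 = g

def hyperbolaFst (g : k) : Finset k :=
  univ.filter fun c => IsSquare (c ^ 2 - g)

@[simp]
theorem mem_hyperbola {g : k} {p : k × k} : p ∈ hyperbola g ↔ p.1 ^ 2 - p.2 ^ 2 = g := by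
  simp [hyperbola]

@[simp]
theorem mem_hyperbolaFst {g c : k} : c ∈ hyperbolaFst g ↔ IsSquare (c ^ 2 - g) := by
  simp [hyperbolaFst]

/-- `u = x + y` parametrizes the hyperbola `x² - y² = g`, since `x - y = g / u`. -/
theorem sum_hyperbola (hk : ringChar k ≠ 2) {g : k} (hg : g ≠ 0) {M : Type*} [AddCommMonoid M]
    (f : k × k → M) :
    ∑ p ∈ hyperbola g, f p = ∑ u ∈ univ.erase 0, f ((u + g / u) / 2, (u - g / u) / 2) := by
  have h2 : (2 : k) ≠ 0 := Ring.two_ne_zero hk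
  have hsum_ne : ∀ p : k × k, p.1 ^ 2 - p.2 ^ 2 = g → p.1 + p.2 ≠ 0 := fun p hp h0 =>
    hg (by rw [← hp, eq_neg_of_add_eq_zero_left h0]; ring)
  refine (sum_nbij' (fun u => ((u + g / u) / 2, (u - g / u) / 2)) (fun p => p.1 + p.2)
    ?_ ?_ ?_ ?_ fun _ _ => rfl).symm
  · intro u hu
    obtain ⟨hu, -⟩ := mem_erase.mp hu
    rw [mem_hyperbola]
    field_simp
    ring
  · intro p hp
    exact mem_erase.mpr ⟨hsum_ne p (mem_hyperbola.mp hp), mem_univ _⟩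
  · intro u hu
    obtain ⟨hu, -⟩ := mem_erase.mp hu
    field_simp
    ring
  · intro p hp
    rw [mem_hyperbola] at hp
    have hdiff : g / (p.1 + p.2) = p.1 - p.2 := by
      rw [div_eq_iff (hsum_ne p hp), ← hp]
      ring
    ext <;> simp only [hdiff] <;> field_simp <;> ring

theorem sum_hyperbola_fst (hk : ringChar k ≠ 2) {g : k} (hg : ¬IsSquare g) {M : Type*}
    [AddCommMonoid M] (f : k → M) :
    ∑ p ∈ hyperbola g, f p.1 = ∑ c ∈ hyperbolaFst g, 2 • f c := by
  have maps : ∀ p ∈ hyperbola g, p.1 ∈ hyperbolaFst g := fun p hp =>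
    mem_hyperbolaFst.mpr ⟨p.2, by linear_combination mem_hyperbola.mp hp⟩
  rw [← sum_fiberwise_of_maps_to maps]
  refine sum_congr rfl fun c hc => ?_
  obtain ⟨r, hr⟩ := mem_hyperbolaFst.mp hc
  have hr0 : r ≠ 0 := by
    rintro rfl
    exact hg ⟨c, by linear_combination -hr⟩
  have hfiber : (hyperbola g).filter (fun p => p.1 = c) = {(c, r), (c, -r)} := by
    ext ⟨x, y⟩
    simp only [mem_filter, mem_hyperbola, mem_insert, mem_singleton, Prod.mk.injEq]
    constructor
    · rintro ⟨hp, rfl⟩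
      have hy : y ^ 2 = r ^ 2 := by linear_combination -hp + hr
      rcases sq_eq_sq_iff_eq_or_eq_neg.mp hy with h | h <;> simp [h]
    · rintro (⟨rfl, rfl⟩ | ⟨rfl, rfl⟩) <;> refine ⟨by linear_combination hr, rfl⟩
  have hne : ((c, r) : k × k) ≠ (c, -r) := fun h =>
    hr0 ((Ring.eq_self_iff_eq_zero_of_char_ne_two hk).mp (congrArg Prod.snd h).symm)
  rw [hfiber, sum_pair hne, two_nsmul]

theorem sum_hyperbolaFst_two_nsmul (hk : ringChar k ≠ 2) {g : k} (hg : ¬IsSquare g)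
    {M : Type*} [AddCommMonoid M] (f : k → M) :
    ∑ c ∈ hyperbolaFst g, 2 • f c = ∑ u ∈ univ.erase 0, f ((u + g / u) / 2) := by
  have hg0 : g ≠ 0 := by rintro rfl; exact hg IsSquare.zero
  rw [← sum_hyperbola_fst hk hg, sum_hyperbola hk hg0 fun p => f p.1]

theorem two_mul_card_hyperbolaFst (hk : ringChar k ≠ 2) {g : k} (hg : ¬IsSquare g) :
    2 * #(hyperbolaFst g) = Fintype.card k - 1 := by
  have h := sum_hyperbolaFst_two_nsmul hk hg fun _ => 1
  simp only [smul_eq_mul, mul_one, sum_const, card_erase_of_mem (mem_univ _), card_univ] at h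
  rw [← h, mul_comm]

theorem natCast_card_hyperbolaFst_ne_zero (hk : ringChar k ≠ 2) {g : k} (hg : ¬IsSquare g) :
    (#(hyperbolaFst g) : k) ≠ 0 := by
  intro h0
  have h := congrArg (Nat.cast : ℕ → k) (two_mul_card_hyperbolaFst hk hg)
  rw [Nat.cast_mul, h0, mul_zero, Nat.cast_sub Fintype.card_pos, FiniteField.cast_card_eq_zero,
    zero_sub, Nat.cast_one] at h
  exact one_ne_zero (neg_eq_zero.mp h.symm)

theorem sum_hyperbolaFst (hk : ringChar k ≠ 2) (g : k) : ∑ c ∈ hyperbolaFst g, c = 0 := by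
  have hneg : ∑ c ∈ hyperbolaFst g, -c = ∑ c ∈ hyperbolaFst g, c :=
    sum_comp_of_mapsTo_of_injOn (f := Neg.neg) (by simp) neg_injective.injOn id
  rwa [sum_neg_distrib, Ring.eq_self_iff_eq_zero_of_char_ne_two hk] at hneg

theorem sum_sq_hyperbolaFst (hk : ringChar k ≠ 2) {g : k} (hg : ¬IsSquare g)
    (hcard : 3 < Fintype.card k) : 4 * ∑ c ∈ hyperbolaFst g, c ^ 2 = -g := by
  have h2 : (2 : k) ≠ 0 := Ring.two_ne_zero hk
  have h4 : (4 : k) ≠ 0 := by simpa only [show (2 : k) ^ 2 = 4 by norm_num] using pow_ne_zero 2 h2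
  have hsq : ∑ u : k, u ^ 2 = 0 := FiniteField.sum_pow_lt_card_sub_one k 2 (by omega)
  have hsq_erase : ∑ u ∈ univ.erase (0 : k), u ^ 2 = 0 := by
    rwa [sum_erase _ (zero_pow two_ne_zero)]
  have hinv_sq_erase : ∑ u ∈ univ.erase (0 : k), (u⁻¹) ^ 2 = 0 := by
    rw [sum_erase _ (by simp), ← hsq]
    exact Fintype.sum_equiv (Equiv.inv k) _ _ fun _ => rfl
  have hcard_erase : (#(univ.erase (0 : k)) : k) = -1 := by
    rw [card_erase_of_mem (mem_univ _), card_univ, Nat.cast_sub Fintype.card_pos,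
      FiniteField.cast_card_eq_zero, zero_sub, Nat.cast_one]
  have hexpand : ∀ u ∈ univ.erase (0 : k),
      ((u + g / u) / 2) ^ 2 = u ^ 2 / 4 + g / 2 + g ^ 2 / 4 * (u⁻¹) ^ 2 := by
    intro u hu
    field_simp [(mem_erase.mp hu).1]
    ring
  have h := sum_hyperbolaFst_two_nsmul hk hg fun c => c ^ 2
  rw [sum_congr rfl hexpand, sum_add_distrib, sum_add_distrib, ← sum_div, ← mul_sum, sum_const,
    hsq_erase, hinv_sq_erase, nsmul_eq_mul, hcard_erase, sum_nsmul] at h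
  simp only [zero_div, mul_zero, add_zero, zero_add, neg_one_mul, nsmul_eq_mul,
    Nat.cast_ofNat] at h
  field_simp at h
  linear_combination h

theorem eq_zero_and_sq_eq_one_of_mapsTo_hyperbolaFst (hk : ringChar k ≠ 2) {g : k}
    (hg : ¬IsSquare g) {a b : k} (hb : b ≠ 0)
    (h : ∀ c ∈ hyperbolaFst g, (a - c) / b ∈ hyperbolaFst g) : a = 0 ∧ b ^ 2 = 1 := by
  have hinj : Set.InjOn (fun c => (a - c) / b) (hyperbolaFst g) := fun x _ y _ hxy => by
    simpa [div_left_inj' hb] using hxy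
  have hpreserve (f : k → k) := sum_comp_of_mapsTo_of_injOn h hinj f
  have ha : a = 0 := by
    have hsum : ∑ c ∈ hyperbolaFst g, (a - c) / b = ∑ c ∈ hyperbolaFst g, c := hpreserve id
    rw [← sum_div, sum_sub_distrib, sum_const, sum_hyperbolaFst hk, sub_zero, nsmul_eq_mul,
      div_eq_zero_iff] at hsum
    exact (mul_eq_zero.mp (hsum.resolve_right hb)).resolve_left
      (natCast_card_hyperbolaFst_ne_zero hk hg)
  subst ha
  refine ⟨rfl, ?_⟩
  rcases lt_or_ge 3 (Fintype.card k) with hcard | hcard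
  · have hsq := hpreserve (· ^ 2)
    have hsq_ne : ∑ c ∈ hyperbolaFst g, c ^ 2 ≠ 0 := fun h0 => hg ⟨0, by
      simpa [h0, eq_comm] using sum_sq_hyperbolaFst hk hg hcard⟩
    simp only [zero_sub, div_pow, neg_sq, ← sum_div, div_eq_iff (pow_ne_zero 2 hb)] at hsq
    exact (mul_eq_left₀ hsq_ne).mp hsq.symm
  · have hodd := FiniteField.odd_card_of_char_ne_two hk
    have h3 : Fintype.card k = 3 := by have := Fintype.one_lt_card (α := k); omega
    simpa [h3] using FiniteField.pow_card_sub_one_eq_one b hb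

end Hyperbola

section QuadraticExtension

variable {F : Type*} [Field F] {K : Subfield F}

theorem notMem_of_sq_eq_of_not_isSquare {δ : K} (hδ : ¬IsSquare δ) {α : F}
    (hα : α ^ 2 = δ) : α ∉ K :=
  fun h => hδ ⟨⟨α, h⟩, Subtype.ext (by simp [← hα, sq])⟩

theorem eq_zero_of_add_mul_eq_zero {α : F} (hαK : α ∉ K) {a b : K}
    (h : (a : F) + b * α = 0) : a = 0 ∧ b = 0 := by
  have hb : b = 0 := by
    by_contra hb
    have hbF : (b : F) ≠ 0 := by exact_mod_cast hb
    refine hαK ?_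
    rw [show α = -a / b by field_simp; linear_combination h]
    exact K.div_mem (K.neg_mem a.2) b.2
  subst hb
  simpa using h

variable [Fintype K]

theorem coe_pow_card (c : K) : (c : F) ^ Fintype.card K = c := by
  exact_mod_cast congrArg Subtype.val (FiniteField.pow_card c)

theorem pow_card_eq_neg_of_sq_eq (hK : ringChar K ≠ 2) {δ : K} (hδ : ¬IsSquare δ) {α : F}
    (hα : α ^ 2 = δ) : α ^ Fintype.card K = -α := by
  have hδ0 : δ ≠ 0 := by rintro rfl; exact hδ IsSquare.zero
  have heuler : δ ^ (Fintype.card K / 2) = -1 :=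
    (FiniteField.pow_dichotomy hK hδ0).resolve_left (mt (FiniteField.isSquare_iff hK hδ0).mpr hδ)
  have hodd := FiniteField.odd_card_of_char_ne_two hK
  calc α ^ Fintype.card K = α * (α ^ 2) ^ (Fintype.card K / 2) := by
        rw [← pow_mul, ← pow_succ']
        congr 1
        omega
    _ = -α := by rw [hα, ← SubmonoidClass.coe_pow, heuler]; simp

theorem add_mul_pow_card (hK : ringChar K ≠ 2) {δ : K} (hδ : ¬IsSquare δ) {α : F}
    (hα : α ^ 2 = δ) (a b : K) : ((a : F) + b * α) ^ Fintype.card K = a - b * α := by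
  rw [show ((a : F) + b * α) ^ Fintype.card K = (a : F) ^ Fintype.card K + (b * α) ^ Fintype.card K
    from map_add (FiniteField.frobeniusAlgHom K F) _ _, mul_pow,
    coe_pow_card, coe_pow_card, pow_card_eq_neg_of_sq_eq hK hδ hα]
  ring

theorem add_mul_pow_card_succ (hK : ringChar K ≠ 2) {δ : K} (hδ : ¬IsSquare δ) {α : F}
    (hα : α ^ 2 = δ) (a b : K) :
    ((a : F) + b * α) ^ (Fintype.card K + 1) = ((a ^ 2 - b ^ 2 * δ : K) : F) := by
  rw [pow_succ, add_mul_pow_card hK hδ hα]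
  push_cast
  rw [← hα]
  ring

variable [Fintype F]

theorem exists_add_mul_eq (hcard : Fintype.card F = Fintype.card K ^ 2) {α : F} (hαK : α ∉ K)
    (x : F) : ∃ a b : K, (a : F) + b * α = x := by
  have hinj : Function.Injective fun p : K × K => (p.1 : F) + p.2 * α := by
    rintro ⟨a, b⟩ ⟨a', b'⟩ h
    obtain ⟨ha, hb⟩ := eq_zero_of_add_mul_eq_zero hαK (a := a - a') (b := b - b')
      (by push_cast; linear_combination h)
    rw [sub_eq_zero] at ha hb
    rw [ha, hb]
  obtain ⟨⟨a, b⟩, h⟩ := ((Fintype.bijective_iff_injective_and_card _).mpr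
    ⟨hinj, by rw [Fintype.card_prod, hcard, sq]⟩).2 x
  exact ⟨a, b, h⟩

/-- Since `#F / 2 = (#K + 1) * (#K / 2)`, Euler's criterion in `F` for `x` is Euler's criterion
in `K` for the norm `x ^ (#K + 1)`. -/
theorem isSquare_iff_isSquare_of_pow_card_succ (hcard : Fintype.card F = Fintype.card K ^ 2)
    (hK : ringChar K ≠ 2) {x : F} (hx : x ≠ 0) {z : K} (hz : (z : F) = x ^ (Fintype.card K + 1)) :
    IsSquare x ↔ IsSquare z := by
  have hz0 : z ≠ 0 := by
    rintro rfl
    exact hx (by simpa using hz.symm)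
  have hodd := FiniteField.odd_card_of_char_ne_two hK
  have hF : ringChar F ≠ 2 := fun h => by
    have := FiniteField.even_card_of_char_two h
    rw [hcard, Nat.pow_mod] at this
    simp [hodd] at this
  have hexp : Fintype.card F / 2 = (Fintype.card K + 1) * (Fintype.card K / 2) := by
    obtain ⟨m, hm⟩ : ∃ m, Fintype.card K = 2 * m + 1 := ⟨Fintype.card K / 2, by omega⟩
    rw [hcard, hm, show (2 * m + 1) ^ 2 = 2 * ((2 * m + 1 + 1) * m) + 1 by ring,
      show (2 * m + 1) / 2 = m by omega]
    omega
  rw [FiniteField.isSquare_iff hF hx, FiniteField.isSquare_iff hK hz0, hexp, pow_mul, ← hz,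
    ← SubmonoidClass.coe_pow, OneMemClass.coe_eq_one]

theorem isSquare_coe (hcard : Fintype.card F = Fintype.card K ^ 2) (hK : ringChar K ≠ 2)
    (c : K) : IsSquare (c : F) := by
  rcases eq_or_ne c 0 with rfl | hc
  · simp
  refine (isSquare_iff_isSquare_of_pow_card_succ hcard hK (z := c ^ 2) (by exact_mod_cast hc)
    ?_).mpr (IsSquare.sq c)
  rw [pow_succ (c : F), coe_pow_card]
  push_cast
  ring

theorem isSquare_add_mul_iff (hcard : Fintype.card F = Fintype.card K ^ 2) (hK : ringChar K ≠ 2)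
    {δ : K} (hδ : ¬IsSquare δ) {α : F} (hα : α ^ 2 = δ) (a b : K) :
    IsSquare ((a : F) + b * α) ↔ IsSquare (a ^ 2 - b ^ 2 * δ) := by
  by_cases hx : (a : F) + b * α = 0
  · obtain ⟨rfl, rfl⟩ := eq_zero_of_add_mul_eq_zero (notMem_of_sq_eq_of_not_isSquare hδ hα) hx
    simp
  · exact isSquare_iff_isSquare_of_pow_card_succ hcard hK hx
      (add_mul_pow_card_succ hK hδ hα a b).symm

end QuadraticExtension

section PaleyClique

variable {F : Type*} [Field F]

theorem paleyClique_insert (hneg : IsSquare (-1 : F)) {a : F} {C : Set F} (hC : paleyClique C)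
    (ha : ∀ y ∈ C, IsSquare (a - y)) : paleyClique (insert a C) := by
  rintro x (rfl | hx) y (rfl | hy) hxy
  · exact absurd rfl hxy
  · exact ha y hy
  · simpa using hneg.mul (ha x hx)
  · exact hC x hx y hy hxy

theorem maxPaleyClique_of_forall_isSquare_sub_imp_mem {C : Set F} (hC : paleyClique C)
    (hmax : ∀ x, (∀ y ∈ C, IsSquare (x - y)) → x ∈ C) : maxPaleyClique C := by
  refine ⟨hC, fun C' hC' hsub => Set.Subset.antisymm (fun x hx => hmax x fun y hy => ?_) hsub⟩
  rcases eq_or_ne x y with rfl | hxy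
  · simp
  · exact hC' x hx y (hsub hy) hxy

def neighborsIn (K : Subfield F) (α : F) : Set F := {x | x ∈ K ∧ IsSquare (x - α)}

variable [Fintype F] {K : Subfield F} [Fintype K]

theorem isSquare_neg_one_of_card_eq_sq (hcard : Fintype.card F = Fintype.card K ^ 2)
    (hK : ringChar K ≠ 2) : IsSquare (-1 : F) := by
  simpa using isSquare_coe hcard hK (-1)

theorem isSquare_coe_sub_iff (hcard : Fintype.card F = Fintype.card K ^ 2) (hK : ringChar K ≠ 2)
    {δ : K} (hδ : ¬IsSquare δ) {α : F} (hα : α ^ 2 = δ) (c : K) :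
    IsSquare ((c : F) - α) ↔ IsSquare (c ^ 2 - δ) := by
  simpa [sub_eq_add_neg] using isSquare_add_mul_iff hcard hK hδ hα c (-1)

theorem isSquare_coe_add_iff (hcard : Fintype.card F = Fintype.card K ^ 2) (hK : ringChar K ≠ 2)
    {δ : K} (hδ : ¬IsSquare δ) {α : F} (hα : α ^ 2 = δ) (c : K) :
    IsSquare ((c : F) + α) ↔ IsSquare (c ^ 2 - δ) := by
  simpa using isSquare_add_mul_iff hcard hK hδ hα c 1

theorem isSquare_two_mul_iff (hcard : Fintype.card F = Fintype.card K ^ 2) (hK : ringChar K ≠ 2)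
    {δ : K} (hδ : ¬IsSquare δ) {α : F} (hα : α ^ 2 = δ) :
    IsSquare (2 * α) ↔ Fintype.card K % 4 = 3 := by
  have h := isSquare_add_mul_iff hcard hK hδ hα 0 2
  rw [show (0 : K) ^ 2 - 2 ^ 2 * δ = 2 ^ 2 * (-1 * δ) by ring,
    isSquare_sq_mul_iff (Ring.two_ne_zero hK),
    isSquare_mul_iff_of_not_isSquare hδ (neg_ne_zero.mpr one_ne_zero),
    FiniteField.isSquare_neg_one_iff, not_not] at h
  simpa [show ((2 : K) : F) = 2 from rfl] using h

theorem mem_or_eq_or_eq_neg_of_forall_isSquare_sub (hcard : Fintype.card F = Fintype.card K ^ 2)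
    (hK : ringChar K ≠ 2) {δ : K} (hδ : ¬IsSquare δ) {α : F} (hα : α ^ 2 = δ) {x : F}
    (h : ∀ c : K, IsSquare ((c : F) - α) → IsSquare (x - c)) : x ∈ K ∨ x = α ∨ x = -α := by
  classical
  obtain ⟨a, b, rfl⟩ := exists_add_mul_eq hcard (notMem_of_sq_eq_of_not_isSquare hδ hα) x
  rcases eq_or_ne b 0 with rfl | hb
  · simp
  have hmaps : ∀ c ∈ hyperbolaFst δ, (a - c) / b ∈ hyperbolaFst δ := by
    intro c hc
    have hsq := h c ((isSquare_coe_sub_iff hcard hK hδ hα c).mpr (mem_hyperbolaFst.mp hc))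
    rw [show (a : F) + b * α - c = ((a - c : K) : F) + b * α by push_cast; ring,
      isSquare_add_mul_iff hcard hK hδ hα,
      show (a - c) ^ 2 - b ^ 2 * δ = b ^ 2 * (((a - c) / b) ^ 2 - δ) by field_simp,
      isSquare_sq_mul_iff hb] at hsq
    exact mem_hyperbolaFst.mpr hsq
  obtain ⟨rfl, hb1⟩ := eq_zero_and_sq_eq_one_of_mapsTo_hyperbolaFst hK hδ hb hmaps
  rcases sq_eq_one_iff.mp hb1 with rfl | rfl <;> simp

theorem paleyClique_neighborsIn (hcard : Fintype.card F = Fintype.card K ^ 2)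
    (hK : ringChar K ≠ 2) (α : F) : paleyClique (neighborsIn K α) :=
  fun x hx y hy _ => isSquare_coe hcard hK ⟨x - y, K.sub_mem hx.1 hy.1⟩

theorem paleyClique_insert_neighborsIn (hcard : Fintype.card F = Fintype.card K ^ 2)
    (hK : ringChar K ≠ 2) (α : F) : paleyClique (insert α (neighborsIn K α)) :=
  paleyClique_insert (isSquare_neg_one_of_card_eq_sq hcard hK) (paleyClique_neighborsIn hcard hK α)
    fun y hy => by simpa using (isSquare_neg_one_of_card_eq_sq hcard hK).mul hy.2

theorem paleyClique_insert_insert_neighborsIn (hcard : Fintype.card F = Fintype.card K ^ 2)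
    (hK : ringChar K ≠ 2) {δ : K} (hδ : ¬IsSquare δ) {α : F} (hα : α ^ 2 = δ)
    (h3 : Fintype.card K % 4 = 3) : paleyClique (insert α (insert (-α) (neighborsIn K α))) := by
  have hneg := isSquare_neg_one_of_card_eq_sq hcard hK
  refine paleyClique_insert hneg (paleyClique_insert hneg (paleyClique_neighborsIn hcard hK α)
    fun y ⟨hyK, hy⟩ => ?_) ?_
  · have hy' := (isSquare_coe_add_iff hcard hK hδ hα ⟨y, hyK⟩).mpr
      ((isSquare_coe_sub_iff hcard hK hδ hα ⟨y, hyK⟩).mp hy)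
    rw [show -α - y = -1 * (y + α) by ring]
    exact hneg.mul hy'
  · rintro y (rfl | hy)
    · simpa [two_mul] using (isSquare_two_mul_iff hcard hK hδ hα).mpr h3
    · simpa using hneg.mul hy.2

theorem maxPaleyClique_insert_neighborsIn (hcard : Fintype.card F = Fintype.card K ^ 2)
    (hK : ringChar K ≠ 2) {δ : K} (hδ : ¬IsSquare δ) {α : F} (hα : α ^ 2 = δ)
    (h1 : Fintype.card K % 4 = 1) : maxPaleyClique (insert α (neighborsIn K α)) := by
  refine maxPaleyClique_of_forall_isSquare_sub_imp_mem (paleyClique_insert_neighborsIn hcard hK α)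
    fun x hx => ?_
  have hxα := hx α (Set.mem_insert _ _)
  rcases mem_or_eq_or_eq_neg_of_forall_isSquare_sub hcard hK hδ hα
    (fun c hc => hx c (Set.mem_insert_of_mem _ ⟨c.2, hc⟩)) with hxK | rfl | rfl
  · exact Set.mem_insert_of_mem _ ⟨hxK, hxα⟩
  · exact Set.mem_insert _ _
  · have h3 := (isSquare_two_mul_iff hcard hK hδ hα).mp
      (by simpa [two_mul] using (isSquare_neg_one_of_card_eq_sq hcard hK).mul hxα)
    omega

theorem maxPaleyClique_insert_insert_neighborsIn (hcard : Fintype.card F = Fintype.card K ^ 2)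
    (hK : ringChar K ≠ 2) {δ : K} (hδ : ¬IsSquare δ) {α : F} (hα : α ^ 2 = δ)
    (h3 : Fintype.card K % 4 = 3) :
    maxPaleyClique (insert α (insert (-α) (neighborsIn K α))) := by
  refine maxPaleyClique_of_forall_isSquare_sub_imp_mem
    (paleyClique_insert_insert_neighborsIn hcard hK hδ hα h3) fun x hx => ?_
  rcases mem_or_eq_or_eq_neg_of_forall_isSquare_sub hcard hK hδ hα
    (fun c hc => hx c (by simp [neighborsIn, hc])) with hxK | rfl | rfl
  · exact Set.mem_insert_of_mem _ (Set.mem_insert_of_mem _ ⟨hxK, hx α (Set.mem_insert _ _)⟩)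
  · exact Set.mem_insert _ _
  · exact Set.mem_insert_of_mem _ (Set.mem_insert _ _)

theorem two_mul_ncard_neighborsIn [DecidableEq K] (hcard : Fintype.card F = Fintype.card K ^ 2)
    (hK : ringChar K ≠ 2) {δ : K} (hδ : ¬IsSquare δ) {α : F} (hα : α ^ 2 = δ) :
    2 * (neighborsIn K α).ncard = Fintype.card K - 1 := by
  have himage : neighborsIn K α = Subtype.val '' (hyperbolaFst δ : Set K) := by
    ext x
    constructor
    · rintro ⟨hxK, hx⟩
      exact ⟨⟨x, hxK⟩, mem_hyperbolaFst.mpr ((isSquare_coe_sub_iff hcard hK hδ hα _).mp hx), rfl⟩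
    · rintro ⟨c, hc, rfl⟩
      exact ⟨c.2, (isSquare_coe_sub_iff hcard hK hδ hα c).mpr (mem_hyperbolaFst.mp hc)⟩
  rw [himage, Set.ncard_image_of_injective _ Subtype.val_injective, Set.ncard_coe_finset,
    two_mul_card_hyperbolaFst hK hδ]

theorem ncard_insert_neighborsIn [DecidableEq K] (hcard : Fintype.card F = Fintype.card K ^ 2)
    (hK : ringChar K ≠ 2) {δ : K} (hδ : ¬IsSquare δ) {α : F} (hα : α ^ 2 = δ) :
    (insert α (neighborsIn K α)).ncard = (Fintype.card K + 1) / 2 := by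
  have hαK := notMem_of_sq_eq_of_not_isSquare hδ hα
  have hB := two_mul_ncard_neighborsIn hcard hK hδ hα
  have hodd := FiniteField.odd_card_of_char_ne_two hK
  rw [Set.ncard_insert_of_notMem (fun h => hαK h.1) (Set.toFinite _)]
  omega

theorem ncard_insert_insert_neighborsIn [DecidableEq K]
    (hcard : Fintype.card F = Fintype.card K ^ 2) (hK : ringChar K ≠ 2) {δ : K}
    (hδ : ¬IsSquare δ) {α : F} (hα : α ^ 2 = δ) :
    (insert α (insert (-α) (neighborsIn K α))).ncard = (Fintype.card K + 3) / 2 := by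
  have hαK := notMem_of_sq_eq_of_not_isSquare hδ hα
  have hB := two_mul_ncard_neighborsIn hcard hK hδ hα
  have hodd := FiniteField.odd_card_of_char_ne_two hK
  have hα0 : α ≠ 0 := by rintro rfl; exact hαK K.zero_mem
  have h2 : (2 : F) ≠ 0 := fun h => Ring.two_ne_zero hK (Subtype.ext h)
  have hαne : α ≠ -α := fun h => mul_ne_zero h2 hα0 (by linear_combination h)
  rw [Set.ncard_insert_of_notMem (by simp [hαne, neighborsIn, hαK]) (Set.toFinite _),
    Set.ncard_insert_of_notMem (fun h => hαK (by simpa using K.neg_mem h.1)) (Set.toFinite _)]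
  omega

end PaleyClique

theorem stmt_4_general (q : ℕ) (hq : Odd q)
    (F : Type*) [Field F] (hF : Nat.card F = q ^ 2)
    (K : Subfield F) (hK : Nat.card K = q)
    (d : F) (hdK : d ∈ K) (hdns : ¬ ∃ c ∈ K, c * c = d)
    (α : F) (hα : α ^ 2 = d) :
    (q % 4 = 1 →
      maxPaleyClique ({α} ∪ {x : F | x ∈ K ∧ IsSquare (x - α)}) ∧
      ({α} ∪ {x : F | x ∈ K ∧ IsSquare (x - α)} : Set F).ncard = (q + 1) / 2) ∧
    (q % 4 = 3 →
      maxPaleyClique ({α, -α} ∪ {x : F | x ∈ K ∧ IsSquare (x - α)}) ∧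
      ({α, -α} ∪ {x : F | x ∈ K ∧ IsSquare (x - α)} : Set F).ncard = (q + 3) / 2) := by
  have : Finite F := Nat.finite_of_card_ne_zero (by rw [hF]; exact pow_ne_zero 2 hq.pos.ne')
  have := Fintype.ofFinite F
  have := Fintype.ofFinite K
  classical
  rw [Nat.card_eq_fintype_card] at hF hK
  subst hK
  have hchar : ringChar K ≠ 2 := fun h =>
    Nat.not_even_iff_odd.mpr hq (Nat.even_iff.mpr (FiniteField.even_card_of_char_two h))
  have hδ : ¬IsSquare (⟨d, hdK⟩ : K) := fun ⟨r, hr⟩ => hdns ⟨r, r.2, congrArg Subtype.val hr.symm⟩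
  simp only [Set.singleton_union, Set.insert_union]
  exact ⟨fun h1 => ⟨maxPaleyClique_insert_neighborsIn hF hchar hδ hα h1,
      ncard_insert_neighborsIn hF hchar hδ hα⟩,
    fun h3 => ⟨maxPaleyClique_insert_insert_neighborsIn hF hchar hδ hα h3,
      ncard_insert_insert_neighborsIn hF hchar hδ hα⟩⟩

/-- the (F_q, α)-construction gives a maximal clique of size
(q+1)/2 in P(q²) for q ≡ 1 (mod 4) and of size (q+3)/2 for q ≡ 3 (mod 4). -/
theorem stmt_4 (q : ℕ) (hq : Odd q) (hq' : IsPrimePow q)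
    (F : Type*) [Field F] (hF : Nat.card F = q ^ 2)
    (K : Subfield F) (hK : Nat.card K = q)
    (d : F) (hdK : d ∈ K) (hd0 : d ≠ 0) (hdns : ¬ ∃ c ∈ K, c * c = d)
    (α : F) (hα : α ^ 2 = d) :
    (q % 4 = 1 →
      maxPaleyClique ({α} ∪ {x : F | x ∈ K ∧ IsSquare (x - α)}) ∧
      ({α} ∪ {x : F | x ∈ K ∧ IsSquare (x - α)} : Set F).ncard = (q + 1) / 2) ∧
    (q % 4 = 3 →
      maxPaleyClique ({α, -α} ∪ {x : F | x ∈ K ∧ IsSquare (x - α)}) ∧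
      ({α, -α} ∪ {x : F | x ∈ K ∧ IsSquare (x - α)} : Set F).ncard = (q + 3) / 2) :=
  stmt_4_general q hq F hF K hK d hdK hdns α hα
end

section
/- Let q be an odd prime power, d a non-square in F_q*, and α in F_{q^2} with α² = d. If q ≡ 1 (mod 4), then the set {1} ∪ {c*α : c in F_q and c*α − 1 is not a square in F_{q^2}} is a maximal independent set of size (q+1)/2 in the Paley graph P(q²). If q ≡ 3 (mod 4), then the set {1, −1} ∪ {c*α : c in F_q and c*α − 1 is a square in F_{q^2}} is a maximal clique of size (q+3)/2 in P(q²). -/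
/-!
Write every element of `F` as `a + b α` with `a b : K`. The Frobenius `x ↦ x ^ q` fixes `K` and
sends `α` to `-α`, so `(a + b α) ^ (q + 1) = a ^ 2 - d b ^ 2`, and Euler's criterion shows that the
quadratic character of `a + b α` in `F` is that of its norm `a ^ 2 - d b ^ 2` in `K`. Hence every
element of `K` is a square in `F`, differences of points of `K α` have character `χ(-d)`, which is
`-1` for `q ≡ 1` and `1` for `q ≡ 3 (mod 4)`, and `c α - 1`, `c α + 1` have the same character.

For maximality, let `x = a + b α` with `a ≠ 0` and `x ≠ ±1` be compatible with every `c α` of the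
set: `χ(1 - d c ^ 2) = ε` implies `χ(a ^ 2 - d (b - c) ^ 2) = ε`. The first set of such `c` lies
in the second, which is an affine image of it, so they coincide and the two characters always
agree. Then `c ↦ (a ^ 2 - d (b - c) ^ 2) / (1 - d c ^ 2)` maps the `q` elements of `K` to the
`(q - 1) / 2` nonzero squares with fibres of size at most two, which is absurd. The count
`(q - 1) / 2` of the points on the line comes from the Jacobi sum `J(χ, χ) = -χ(-1)`.
-/

open Finset

lemma two_mul_card_filter_eq {ι : Type*} (s : Finset ι) {f : ι → ℤ}
    (hf : ∀ x ∈ s, f x = 1 ∨ f x = -1) {ε : ℤ} (hε : ε = 1 ∨ ε = -1) :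
    2 * (#(s.filter (f · = ε)) : ℤ) = #s + ε * ∑ x ∈ s, f x := by
  rw [card_filter, card_eq_sum_ones, Nat.cast_sum, Nat.cast_sum, mul_sum, mul_sum,
    ← sum_add_distrib]
  refine sum_congr rfl fun x hx => ?_
  rcases hf x hx with h | h <;> rcases hε with rfl | rfl <;> simp [h]

lemma sq_div_two_of_mod_two_eq_one {q : ℕ} (hq : q % 2 = 1) : q ^ 2 / 2 = (q + 1) * (q / 2) := by
  obtain ⟨m, rfl⟩ : ∃ m, q = 2 * m + 1 := ⟨q / 2, by omega⟩
  rw [show (2 * m + 1) ^ 2 = 2 * ((2 * m + 1 + 1) * m) + 1 by ring,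
    show (2 * m + 1) / 2 = m by omega]
  omega

lemma ne_zero_of_not_isSquare {M : Type*} [MulZeroClass M] {a : M} (h : ¬IsSquare a) :
    a ≠ 0 := by
  rintro rfl
  exact h ⟨0, by simp⟩

section QuadraticCharSums

variable {E : Type*} [Field E]

lemma sq_sub_mul_sq_eq_zero_iff {d : E} (hd : ¬IsSquare d) {a b : E} :
    a ^ 2 - d * b ^ 2 = 0 ↔ a = 0 ∧ b = 0 := by
  refine ⟨fun h => ?_, fun ⟨ha, hb⟩ => by simp [ha, hb]⟩
  by_cases hb : b = 0
  · simp_all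
  · exact absurd ⟨a / b, by field_simp; linear_combination -h⟩ hd

lemma one_sub_mul_sq_ne_zero {d : E} (hd : ¬IsSquare d) (c : E) : 1 - d * c ^ 2 ≠ 0 := by
  simpa using mt (sq_sub_mul_sq_eq_zero_iff hd (a := 1) (b := c)).mp (by simp)

variable [Fintype E] [DecidableEq E]

lemma card_filter_quadratic_eq_zero_le_two {u v w : E} (h : u ≠ 0 ∨ v ≠ 0 ∨ w ≠ 0) :
    #(univ.filter fun c : E => u * c ^ 2 + v * c + w = 0) ≤ 2 := by
  open Polynomial in
  set p : E[X] := C u * X ^ 2 + C v * X + C w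
  have hp : p ≠ 0 := by
    intro hp
    have h2 := congrArg (coeff · 2) hp
    have h1 := congrArg (coeff · 1) hp
    have h0 := congrArg (coeff · 0) hp
    simp [p, coeff_X, coeff_C] at h2 h1 h0
    tauto
  calc _ ≤ p.natDegree := card_le_degree_of_subset_roots fun c hc => by
          simp_all [p, mem_roots hp]
    _ ≤ 2 := natDegree_quadratic_le

lemma sum_comp_sq (hE : ringChar E ≠ 2) (f : E → ℤ) :
    ∑ c : E, f (c ^ 2) = ∑ t : E, (quadraticChar E t + 1) * f t := by
  rw [← sum_fiberwise_of_maps_to (g := (· ^ 2)) (t := univ) fun _ _ => mem_univ _]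
  refine sum_congr rfl fun t _ => ?_
  rw [sum_congr rfl fun c hc => congrArg f (mem_filter.mp hc).2, sum_const,
    nsmul_eq_mul, ← quadraticChar_card_sqrts hE t, Set.toFinset_ofPred]

lemma sum_quadraticChar_one_sub_mul_sq (hE : ringChar E ≠ 2) {d : E} (hd : d ≠ 0) :
    ∑ c : E, quadraticChar E (1 - d * c ^ 2) = -quadraticChar E (-d) := by
  have hJ : jacobiSum (quadraticChar E) (quadraticChar E) = -quadraticChar E (-1) := by
    simpa [(quadraticChar_isQuadratic E).inv] using
      jacobiSum_nontrivial_inv (quadraticChar_ne_one hE)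
  have hlin : ∑ t : E, quadraticChar E (1 - d * t) = 0 := by
    rw [← quadraticChar_sum_zero hE]
    exact Fintype.sum_bijective _ ((Equiv.subLeft 1).bijective.comp (mulLeft_bijective₀ d hd))
      _ _ fun _ => rfl
  have hmul : ∑ t : E, quadraticChar E t * quadraticChar E (1 - d * t)
      = quadraticChar E d * jacobiSum (quadraticChar E) (quadraticChar E) := by
    rw [jacobiSum, mul_sum]
    refine Fintype.sum_bijective _ (mulLeft_bijective₀ d hd) _ _ fun t => ?_
    rw [map_mul]
    linear_combination (-(quadraticChar E t * quadraticChar E (1 - d * t))) *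
      quadraticChar_sq_one hd
  rw [sum_comp_sq hE (fun t => quadraticChar E (1 - d * t))]
  simp only [add_mul, one_mul, sum_add_distrib, hmul, hlin, hJ, neg_eq_neg_one_mul (a := d),
    map_mul]
  ring

lemma two_mul_card_filter_quadraticChar_eq_one (hE : ringChar E ≠ 2) :
    2 * #(univ.filter fun t : E => quadraticChar E t = 1) = Fintype.card E - 1 := by
  have h := two_mul_card_filter_eq (univ.erase (0 : E)) (f := quadraticChar E)
    (fun t ht => quadraticChar_dichotomy (ne_of_mem_erase ht)) (Or.inl rfl)
  have hfilter : (univ.erase (0 : E)).filter (quadraticChar E · = 1)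
      = univ.filter (quadraticChar E · = 1) := by
    ext t
    simp only [mem_filter, mem_erase, mem_univ, and_true, true_and, and_iff_right_iff_imp]
    rintro h rfl
    simp at h
  rw [sum_erase _ (quadraticChar_zero), quadraticChar_sum_zero hE, hfilter,
    card_erase_of_mem (mem_univ 0), card_univ, mul_zero, add_zero] at h
  have : 0 < Fintype.card E := Fintype.card_pos
  omega

lemma two_mul_card_filter_quadraticChar_one_sub_mul_sq (hE : ringChar E ≠ 2) {d : E}
    (hd : ¬IsSquare d) :
    2 * #(univ.filter fun c : E => quadraticChar E (1 - d * c ^ 2) = quadraticChar E (-d))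
      = Fintype.card E - 1 := by
  have hε := quadraticChar_dichotomy (neg_ne_zero.mpr (ne_zero_of_not_isSquare hd))
  have h := two_mul_card_filter_eq univ
    (fun c _ => quadraticChar_dichotomy (one_sub_mul_sq_ne_zero hd c)) hε
  rw [sum_quadraticChar_one_sub_mul_sq hE (ne_zero_of_not_isSquare hd), card_univ] at h
  have : 0 < Fintype.card E := Fintype.card_pos
  rcases hε with hε | hε <;> rw [hε] at h ⊢ <;> omega

lemma not_forall_quadraticChar_eq (hE : ringChar E ≠ 2) {d : E} (hd : ¬IsSquare d) {a b : E}
    (hab : b ≠ 0 ∨ a ^ 2 ≠ 1) :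
    ¬ ∀ c, quadraticChar E (1 - d * c ^ 2) = quadraticChar E (a ^ 2 - d * (b - c) ^ 2) := by
  intro H
  have hd0 := ne_zero_of_not_isSquare hd
  have hf := one_sub_mul_sq_ne_zero hd
  set φ : E → E := fun c => (a ^ 2 - d * (b - c) ^ 2) / (1 - d * c ^ 2)
  have himg : univ.image φ ⊆ univ.filter (quadraticChar E · = 1) := by
    simp only [subset_iff, mem_image, mem_filter, mem_univ, true_and, forall_exists_index]
    rintro _ c rfl
    have hχ : quadraticChar E (φ c) * quadraticChar E (1 - d * c ^ 2)
        = 1 * quadraticChar E (1 - d * c ^ 2) := by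
      rw [← map_mul, div_mul_cancel₀ _ (hf c), one_mul, H]
    exact mul_right_cancel₀ (quadraticChar_eq_zero_iff.not.mpr (hf c)) hχ
  have hfib : ∀ t ∈ univ.image φ, #(univ.filter (φ · = t)) ≤ 2 := by
    intro t _
    refine (card_le_card fun c hc => ?_).trans
      (card_filter_quadratic_eq_zero_le_two (u := d * (t - 1)) (v := 2 * d * b)
        (w := a ^ 2 - d * b ^ 2 - t) ?_)
    · simp only [mem_filter, mem_univ, true_and, φ, div_eq_iff (hf c)] at hc ⊢
      linear_combination hc
    · by_contra! h0
      obtain ⟨h1, h2, h3⟩ := h0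
      have ht : t = 1 := by simpa [hd0, sub_eq_zero] using h1
      have hb : b = 0 := by simpa [hd0, Ring.two_ne_zero hE] using h2
      rcases hab with hab | hab
      · exact hab hb
      · exact hab (by rw [ht, hb] at h3; linear_combination h3)
  have h1 := card_le_mul_card_image univ 2 hfib
  have h2 := card_le_card himg
  have h3 := two_mul_card_filter_quadraticChar_eq_one hE
  have : 0 < Fintype.card E := Fintype.card_pos
  rw [card_univ] at h1
  omega

lemma exists_quadraticChar_eq_and_ne (hE : ringChar E ≠ 2) {d : E} (hd : ¬IsSquare d) {a b : E}
    (ha : a ≠ 0) (hab : b ≠ 0 ∨ a ^ 2 ≠ 1) {ε : ℤ} (hε : ε = 1 ∨ ε = -1) :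
    ∃ c, quadraticChar E (1 - d * c ^ 2) = ε ∧
      quadraticChar E (a ^ 2 - d * (b - c) ^ 2) ≠ ε := by
  by_contra! H
  have hf := one_sub_mul_sq_ne_zero hd
  have hg c : a ^ 2 - d * (b - c) ^ 2 ≠ 0 := mt (sq_sub_mul_sq_eq_zero_iff hd).mp (by simp [ha])
  set Tf := univ.filter fun c => quadraticChar E (1 - d * c ^ 2) = ε
  set Tg := univ.filter fun c => quadraticChar E (a ^ 2 - d * (b - c) ^ 2) = ε
  have hsub : Tf ⊆ Tg := fun c => by simpa [Tf, Tg] using H c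
  have hcard : #Tg ≤ #Tf := by
    refine card_le_card_of_injOn (fun c => (b - c) / a) (fun c hc => ?_) fun c _ c' _ h => ?_
    · simp only [Tf, Tg, coe_filter, mem_univ, true_and, Set.mem_ofPred_eq] at hc ⊢
      have : a ^ 2 * (1 - d * ((b - c) / a) ^ 2) = a ^ 2 - d * (b - c) ^ 2 := by
        field_simp
      rw [← hc, ← this, map_mul, quadraticChar_sq_one' ha, one_mul]
    · simpa [ha, sub_right_inj] using h
  have heq : Tf = Tg := eq_of_subset_of_card_le hsub hcard
  refine not_forall_quadraticChar_eq hE hd hab fun c => ?_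
  have hc : c ∈ Tf ↔ c ∈ Tg := by rw [heq]
  simp only [Tf, Tg, mem_filter, mem_univ, true_and] at hc
  rcases quadraticChar_dichotomy (hf c) with h | h <;>
    rcases quadraticChar_dichotomy (hg c) with h' | h' <;> rcases hε with rfl | rfl <;> omega

end QuadraticCharSums

section QuadraticExtension

variable {F : Type*} [Field F] {K : Subfield F} {d : K} {α : F}

lemma add_mul_injective (hα : α ∉ K) :
    Function.Injective fun p : K × K => (p.1 : F) + p.2 * α := by
  rintro ⟨a, b⟩ ⟨a', b'⟩ h
  simp only at h
  obtain rfl : b = b' := by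
    by_contra hb
    have hb' : (b : F) - b' ≠ 0 := sub_ne_zero.mpr (by exact_mod_cast hb)
    refine hα ?_
    rw [show α = (a' - a : F) / (b - b') by field_simp; linear_combination h]
    exact div_mem (sub_mem a'.2 a.2) (sub_mem b.2 b'.2)
  simpa using h

lemma coe_ne_coe_mul (hα : α ∉ K) {k : K} (hk : k ≠ 0) (c : K) : (k : F) ≠ c * α := by
  intro h
  have := congrArg Prod.fst (add_mul_injective hα (a₁ := (k, 0)) (a₂ := (0, c)) (by simp [h]))
  exact hk this

lemma notMem_of_sq_eq (hd : ¬IsSquare d) (hα : α ^ 2 = d) : α ∉ K :=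
  fun h => hd ⟨⟨α, h⟩, Subtype.ext (by simp [← hα, sq])⟩

lemma add_pow_card [Fintype K] (x y : F) :
    (x + y) ^ Fintype.card K = x ^ Fintype.card K + y ^ Fintype.card K :=
  map_add (FiniteField.frobeniusAlgHom K F) x y

lemma pow_card_add_mul [Fintype K] (hK : ringChar K ≠ 2) (hd : ¬IsSquare d) (hα : α ^ 2 = d)
    (a b : K) : ((a : F) + b * α) ^ Fintype.card K = a - b * α := by
  have hcoe (k : K) : (k : F) ^ Fintype.card K = k := by
    rw [← SubmonoidClass.coe_pow, FiniteField.pow_card]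
  have hd0 := ne_zero_of_not_isSquare hd
  have hdpow : d ^ (Fintype.card K / 2) = -1 :=
    (FiniteField.pow_dichotomy hK hd0).resolve_left (mt (FiniteField.isSquare_iff hK hd0).mpr hd)
  have hq := Nat.odd_iff.mpr (FiniteField.odd_card_of_char_ne_two hK)
  have hαpow : α ^ Fintype.card K = -α := by
    rw [← Nat.two_mul_div_two_add_one_of_odd hq, pow_succ, pow_mul, hα,
      ← SubmonoidClass.coe_pow, hdpow]
    simp
  rw [add_pow_card, mul_pow, hcoe, hcoe, hαpow]
  ring

lemma exists_eq_add_mul [Fintype F] [Fintype K] (hcard : Fintype.card F = Fintype.card K ^ 2)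
    (hα : α ∉ K) (x : F) : ∃ a b : K, x = a + b * α := by
  have hbij := (Fintype.bijective_iff_injective_and_card _).mpr
    ⟨add_mul_injective hα, by rw [Fintype.card_prod, hcard, sq]⟩
  obtain ⟨⟨a, b⟩, h⟩ := hbij.2 x
  exact ⟨a, b, h.symm⟩

variable [Fintype F] [DecidableEq F]

variable (K α) in
/-- `ε = -1` gives the set of the non-square construction and `ε = 1` that of the square one; the
relevant `ε` is always `quadraticChar K (-d)`. -/
def lineSet (ε : ℤ) : Set F :=
  {x | ∃ c ∈ K, x = c * α ∧ quadraticChar F (c * α - 1) = ε}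

lemma mem_lineSet_iff {ε : ℤ} {x : F} :
    x ∈ lineSet K α ε ↔ ∃ c : K, x = c * α ∧ quadraticChar F (c * α - 1) = ε :=
  ⟨fun ⟨c, hc, h⟩ => ⟨⟨c, hc⟩, h⟩, fun ⟨c, h⟩ => ⟨c, c.2, h⟩⟩

lemma setOf_not_isSquare_eq_lineSet :
    {x : F | ∃ c ∈ K, x = c * α ∧ ¬IsSquare (c * α - 1)} = lineSet K α (-1) := by
  simp only [lineSet, quadraticChar_neg_one_iff_not_isSquare]

lemma setOf_isSquare_eq_lineSet (hα : α ∉ K) :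
    {x : F | ∃ c ∈ K, x = c * α ∧ IsSquare (c * α - 1)} = lineSet K α 1 := by
  refine Set.ext fun x => exists_congr fun c => and_congr_right fun hc =>
    and_congr_right fun _ => ?_
  have hne : c * α - 1 ≠ 0 :=
    sub_ne_zero.mpr (by simpa using (coe_ne_coe_mul hα one_ne_zero ⟨c, hc⟩).symm)
  exact (quadraticChar_one_iff_isSquare hne).symm

lemma one_notMem_lineSet (hα : α ∉ K) {ε : ℤ} : (1 : F) ∉ lineSet K α ε := by
  intro h
  obtain ⟨c, hc, -⟩ := mem_lineSet_iff.mp h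
  exact coe_ne_coe_mul hα one_ne_zero c (by simpa using hc)

lemma neg_one_notMem_lineSet (hα : α ∉ K) {ε : ℤ} : (-1 : F) ∉ lineSet K α ε := by
  intro h
  obtain ⟨c, hc, -⟩ := mem_lineSet_iff.mp h
  exact coe_ne_coe_mul hα (neg_ne_zero.mpr one_ne_zero) c (by simpa using hc)

lemma maxPaleyIndep_of_pairwise {S : Set F}
    (hS : S.Pairwise fun x y => quadraticChar F (x - y) = -1)
    (hmax : ∀ x ∉ S, ∃ y ∈ S, quadraticChar F (x - y) ≠ -1) : maxPaleyIndep S := by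
  refine ⟨fun x hx y hy hxy => quadraticChar_neg_one_iff_not_isSquare.mp (hS hx hy hxy),
    fun C hC hSC => Set.Subset.antisymm (fun x hxC => ?_) hSC⟩
  by_contra hxS
  obtain ⟨y, hyS, hy⟩ := hmax x hxS
  exact hy (quadraticChar_neg_one_iff_not_isSquare.mpr
    (hC x hxC y (hSC hyS) (by rintro rfl; exact hxS hyS)))

lemma maxPaleyClique_of_pairwise {S : Set F}
    (hS : S.Pairwise fun x y => quadraticChar F (x - y) = 1)
    (hmax : ∀ x ∉ S, ∃ y ∈ S, quadraticChar F (x - y) ≠ 1) : maxPaleyClique S := by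
  refine ⟨fun x hx y hy hxy => (quadraticChar_one_iff_isSquare (sub_ne_zero.mpr hxy)).mp
    (hS hx hy hxy), fun C hC hSC => Set.Subset.antisymm (fun x hxC => ?_) hSC⟩
  by_contra hxS
  obtain ⟨y, hyS, hy⟩ := hmax x hxS
  have hxy : x ≠ y := by rintro rfl; exact hxS hyS
  exact hy ((quadraticChar_one_iff_isSquare (sub_ne_zero.mpr hxy)).mpr
    (hC x hxC y (hSC hyS) hxy))

variable [Fintype K] [DecidableEq K]

lemma quadraticChar_add_mul (hK : ringChar K ≠ 2) (hcard : Fintype.card F = Fintype.card K ^ 2)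
    (hd : ¬IsSquare d) (hα : α ^ 2 = d) (a b : K) :
    quadraticChar F (a + b * α) = quadraticChar K (a ^ 2 - d * b ^ 2) := by
  have hq := FiniteField.odd_card_of_char_ne_two hK
  have hF : ringChar F ≠ 2 := by
    rw [Ne, FiniteField.even_card_iff_char_two, hcard, Nat.pow_mod, hq]
    norm_num
  have hnorm : ((a : F) + b * α) ^ (Fintype.card K + 1) = ↑(a ^ 2 - d * b ^ 2) := by
    rw [pow_succ, pow_card_add_mul hK hd hα]
    push_cast
    linear_combination (-(b : F) ^ 2) * hα
  apply Int.cast_injOn_of_ringChar_ne_two hF (quadraticChar_isQuadratic F _)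
    (quadraticChar_isQuadratic K _)
  rw [quadraticChar_eq_pow_of_char_ne_two' hF, hcard, sq_div_two_of_mod_two_eq_one hq, pow_mul,
    hnorm, ← SubmonoidClass.coe_pow, ← quadraticChar_eq_pow_of_char_ne_two' hK]
  push_cast
  rfl

lemma quadraticChar_coe (hK : ringChar K ≠ 2) (hcard : Fintype.card F = Fintype.card K ^ 2)
    (hd : ¬IsSquare d) (hα : α ^ 2 = d) {k : K} (hk : k ≠ 0) : quadraticChar F k = 1 := by
  simpa [quadraticChar_sq_one' hk] using quadraticChar_add_mul hK hcard hd hα k 0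

lemma quadraticChar_sub_comm (hK : ringChar K ≠ 2) (hcard : Fintype.card F = Fintype.card K ^ 2)
    (hd : ¬IsSquare d) (hα : α ^ 2 = d) (x y : F) :
    quadraticChar F (x - y) = quadraticChar F (y - x) := by
  have h := quadraticChar_coe hK hcard hd hα (k := -1) (by simp)
  push_cast at h
  rw [← neg_sub, neg_eq_neg_one_mul, map_mul, h, one_mul]

lemma quadraticChar_mul_add_one (hK : ringChar K ≠ 2)
    (hcard : Fintype.card F = Fintype.card K ^ 2) (hd : ¬IsSquare d) (hα : α ^ 2 = d) (c : K) :
    quadraticChar F (c * α + 1) = quadraticChar K (1 - d * c ^ 2) := by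
  simpa [add_comm] using quadraticChar_add_mul hK hcard hd hα 1 c

lemma quadraticChar_mul_sub_one (hK : ringChar K ≠ 2)
    (hcard : Fintype.card F = Fintype.card K ^ 2) (hd : ¬IsSquare d) (hα : α ^ 2 = d) (c : K) :
    quadraticChar F (c * α - 1) = quadraticChar K (1 - d * c ^ 2) := by
  simpa [neg_add_eq_sub] using quadraticChar_add_mul hK hcard hd hα (-1) c

lemma lineSet_pairwise (hK : ringChar K ≠ 2) (hcard : Fintype.card F = Fintype.card K ^ 2)
    (hd : ¬IsSquare d) (hα : α ^ 2 = d) :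
    (lineSet K α (quadraticChar K (-d))).Pairwise
      fun x y => quadraticChar F (x - y) = quadraticChar K (-d) := by
  intro x hx y hy hxy
  obtain ⟨c, rfl, -⟩ := mem_lineSet_iff.mp hx
  obtain ⟨c', rfl, -⟩ := mem_lineSet_iff.mp hy
  have hcc : c - c' ≠ 0 := sub_ne_zero.mpr (by rintro rfl; exact hxy rfl)
  rw [show (c : F) * α - c' * α = ((0 : K) : F) + ((c - c' : K) : F) * α by push_cast; ring,
    quadraticChar_add_mul hK hcard hd hα,
    show (0 : K) ^ 2 - d * (c - c') ^ 2 = -d * (c - c') ^ 2 by ring, map_mul,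
    quadraticChar_sq_one' hcc, mul_one]

lemma exists_mem_insert_one_lineSet (hK : ringChar K ≠ 2)
    (hcard : Fintype.card F = Fintype.card K ^ 2) (hd : ¬IsSquare d) (hα : α ^ 2 = d) {ε : ℤ}
    (hε : ε = quadraticChar K (-d)) {x : F} (hx1 : x ≠ 1) (hxm1 : x ≠ -1)
    (hxL : x ∉ lineSet K α ε) :
    ∃ y ∈ insert 1 (lineSet K α ε), quadraticChar F (x - y) ≠ ε := by
  obtain ⟨a, b, rfl⟩ := exists_eq_add_mul hcard (notMem_of_sq_eq hd hα) x
  by_cases ha : a = 0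
  · subst ha
    exact ⟨1, Set.mem_insert _ _,
      fun h => hxL (mem_lineSet_iff.mpr ⟨b, by simp, by simpa using h⟩)⟩
  have hab : b ≠ 0 ∨ a ^ 2 ≠ 1 := by
    by_contra! h
    obtain ⟨rfl, h⟩ := h
    rcases sq_eq_one_iff.mp h with rfl | rfl <;> simp_all
  have hε' : ε = 1 ∨ ε = -1 :=
    hε ▸ quadraticChar_dichotomy (neg_ne_zero.mpr (ne_zero_of_not_isSquare hd))
  obtain ⟨c, hc, hne⟩ := exists_quadraticChar_eq_and_ne hK hd ha hab hε'
  refine ⟨c * α, Set.mem_insert_of_mem _ (mem_lineSet_iff.mpr ⟨c, rfl, ?_⟩), ?_⟩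
  · rwa [quadraticChar_mul_sub_one hK hcard hd hα]
  · rwa [show (a : F) + b * α - c * α = a + ((b - c : K) : F) * α by push_cast; ring,
      quadraticChar_add_mul hK hcard hd hα]

lemma two_mul_ncard_lineSet (hK : ringChar K ≠ 2) (hcard : Fintype.card F = Fintype.card K ^ 2)
    (hd : ¬IsSquare d) (hα : α ^ 2 = d) :
    2 * (lineSet K α (quadraticChar K (-d))).ncard = Fintype.card K - 1 := by
  have hα0 : α ≠ 0 := by rintro rfl; exact notMem_of_sq_eq hd hα K.zero_mem
  have hL : lineSet K α (quadraticChar K (-d)) = (fun c : K => (c : F) * α) ''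
      ↑(univ.filter fun c : K => quadraticChar K (1 - d * c ^ 2) = quadraticChar K (-d)) := by
    ext x
    simp [mem_lineSet_iff, quadraticChar_mul_sub_one hK hcard hd hα, eq_comm, and_comm]
  rw [hL, Set.ncard_image_of_injective _ fun c c' h => Subtype.ext (mul_right_cancel₀ hα0 h),
    Set.ncard_coe_finset, two_mul_card_filter_quadraticChar_one_sub_mul_sq hK hd]

theorem maxPaleyIndep_insert_one_lineSet (hq : Fintype.card K % 4 = 1)
    (hcard : Fintype.card F = Fintype.card K ^ 2) (hd : ¬IsSquare d) (hα : α ^ 2 = d) :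
    maxPaleyIndep (insert 1 (lineSet K α (-1))) ∧
      (insert 1 (lineSet K α (-1))).ncard = (Fintype.card K + 1) / 2 := by
  have hK : ringChar K ≠ 2 := by rw [Ne, FiniteField.even_card_iff_char_two]; omega
  have hε : quadraticChar K (-d) = -1 := by
    rw [neg_eq_neg_one_mul, map_mul, quadraticChar_neg_one hK, ZMod.χ₄_nat_one_mod_four hq,
      quadraticChar_neg_one_iff_not_isSquare.mpr hd]
    rfl
  have hαK := notMem_of_sq_eq hd hα
  have hL := lineSet_pairwise hK hcard hd hα
  have hcardL := two_mul_ncard_lineSet hK hcard hd hα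
  rw [hε] at hL hcardL
  refine ⟨maxPaleyIndep_of_pairwise (hL.insert fun y hy _ => ?_) fun x hx => ?_, ?_⟩
  · obtain ⟨c, rfl, hc⟩ := mem_lineSet_iff.mp hy
    exact ⟨by rwa [quadraticChar_sub_comm hK hcard hd hα], hc⟩
  · rw [Set.mem_insert_iff, not_or] at hx
    by_cases hxm1 : x = -1
    · refine ⟨1, Set.mem_insert _ _, ?_⟩
      have h : quadraticChar F (-2) = 1 := by
        exact_mod_cast quadraticChar_coe hK hcard hd hα (neg_ne_zero.mpr (Ring.two_ne_zero hK))
      rw [hxm1, show (-1 : F) - 1 = -2 by ring, h]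
      decide
    · exact exists_mem_insert_one_lineSet hK hcard hd hα hε.symm hx.1 hxm1 hx.2
  · rw [Set.ncard_insert_of_notMem (one_notMem_lineSet hαK)]
    omega

theorem maxPaleyClique_insert_one_insert_neg_one_lineSet (hq : Fintype.card K % 4 = 3)
    (hcard : Fintype.card F = Fintype.card K ^ 2) (hd : ¬IsSquare d) (hα : α ^ 2 = d) :
    maxPaleyClique (insert 1 (insert (-1) (lineSet K α 1))) ∧
      (insert 1 (insert (-1) (lineSet K α 1))).ncard = (Fintype.card K + 3) / 2 := by
  have hK : ringChar K ≠ 2 := by rw [Ne, FiniteField.even_card_iff_char_two]; omega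
  have hε : quadraticChar K (-d) = 1 := by
    rw [neg_eq_neg_one_mul, map_mul, quadraticChar_neg_one hK, ZMod.χ₄_nat_three_mod_four hq,
      quadraticChar_neg_one_iff_not_isSquare.mpr hd]
    rfl
  have hαK := notMem_of_sq_eq hd hα
  have hL := lineSet_pairwise hK hcard hd hα
  have hcardL := two_mul_ncard_lineSet hK hcard hd hα
  rw [hε] at hL hcardL
  have hsymm := quadraticChar_sub_comm hK hcard hd hα
  have h2 : quadraticChar F (1 - -1) = 1 := by
    rw [show (1 : F) - -1 = 2 by ring]
    exact_mod_cast quadraticChar_coe hK hcard hd hα (Ring.two_ne_zero hK)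
  have hLm1 : ∀ y ∈ lineSet K α 1, quadraticChar F (-1 - y) = 1 := fun y hy => by
    obtain ⟨c, rfl, hc⟩ := mem_lineSet_iff.mp hy
    rw [hsymm, sub_neg_eq_add, quadraticChar_mul_add_one hK hcard hd hα,
      ← quadraticChar_mul_sub_one hK hcard hd hα, hc]
  refine ⟨maxPaleyClique_of_pairwise ((hL.insert fun y hy _ => ?_).insert fun y hy _ => ?_)
    fun x hx => ?_, ?_⟩
  · exact ⟨hLm1 y hy, by rw [hsymm]; exact hLm1 y hy⟩
  · rcases hy with rfl | hy
    · exact ⟨h2, by rwa [hsymm]⟩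
    · obtain ⟨c, rfl, hc⟩ := mem_lineSet_iff.mp hy
      exact ⟨by rwa [hsymm], hc⟩
  · simp only [Set.mem_insert_iff, not_or] at hx
    obtain ⟨y, hy, hne⟩ :=
      exists_mem_insert_one_lineSet hK hcard hd hα hε.symm hx.1 hx.2.1 hx.2.2
    exact ⟨y, Set.insert_subset_insert (Set.subset_insert _ _) hy, hne⟩
  · rw [Set.ncard_insert_of_notMem, Set.ncard_insert_of_notMem (neg_one_notMem_lineSet hαK)]
    · omega
    · rintro (h | h)
      · exact Ring.neg_one_ne_one_of_char_ne_two hK (Subtype.ext (by simpa using h.symm))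
      · exact one_notMem_lineSet hαK h

end QuadraticExtension

theorem stmt_5_general (q : ℕ) (hq : Odd q)
    (F : Type*) [Field F] (hF : Nat.card F = q ^ 2)
    (K : Subfield F) (hK : Nat.card K = q)
    (d : F) (hdK : d ∈ K) (hdns : ¬ ∃ c ∈ K, c * c = d)
    (α : F) (hα : α ^ 2 = d) :
    (q % 4 = 1 →
      maxPaleyIndep ({1} ∪ {x : F | ∃ c ∈ K, x = c * α ∧ ¬ IsSquare (c * α - 1)}) ∧
      ({1} ∪ {x : F | ∃ c ∈ K, x = c * α ∧ ¬ IsSquare (c * α - 1)} : Set F).ncard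
        = (q + 1) / 2) ∧
    (q % 4 = 3 →
      maxPaleyClique ({1, -1} ∪ {x : F | ∃ c ∈ K, x = c * α ∧ IsSquare (c * α - 1)}) ∧
      ({1, -1} ∪ {x : F | ∃ c ∈ K, x = c * α ∧ IsSquare (c * α - 1)} : Set F).ncard
        = (q + 3) / 2) := by
  classical
  have : Finite F := Nat.finite_of_card_ne_zero (by rw [hF]; exact pow_ne_zero 2 hq.pos.ne')
  have := Fintype.ofFinite F
  have := Fintype.ofFinite K
  have hcardK : Fintype.card K = q := by rw [← Nat.card_eq_fintype_card, hK]
  have hcard : Fintype.card F = Fintype.card K ^ 2 := by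
    rw [hcardK, ← Nat.card_eq_fintype_card, hF]
  have hd : ¬IsSquare (⟨d, hdK⟩ : K) :=
    fun ⟨r, hr⟩ => hdns ⟨r, r.2, congrArg Subtype.val hr.symm⟩
  rw [Set.singleton_union, setOf_not_isSquare_eq_lineSet, Set.insert_union, Set.singleton_union,
    setOf_isSquare_eq_lineSet (notMem_of_sq_eq hd hα), ← hcardK]
  exact ⟨fun hq4 => maxPaleyIndep_insert_one_lineSet hq4 hcard hd hα,
    fun hq4 => maxPaleyClique_insert_one_insert_neg_one_lineSet hq4 hcard hd hα⟩

/-- the (αF_q, 1)-construction gives a maximal independent set of size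
(q+1)/2 in P(q²) for q ≡ 1 (mod 4) and a maximal clique of size (q+3)/2 for
q ≡ 3 (mod 4). -/
theorem stmt_5 (q : ℕ) (hq : Odd q) (hq' : IsPrimePow q)
    (F : Type*) [Field F] (hF : Nat.card F = q ^ 2)
    (K : Subfield F) (hK : Nat.card K = q)
    (d : F) (hdK : d ∈ K) (hd0 : d ≠ 0) (hdns : ¬ ∃ c ∈ K, c * c = d)
    (α : F) (hα : α ^ 2 = d) :
    (q % 4 = 1 →
      maxPaleyIndep ({1} ∪ {x : F | ∃ c ∈ K, x = c * α ∧ ¬ IsSquare (c * α - 1)}) ∧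
      ({1} ∪ {x : F | ∃ c ∈ K, x = c * α ∧ ¬ IsSquare (c * α - 1)} : Set F).ncard
        = (q + 1) / 2) ∧
    (q % 4 = 3 →
      maxPaleyClique ({1, -1} ∪ {x : F | ∃ c ∈ K, x = c * α ∧ IsSquare (c * α - 1)}) ∧
      ({1, -1} ∪ {x : F | ∃ c ∈ K, x = c * α ∧ IsSquare (c * α - 1)} : Set F).ncard
        = (q + 3) / 2) :=
  stmt_5_general q hq F hF K hK d hdK hdns α hα
end

section
/- Let q be an odd prime power, Q = {γ in F_{q^2} : γ^{q+1} = 1}, Q₀ = {γ² : γ in Q}, and Q₁ = Q \ Q₀. If q ≡ 1 (mod 4), then Q₀ and Q₁ are maximal independent sets of size (q+1)/2 in the Paley graph P(q²). If q ≡ 3 (mod 4), then Q₀ ∪ {0} and Q₁ ∪ {0} are maximal cliques of size (q+3)/2 in P(q²). -/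
/-!
Write `q = 2k + 1` and `Q_ε = {γ | γ ^ (k + 1) = ε}` for `ε = ±1`; then `Q₀ = Q_1`, `Q₁ = Q_{-1}`,
and `z ≠ 0` is a square iff `z ^ (k (q + 1)) = 1`. For distinct `γ ∈ Q_ε`, `δ ∈ Q_ε'` the
Frobenius gives `(γ - δ) ^ q = γ⁻¹ - δ⁻¹ = -(γ - δ) / (γ δ)`, so `γ - δ` is a square iff
`ε ε' = (-1) ^ (k + 1)`: each class is independent when `k` is even and a clique when `k` is odd.

Maximality for `k` even: a square `x` factors as `σ u` with `σ ∈ 𝔽_q` and `u ∈ Q`; after replacing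
`(σ, u)` by `(-σ, -u)` if necessary `u ∈ Q_ε`, and `x - u = (σ - 1) u` is a square. For a
nonsquare `x`, the norms `(x - γ) ^ (q + 1)`, `γ ∈ Q_ε`, are `k + 1` distinct nonsquares of `𝔽_q`,
which has only `k`.

Maximality for `k` odd: if `x ∉ D = Q_ε ∪ {0}` were adjacent to all of `D`, then `D ∪ x Q₀` would
be a clique of size `q + 2`, while a clique `B` and the independent set `g B` (`g` a nonsquare)
have `|B|² ≤ q²`, since `(b, a) ↦ b - a` is injective on `B × g B`.
-/

open Polynomial

theorem Polynomial.setOf_pow_eq_eq_toFinset_nthRoots {R : Type*} [CommRing R] [IsDomain R]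
    [DecidableEq R] {n : ℕ} (hn : 0 < n) (a : R) :
    {x : R | x ^ n = a} = ↑(nthRoots n a).toFinset := by
  ext x
  simp [mem_nthRoots hn]

theorem ncard_setOf_pow_eq_le {R : Type*} [CommRing R] [IsDomain R] {n : ℕ} (hn : 0 < n)
    (a : R) : {x : R | x ^ n = a}.ncard ≤ n := by
  classical
  rw [setOf_pow_eq_eq_toFinset_nthRoots hn, Set.ncard_coe_finset]
  exact (Multiset.toFinset_card_le _).trans (card_nthRoots n a)

namespace FiniteField

variable {F : Type*} [Field F] [Fintype F]

theorem ne_zero_of_dvd_card_sub_one {n : ℕ} (hn : n ∣ Fintype.card F - 1) : n ≠ 0 := by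
  rintro rfl
  have := Fintype.one_lt_card (α := F)
  rw [zero_dvd_iff] at hn
  omega

theorem exists_isPrimitiveRoot_of_dvd {n : ℕ} (hn : n ∣ Fintype.card F - 1) :
    ∃ ζ : F, IsPrimitiveRoot ζ n := by
  classical
  obtain ⟨g, hg⟩ := IsCyclic.exists_ofOrder_eq_natCard (α := Fˣ)
  have hg' : IsPrimitiveRoot (g : F) (Fintype.card F - 1) := by
    rw [IsPrimitiveRoot.coe_units_iff, ← Fintype.card_units, ← Nat.card_eq_fintype_card, ← hg]
    exact IsPrimitiveRoot.orderOf g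
  obtain ⟨c, hc⟩ := hn
  have hc0 : c ≠ 0 := right_ne_zero_of_mul (hc ▸ ne_zero_of_dvd_card_sub_one (dvd_refl _))
  have := hg'.pow_of_dvd hc0 (Dvd.intro_left n hc.symm)
  rw [hc, Nat.mul_div_cancel _ (Nat.pos_of_ne_zero hc0)] at this
  exact ⟨_, this⟩

theorem exists_pow_eq_of_pow_eq_one {d m : ℕ} (h : d * m ∣ Fintype.card F - 1) {a : F}
    (ha : a ^ m = 1) : ∃ σ : F, σ ^ (d * m) = 1 ∧ σ ^ d = a := by
  obtain ⟨ζ, hζ⟩ := exists_isPrimitiveRoot_of_dvd h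
  have hdm := ne_zero_of_dvd_card_sub_one h
  have hζd := hζ.pow_of_dvd (left_ne_zero_of_mul hdm) (dvd_mul_right d m)
  rw [Nat.mul_div_cancel_left _ (Nat.pos_of_ne_zero (left_ne_zero_of_mul hdm))] at hζd
  have : NeZero m := ⟨right_ne_zero_of_mul hdm⟩
  obtain ⟨i, -, hi⟩ := hζd.eq_pow_of_pow_eq_one ha
  refine ⟨ζ ^ i, ?_, ?_⟩
  · rw [← pow_mul, mul_comm, pow_mul, hζ.pow_eq_one, one_pow]
  · rw [← pow_mul, mul_comm, pow_mul, hi]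

theorem ncard_setOf_pow_eq {n : ℕ} (hn : n ∣ Fintype.card F - 1) {α a : F} (hα : α ^ n = a)
    (ha : a ≠ 0) : {x : F | x ^ n = a}.ncard = n := by
  classical
  obtain ⟨ζ, hζ⟩ := exists_isPrimitiveRoot_of_dvd hn
  rw [setOf_pow_eq_eq_toFinset_nthRoots (Nat.pos_of_ne_zero (ne_zero_of_dvd_card_sub_one hn)),
    Set.ncard_coe_finset, Multiset.toFinset_card_of_nodup (hζ.nthRoots_nodup ha),
    hζ.card_nthRoots, if_pos ⟨α, hα⟩]

end FiniteField

section Paley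

variable {F : Type*} [Field F]

theorem maxPaleyIndep_of_forall_exists {C : Set F} (hC : paleyIndep C)
    (h : ∀ x ∉ C, ∃ y ∈ C, IsSquare (x - y)) : maxPaleyIndep C := by
  refine ⟨hC, fun D hD hCD => (Set.Subset.antisymm · hCD) fun x hxD => ?_⟩
  by_contra hxC
  obtain ⟨y, hyC, hxy⟩ := h x hxC
  exact hD x hxD y (hCD hyC) (ne_of_mem_of_not_mem hyC hxC).symm hxy

theorem maxPaleyClique_of_forall_exists {C : Set F} (hC : paleyClique C)
    (h : ∀ x ∉ C, ∃ y ∈ C, ¬IsSquare (x - y)) : maxPaleyClique C := by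
  refine ⟨hC, fun D hD hCD => (Set.Subset.antisymm · hCD) fun x hxD => ?_⟩
  by_contra hxC
  obtain ⟨y, hyC, hxy⟩ := h x hxC
  exact hxy (hD x hxD y (hCD hyC) (ne_of_mem_of_not_mem hyC hxC).symm)

theorem paleyClique.union {A B : Set F} (hA : paleyClique A) (hB : paleyClique B)
    (hneg : IsSquare (-1 : F)) (hAB : ∀ a ∈ A, ∀ b ∈ B, a ≠ b → IsSquare (a - b)) :
    paleyClique (A ∪ B) := by
  rintro x (hx | hx) y (hy | hy) hxy
  · exact hA x hx y hy hxy
  · exact hAB x hx y hy hxy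
  · simpa using hneg.mul (hAB y hy x hx hxy.symm)
  · exact hB x hx y hy hxy

theorem paleyClique.image_mul {C : Set F} (hC : paleyClique C) {c : F} (hc : IsSquare c) :
    paleyClique ((c * ·) '' C) := by
  rintro _ ⟨x, hx, rfl⟩ _ ⟨y, hy, rfl⟩ hxy
  rw [← mul_sub]
  exact hc.mul (hC x hx y hy fun h => hxy (h ▸ rfl))

theorem paleyClique.paleyIndep_image_mul {C : Set F} (hC : paleyClique C) {g : F}
    (hg : ¬IsSquare g) : paleyIndep ((g * ·) '' C) := by
  rintro _ ⟨x, hx, rfl⟩ _ ⟨y, hy, rfl⟩ hgxy hsq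
  have hxy : x ≠ y := fun h => hgxy (h ▸ rfl)
  rw [← mul_sub] at hsq
  apply hg
  simpa [sub_ne_zero.mpr hxy] using hsq.div (hC x hx y hy hxy)

theorem paleyClique.ncard_mul_ncard_le [Finite F] {B A : Set F} (hB : paleyClique B)
    (hA : paleyIndep A) : B.ncard * A.ncard ≤ Nat.card F := by
  rw [← Set.ncard_prod, ← Set.ncard_univ]
  refine Set.ncard_le_ncard_of_injOn (fun p => p.1 - p.2) (fun _ _ => Set.mem_univ _) ?_
    Set.finite_univ
  rintro ⟨b, a⟩ ⟨hb, ha⟩ ⟨b', a'⟩ ⟨hb', ha'⟩ h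
  have hdiff : b - b' = a - a' := by linear_combination (h : b - a = b' - a')
  by_cases hbb : b = b'
  · subst hbb
    rw [sub_self, eq_comm, sub_eq_zero] at hdiff
    rw [hdiff]
  · exact absurd (hdiff ▸ hB b hb b' hb' hbb)
      (hA a ha a' ha' fun h => hbb (sub_eq_zero.mp (hdiff.trans (sub_eq_zero.mpr h))))

theorem paleyClique.ncard_sq_le [Finite F] (hF : ringChar F ≠ 2) {B : Set F}
    (hB : paleyClique B) : B.ncard ^ 2 ≤ Nat.card F := by
  obtain ⟨g, hg⟩ := FiniteField.exists_nonsquare hF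
  have hg0 : g ≠ 0 := by rintro rfl; exact hg IsSquare.zero
  calc B.ncard ^ 2 = B.ncard * ((g * ·) '' B).ncard := by
        rw [sq, Set.ncard_image_of_injective _ (mul_right_injective₀ hg0)]
    _ ≤ Nat.card F := hB.ncard_mul_ncard_le (hB.paleyIndep_image_mul hg)

end Paley

section QuadraticExtension

variable {F : Type*} [Field F] {q k : ℕ}

theorem Nat.sq_eq_two_mul_add_one (hk : q = 2 * k + 1) : q ^ 2 = 2 * (k * (q + 1)) + 1 := by
  rw [hk]; ring

theorem pow_eq_one_of_pow_half_eq (hk : q = 2 * k + 1) {γ ε : F} (hγ : γ ^ (k + 1) = ε)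
    (hε : ε ^ 2 = 1) : γ ^ (q + 1) = 1 := by
  rw [hk, show 2 * k + 1 + 1 = (k + 1) * 2 by ring, pow_mul, hγ, hε]

theorem pow_half_eq_or (hk : q = 2 * k + 1) {γ ε : F} (hγ : γ ^ (q + 1) = 1) (hε : ε ^ 2 = 1) :
    γ ^ (k + 1) = ε ∨ γ ^ (k + 1) = -ε := by
  rw [← sq_eq_sq_iff_eq_or_eq_neg, hε, ← pow_mul, ← hγ, hk]
  ring_nf

theorem sub_pow_mul_pow_eq_neg_one_pow (hk : q = 2 * k + 1)
    (hfrob : ∀ x y : F, (x - y) ^ q = x ^ q - y ^ q) {γ δ : F} (hγ : γ ^ (q + 1) = 1)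
    (hδ : δ ^ (q + 1) = 1) (hne : γ ≠ δ) :
    (γ - δ) ^ (k * (q + 1)) * (γ * δ) ^ (k + 1) = (-1) ^ (k + 1) := by
  have hfrob' : (γ - δ) ^ q * (γ * δ) = -(γ - δ) := by
    rw [hfrob]
    linear_combination δ * hγ - γ * hδ
  apply mul_left_cancel₀ (pow_ne_zero (k + 1) (sub_ne_zero.mpr hne))
  calc (γ - δ) ^ (k + 1) * ((γ - δ) ^ (k * (q + 1)) * (γ * δ) ^ (k + 1))
      = ((γ - δ) ^ q * (γ * δ)) ^ (k + 1) := by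
        rw [← mul_assoc, ← pow_add, show k + 1 + k * (q + 1) = q * (k + 1) by rw [hk]; ring,
          pow_mul, mul_pow _ (γ * δ)]
    _ = (γ - δ) ^ (k + 1) * (-1) ^ (k + 1) := by rw [hfrob', neg_pow, mul_comm]

variable [Fintype F] (hF : Fintype.card F = q ^ 2) (hk : q = 2 * k + 1)
include hF hk

theorem ringChar_ne_two_of_card_eq_sq : ringChar F ≠ 2 := by
  rw [Ne, FiniteField.even_card_iff_char_two, hF, Nat.sq_eq_two_mul_add_one hk]
  omega

theorem isSquare_iff_pow_eq_one {z : F} (hz : z ≠ 0) : IsSquare z ↔ z ^ (k * (q + 1)) = 1 := by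
  rw [FiniteField.isSquare_iff (ringChar_ne_two_of_card_eq_sq hF hk) hz,
    hF, Nat.sq_eq_two_mul_add_one hk]
  congr! 2
  omega

theorem not_isSquare_iff_pow_eq_neg_one {z : F} (hz : z ≠ 0) :
    ¬IsSquare z ↔ z ^ (k * (q + 1)) = -1 := by
  have hchar := ringChar_ne_two_of_card_eq_sq hF hk
  have h := FiniteField.pow_dichotomy hchar hz
  rw [hF, Nat.sq_eq_two_mul_add_one hk,
    show (2 * (k * (q + 1)) + 1) / 2 = k * (q + 1) by omega] at h
  rw [isSquare_iff_pow_eq_one hF hk hz]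
  have h1 := Ring.neg_one_ne_one_of_char_ne_two hchar
  rcases h with h | h <;> simp [h, h1, h1.symm]

theorem isSquare_of_pow_eq_one {z : F} (hz : z ^ (q + 1) = 1) : IsSquare z := by
  have hz0 : z ≠ 0 := by rintro rfl; simp at hz
  rw [isSquare_iff_pow_eq_one hF hk hz0, mul_comm, pow_mul, hz, one_pow]

theorem isSquare_neg_one : IsSquare (-1 : F) :=
  isSquare_of_pow_eq_one hF hk (by rw [hk]; exact Even.neg_one_pow ⟨k + 1, by ring⟩)

theorem isSquare_of_pow_eq_self {z : F} (hz : z ^ q = z) : IsSquare z := by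
  rcases eq_or_ne z 0 with rfl | hz0
  · exact IsSquare.zero
  have h2k : z ^ (2 * k) = 1 := mul_right_cancel₀ hz0 (by rw [← pow_succ, ← hk, hz, one_mul])
  rw [isSquare_iff_pow_eq_one hF hk hz0, show k * (q + 1) = 2 * k * (k + 1) by rw [hk]; ring,
    pow_mul, h2k, one_pow]

theorem exists_eq_mul_of_isSquare {x : F} (hx : IsSquare x) :
    ∃ σ u : F, σ ^ q = σ ∧ u ^ (q + 1) = 1 ∧ x = σ * u := by
  rcases eq_or_ne x 0 with rfl | hx0
  · exact ⟨0, 1, by rw [hk]; simp, one_pow _, (zero_mul 1).symm⟩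
  have hN : (x ^ (q + 1)) ^ k = 1 := by
    rw [← pow_mul, mul_comm]
    exact (isSquare_iff_pow_eq_one hF hk hx0).1 hx
  have hdvd : 2 * k ∣ Fintype.card F - 1 :=
    Dvd.intro (q + 1) (by rw [hF, Nat.sq_eq_two_mul_add_one hk, Nat.add_sub_cancel]; ring)
  obtain ⟨σ, hσ, hσx⟩ := FiniteField.exists_pow_eq_of_pow_eq_one hdvd hN
  have hσ0 : σ ≠ 0 := by
    rintro rfl
    exact pow_ne_zero (q + 1) hx0 (by simpa using hσx.symm)
  have hσq : σ ^ (q + 1) = σ ^ 2 := by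
    rw [hk, show 2 * k + 1 + 1 = 2 * k + 2 by ring, pow_add, hσ, one_mul]
  refine ⟨σ, x / σ, ?_, ?_, (mul_div_cancel₀ x hσ0).symm⟩
  · rw [hk, pow_succ, hσ, one_mul]
  · rw [div_pow, hσq, hσx, div_self (pow_ne_zero _ hx0)]

theorem ncard_setOf_pow_half_eq {ε : F} (hε : ε ^ 2 = 1) :
    {γ : F | γ ^ (k + 1) = ε}.ncard = k + 1 := by
  have hdvd : (k + 1) * 2 ∣ Fintype.card F - 1 :=
    Dvd.intro (2 * k) (by rw [hF, Nat.sq_eq_two_mul_add_one hk, Nat.add_sub_cancel, hk]; ring)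
  obtain ⟨α, -, hα⟩ := FiniteField.exists_pow_eq_of_pow_eq_one hdvd hε
  exact FiniteField.ncard_setOf_pow_eq (dvd_of_mul_right_dvd hdvd) hα (by rintro rfl; simp at hε)

theorem ncard_setOf_pow_half_eq_union_zero {ε : F} (hε : ε ^ 2 = 1) :
    ({γ : F | γ ^ (k + 1) = ε} ∪ {0}).ncard = k + 2 := by
  have h0 : (0 : F) ∉ {γ : F | γ ^ (k + 1) = ε} := by
    rintro (h : (0 : F) ^ (k + 1) = ε)
    simp [← h] at hε
  rw [Set.union_singleton, Set.ncard_insert_of_notMem h0 (Set.toFinite _),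
    ncard_setOf_pow_half_eq hF hk hε]

theorem image_sq_setOf_pow_eq_one :
    (fun γ : F => γ ^ 2) '' {γ | γ ^ (q + 1) = 1} = {γ | γ ^ (k + 1) = 1} := by
  have hqk : q + 1 = 2 * (k + 1) := by rw [hk]; ring
  ext x
  constructor
  · rintro ⟨γ, hγ, rfl⟩
    show (γ ^ 2) ^ (k + 1) = 1
    rwa [← pow_mul, ← hqk]
  · intro (hx : x ^ (k + 1) = 1)
    have hdvd : 2 * (k + 1) ∣ Fintype.card F - 1 :=
      Dvd.intro (2 * k) (by rw [hF, Nat.sq_eq_two_mul_add_one hk, Nat.add_sub_cancel, hk]; ring)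
    obtain ⟨σ, hσ, hσx⟩ := FiniteField.exists_pow_eq_of_pow_eq_one hdvd hx
    exact ⟨σ, show σ ^ (q + 1) = 1 by rwa [hqk], hσx⟩

theorem setOf_pow_eq_one_diff_setOf_pow_half_eq_one :
    {γ : F | γ ^ (q + 1) = 1} \ {γ | γ ^ (k + 1) = 1} = {γ | γ ^ (k + 1) = -1} := by
  have h1 := Ring.neg_one_ne_one_of_char_ne_two (ringChar_ne_two_of_card_eq_sq hF hk)
  ext γ
  simp only [Set.mem_sdiff, Set.mem_ofPred_eq]
  constructor
  · rintro ⟨hγ, hγ1⟩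
    exact (pow_half_eq_or hk hγ (one_pow 2)).resolve_left hγ1
  · intro hγ
    exact ⟨pow_eq_one_of_pow_half_eq hk hγ neg_one_sq, by rw [hγ]; exact h1⟩

variable (hfrob : ∀ x y : F, (x - y) ^ q = x ^ q - y ^ q)
include hfrob

theorem isSquare_sub_iff {γ δ ε ε' : F} (hγ : γ ^ (k + 1) = ε) (hδ : δ ^ (k + 1) = ε')
    (hε : ε ^ 2 = 1) (hε' : ε' ^ 2 = 1) (hne : γ ≠ δ) :
    IsSquare (γ - δ) ↔ ε * ε' = (-1) ^ (k + 1) := by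
  have h := sub_pow_mul_pow_eq_neg_one_pow hk hfrob (pow_eq_one_of_pow_half_eq hk hγ hε)
    (pow_eq_one_of_pow_half_eq hk hδ hε') hne
  rw [mul_pow, hγ, hδ] at h
  have hεε' : ε * ε' ≠ 0 := by
    rintro h0
    rcases mul_eq_zero.mp h0 with rfl | rfl <;> simp at hε hε'
  rw [isSquare_iff_pow_eq_one hF hk (sub_ne_zero.mpr hne), ← h]
  constructor
  · rintro h1
    rw [h1, one_mul]
  · exact fun h1 => (mul_eq_right₀ hεε').mp h1.symm

theorem isSquare_of_pow_succ_sub_eq {x γ γ' ε : F} (hγ : γ ^ (k + 1) = ε)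
    (hγ' : γ' ^ (k + 1) = ε) (hε : ε ^ 2 = 1) (hne : γ ≠ γ')
    (h : (x - γ) ^ (q + 1) = (x - γ') ^ (q + 1)) : IsSquare x := by
  rcases eq_or_ne x 0 with rfl | hx0
  · exact IsSquare.zero
  have hγq := pow_eq_one_of_pow_half_eq hk hγ hε
  have hγ'q := pow_eq_one_of_pow_half_eq hk hγ' hε
  rw [pow_succ, pow_succ, hfrob, hfrob] at h
  have hx : x = x ^ q * (γ * γ') := by
    have h0 : (γ' - γ) * (x - x ^ q * (γ * γ')) = 0 := by
      linear_combination (-(γ * γ')) * h + (γ * γ' - x * γ') * hγq + (x * γ - γ * γ') * hγ'q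
    exact sub_eq_zero.mp ((mul_eq_zero.mp h0).resolve_left (sub_ne_zero.mpr hne.symm))
  rw [isSquare_iff_pow_eq_one hF hk hx0]
  apply mul_left_cancel₀ (pow_ne_zero (k + 1) hx0)
  calc x ^ (k + 1) * x ^ (k * (q + 1)) = (x ^ q) ^ (k + 1) * (γ * γ') ^ (k + 1) := by
        rw [mul_pow γ, hγ, hγ', ← sq, hε, mul_one, ← pow_mul, ← pow_add, hk]
        ring_nf
    _ = x ^ (k + 1) * 1 := by rw [← mul_pow, ← hx, mul_one]

theorem exists_isSquare_sub_of_isSquare (hkev : Even k) {ε : F} (hε : ε ^ 2 = 1) {x : F}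
    (hx : IsSquare x) : ∃ y, y ^ (k + 1) = ε ∧ IsSquare (x - y) := by
  obtain ⟨σ, u, hσ, hu, rfl⟩ := exists_eq_mul_of_isSquare hF hk hx
  have hsq : ∀ τ v : F, τ ^ q = τ → v ^ (q + 1) = 1 → IsSquare (τ * v - v) := by
    intro τ v hτ hv
    rw [← sub_one_mul]
    exact (isSquare_of_pow_eq_self hF hk (by rw [hfrob, hτ, one_pow])).mul
      (isSquare_of_pow_eq_one hF hk hv)
  rcases pow_half_eq_or hk hu hε with h | h
  · exact ⟨u, h, hsq σ u hσ hu⟩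
  · refine ⟨-u, by rw [hkev.add_one.neg_pow, h, neg_neg], ?_⟩
    have hqodd : Odd q := hk ▸ odd_two_mul_add_one k
    have := hsq (-σ) (-u) (by rw [hqodd.neg_pow, hσ]) (by rw [hqodd.add_one.neg_pow, hu])
    rwa [neg_mul_neg] at this

theorem exists_isSquare_sub_of_not_isSquare {ε : F} (hε : ε ^ 2 = 1) {x : F}
    (hx : ¬IsSquare x) : ∃ y, y ^ (k + 1) = ε ∧ IsSquare (x - y) := by
  by_contra! hnadj
  have hmaps : Set.MapsTo (fun γ => (x - γ) ^ (q + 1)) {γ : F | γ ^ (k + 1) = ε}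
      {z | z ^ k = -1} := by
    intro γ (hγ : γ ^ (k + 1) = ε)
    have hxγ : x - γ ≠ 0 := fun h => hx (sub_eq_zero.mp h ▸
      isSquare_of_pow_eq_one hF hk (pow_eq_one_of_pow_half_eq hk hγ hε))
    show ((x - γ) ^ (q + 1)) ^ k = -1
    rw [← pow_mul, mul_comm]
    exact (not_isSquare_iff_pow_eq_neg_one hF hk hxγ).1 (hnadj γ hγ)
  have hinj : Set.InjOn (fun γ => (x - γ) ^ (q + 1)) {γ : F | γ ^ (k + 1) = ε} :=
    fun γ hγ γ' hγ' h => by_contra fun hne =>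
      hx (isSquare_of_pow_succ_sub_eq hF hk hfrob hγ hγ' hε hne h)
  have hk0 : 0 < k := by
    have := Fintype.one_lt_card (α := F)
    rw [hF, hk] at this
    exact Nat.pos_of_ne_zero (by rintro rfl; norm_num at this)
  have := (Set.ncard_le_ncard_of_injOn _ hmaps hinj (Set.toFinite _)).trans
    (ncard_setOf_pow_eq_le hk0 (-1 : F))
  rw [ncard_setOf_pow_half_eq hF hk hε] at this
  omega

theorem maxPaleyIndep_setOf_pow_half_eq (hkev : Even k) {ε : F} (hε : ε ^ 2 = 1) :
    maxPaleyIndep {γ : F | γ ^ (k + 1) = ε} := by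
  refine maxPaleyIndep_of_forall_exists (fun γ hγ δ hδ hne => ?_) fun x _ => ?_
  · rw [isSquare_sub_iff hF hk hfrob hγ hδ hε hε hne, ← sq, hε, hkev.add_one.neg_one_pow]
    exact (Ring.neg_one_ne_one_of_char_ne_two (ringChar_ne_two_of_card_eq_sq hF hk)).symm
  · by_cases hx : IsSquare x
    · exact exists_isSquare_sub_of_isSquare hF hk hfrob hkev hε hx
    · exact exists_isSquare_sub_of_not_isSquare hF hk hfrob hε hx

theorem paleyClique_setOf_pow_half_eq (hkodd : Odd k) {ε : F} (hε : ε ^ 2 = 1) :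
    paleyClique {γ : F | γ ^ (k + 1) = ε} := by
  intro γ hγ δ hδ hne
  rw [isSquare_sub_iff hF hk hfrob hγ hδ hε hε hne, ← sq, hε, hkodd.add_one.neg_one_pow]

theorem paleyClique_setOf_pow_half_eq_union_zero (hkodd : Odd k) {ε : F} (hε : ε ^ 2 = 1) :
    paleyClique ({γ : F | γ ^ (k + 1) = ε} ∪ {0}) := by
  refine (paleyClique_setOf_pow_half_eq hF hk hfrob hkodd hε).union
    (fun x hx y hy hne => absurd (hx.trans hy.symm) hne) (isSquare_neg_one hF hk) ?_
  rintro γ (hγ : γ ^ (k + 1) = ε) _ rfl -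
  rw [sub_zero]
  exact isSquare_of_pow_eq_one hF hk (pow_eq_one_of_pow_half_eq hk hγ hε)

theorem paleyClique_union_image_mul (hkodd : Odd k) {ε : F} (hε : ε ^ 2 = 1) {x : F}
    (hadj : ∀ y ∈ {γ : F | γ ^ (k + 1) = ε} ∪ {0}, IsSquare (x - y)) :
    paleyClique (({γ : F | γ ^ (k + 1) = ε} ∪ {0}) ∪ (x * ·) '' {η | η ^ (k + 1) = 1}) := by
  set D := {γ : F | γ ^ (k + 1) = ε} ∪ {0}
  refine (paleyClique_setOf_pow_half_eq_union_zero hF hk hfrob hkodd hε).union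
    ((paleyClique_setOf_pow_half_eq hF hk hfrob hkodd (one_pow 2)).image_mul
      (by simpa using hadj 0 (Or.inr rfl))) (isSquare_neg_one hF hk) ?_
  rintro b hb _ ⟨η, hη : η ^ (k + 1) = 1, rfl⟩ -
  have hηQ := pow_eq_one_of_pow_half_eq hk hη (one_pow 2)
  have hη0 : η ≠ 0 := by rintro rfl; simp at hηQ
  have hbη : b / η ∈ D := by
    rcases hb with hb | rfl
    · exact Or.inl (show (b / η) ^ (k + 1) = ε by rw [div_pow, hb, hη, div_one])
    · exact Or.inr (zero_div η)
  rw [show b - x * η = -1 * η * (x - b / η) by field_simp; ring]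
  exact ((isSquare_neg_one hF hk).mul (isSquare_of_pow_eq_one hF hk hηQ)).mul (hadj _ hbη)

theorem exists_not_isSquare_sub (hkodd : Odd k) {ε : F} (hε : ε ^ 2 = 1) {x : F}
    (hx : x ∉ {γ : F | γ ^ (k + 1) = ε} ∪ {0}) :
    ∃ y ∈ {γ : F | γ ^ (k + 1) = ε} ∪ {0}, ¬IsSquare (x - y) := by
  by_contra! hadj
  have hx0 : x ≠ 0 := fun h => hx (Or.inr h)
  have hdisj : Disjoint ({γ : F | γ ^ (k + 1) = ε} ∪ {0})
      ((x * ·) '' {η | η ^ (k + 1) = 1}) := by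
    rw [Set.disjoint_right]
    rintro _ ⟨η, hη : η ^ (k + 1) = 1, rfl⟩ (h | h)
    · exact hx (Or.inl (by simpa [mul_pow, hη] using h))
    · exact mul_ne_zero hx0 (by rintro rfl; simp at hη) h
  have hcard := Set.ncard_union_eq hdisj
  rw [ncard_setOf_pow_half_eq_union_zero hF hk hε,
    Set.ncard_image_of_injective _ (mul_right_injective₀ hx0),
    ncard_setOf_pow_half_eq hF hk (one_pow 2)] at hcard
  have := (paleyClique_union_image_mul hF hk hfrob hkodd hε hadj).ncard_sq_le
    (ringChar_ne_two_of_card_eq_sq hF hk)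
  rw [hcard, Nat.card_eq_fintype_card, hF, hk] at this
  nlinarith

theorem maxPaleyClique_setOf_pow_half_eq_union_zero (hkodd : Odd k) {ε : F}
    (hε : ε ^ 2 = 1) : maxPaleyClique ({γ : F | γ ^ (k + 1) = ε} ∪ {0}) :=
  maxPaleyClique_of_forall_exists (paleyClique_setOf_pow_half_eq_union_zero hF hk hfrob hkodd hε)
    fun _ hx => exists_not_isSquare_sub hF hk hfrob hkodd hε hx

end QuadraticExtension

theorem sub_pow_eq_of_isPrimePow {F : Type*} [Field F] [Fintype F] {q : ℕ} (hq : IsPrimePow q)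
    (hF : Fintype.card F = q ^ 2) (x y : F) : (x - y) ^ q = x ^ q - y ^ q := by
  obtain ⟨p, n, hp, -, rfl⟩ := hq
  have : Fact p.Prime := ⟨hp.nat_prime⟩
  have : CharP F p := charP_of_card_eq_prime_pow (f := n * 2) (by rw [hF, pow_mul])
  exact sub_pow_char_pow x y n

theorem stmt_8_general (q : ℕ) (hq : Odd q) (hq' : IsPrimePow q)
    (F : Type*) [Field F] (hF : Nat.card F = q ^ 2)
    (Q Q₀ Q₁ : Set F) (hQ : Q = {γ : F | γ ^ (q + 1) = 1})
    (hQ₀ : Q₀ = (fun γ => γ ^ 2) '' Q) (hQ₁ : Q₁ = Q \ Q₀) :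
    (q % 4 = 1 →
      (maxPaleyIndep Q₀ ∧ Q₀.ncard = (q + 1) / 2) ∧
      (maxPaleyIndep Q₁ ∧ Q₁.ncard = (q + 1) / 2)) ∧
    (q % 4 = 3 →
      (maxPaleyClique (Q₀ ∪ {0}) ∧ (Q₀ ∪ {0} : Set F).ncard = (q + 3) / 2) ∧
      (maxPaleyClique (Q₁ ∪ {0}) ∧ (Q₁ ∪ {0} : Set F).ncard = (q + 3) / 2)) := by
  obtain ⟨k, hk⟩ := hq
  have : Finite F := Nat.finite_of_card_ne_zero (by rw [hF, hk]; positivity)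
  have : Fintype F := Fintype.ofFinite F
  rw [Nat.card_eq_fintype_card] at hF
  have hfrob := sub_pow_eq_of_isPrimePow hq' hF
  subst hQ hQ₀ hQ₁
  rw [image_sq_setOf_pow_eq_one hF hk, setOf_pow_eq_one_diff_setOf_pow_half_eq_one hF hk]
  refine ⟨fun hq4 => ?_, fun hq4 => ?_⟩
  · have hkev : Even k := by rw [Nat.even_iff]; omega
    rw [show (q + 1) / 2 = k + 1 by omega]
    exact ⟨⟨maxPaleyIndep_setOf_pow_half_eq hF hk hfrob hkev (one_pow 2),
        ncard_setOf_pow_half_eq hF hk (one_pow 2)⟩,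
      ⟨maxPaleyIndep_setOf_pow_half_eq hF hk hfrob hkev neg_one_sq,
        ncard_setOf_pow_half_eq hF hk neg_one_sq⟩⟩
  · have hkodd : Odd k := by rw [Nat.odd_iff]; omega
    rw [show (q + 3) / 2 = k + 2 by omega]
    exact ⟨⟨maxPaleyClique_setOf_pow_half_eq_union_zero hF hk hfrob hkodd (one_pow 2),
        ncard_setOf_pow_half_eq_union_zero hF hk (one_pow 2)⟩,
      ⟨maxPaleyClique_setOf_pow_half_eq_union_zero hF hk hfrob hkodd neg_one_sq,
        ncard_setOf_pow_half_eq_union_zero hF hk neg_one_sq⟩⟩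

/-- the Q-construction. For q ≡ 1 (mod 4), Q₀ and Q₁ are maximal
independent sets of size (q+1)/2 in P(q²); for q ≡ 3 (mod 4), Q₀ ∪ {0} and
Q₁ ∪ {0} are maximal cliques of size (q+3)/2. -/
theorem stmt_8 (q : ℕ) (hq : Odd q) (hq' : IsPrimePow q)
    (F : Type*) [Field F] (hF : Nat.card F = q ^ 2)
    (K : Subfield F) (hK : Nat.card K = q)
    (Q Q₀ Q₁ : Set F) (hQ : Q = {γ : F | γ ^ (q + 1) = 1})
    (hQ₀ : Q₀ = (fun γ => γ ^ 2) '' Q) (hQ₁ : Q₁ = Q \ Q₀) :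
    (q % 4 = 1 →
      (maxPaleyIndep Q₀ ∧ Q₀.ncard = (q + 1) / 2) ∧
      (maxPaleyIndep Q₁ ∧ Q₁.ncard = (q + 1) / 2)) ∧
    (q % 4 = 3 →
      (maxPaleyClique (Q₀ ∪ {0}) ∧ (Q₀ ∪ {0} : Set F).ncard = (q + 3) / 2) ∧
      (maxPaleyClique (Q₁ ∪ {0}) ∧ (Q₁ ∪ {0} : Set F).ncard = (q + 3) / 2)) :=
  stmt_8_general q hq hq' F hF Q Q₀ Q₁ hQ hQ₀ hQ₁
end

section
/- Let q be an odd prime power, d a non-square in F_q*, α in F_{q^2} with α² = d, Q = {γ in F_{q^2} : γ^{q+1} = 1}, Q₀ = {γ² : γ in Q}, and Q₁ = Q \ Q₀. If q ≡ 1 (mod 4), then α·Q₀ and α·Q₁ are maximal cliques of size (q+1)/2 in the Paley graph P(q²). If q ≡ 3 (mod 4), then α·Q₀ ∪ {0} and α·Q₁ ∪ {0} are maximal cliques of size (q+3)/2 in P(q²). -/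
open Finset Polynomial

set_option linter.unusedSectionVars false

namespace Stmt9

structure Setup (F : Type*) [Field F] [Fintype F] (q r : ℕ) (d α : F) : Prop where
  hr : q = 2*r + 1
  hr1 : 1 ≤ r
  hcard : Fintype.card F = q^2
  hchar2 : ringChar F ≠ 2
  hfrob : ∀ a b : F, (a + b)^q = a^q + b^q
  hne : (-1 : F) ≠ 1
  hd0 : d ≠ 0
  hdpow : d ^ r = -1
  hα2 : α^2 = d

variable {F : Type*} [Field F] [Fintype F] {q r : ℕ} {d α : F}

/-- the quadratic character exponent function -/
def eta (r : ℕ) (w : F) : F := w ^ (2*(r*(r+1)))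

namespace Setup

variable (S : Setup F q r d α)
include S

lemma hq3 : 3 ≤ q := by have h1 := S.hr; have h2 := S.hr1; omega

lemma hd2 : d ^ (2*r) = 1 := by
  rw [mul_comm, pow_mul, S.hdpow]; ring

lemma hα0 : α ≠ 0 := by
  intro h
  exact S.hd0 (by rw [← S.hα2, h]; ring)

lemma pow_q (x : F) : x ^ q = (x^2)^r * x := by
  rw [S.hr, pow_succ, pow_mul]

lemma hαq : α ^ q = -α := by
  rw [S.pow_q, S.hα2, S.hdpow]; ring

lemma frob_mul (a b : F) : (a*b)^q = a^q * b^q := mul_pow a b q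

lemma frob_neg (a : F) : (-a)^q = -(a^q) := by
  have : Odd q := ⟨r, by have := S.hr; omega⟩
  exact this.neg_pow a

lemma frob_sub (a b : F) : (a - b)^q = a^q - b^q := by
  rw [sub_eq_add_neg, S.hfrob, S.frob_neg, sub_eq_add_neg]

lemma pow_qq (x : F) : x ^ (q^2) = x := by
  rw [← S.hcard]; exact FiniteField.pow_card x

lemma frob_frob (x : F) : (x^q)^q = x := by
  rw [← pow_mul, ← pow_two, S.pow_qq]

lemma kfix_pow (x : F) (hx : x^q = x) (h0 : x ≠ 0) : x^(q-1) = 1 := by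
  have h : x^(q-1) * x = x := by
    rw [← pow_succ]
    have hq := S.hq3
    have : q - 1 + 1 = q := by omega
    rw [this, hx]
  field_simp at h
  exact h

lemma pow_card_sub_one (x : F) (h0 : x ≠ 0) : x^(q^2-1) = 1 := by
  have h : x^(q^2-1) * x = x := by
    rw [← pow_succ]
    have : q^2 - 1 + 1 = q^2 := by
      have hq := S.hq3
      have : 0 < q^2 := by positivity
      omega
    rw [this, S.pow_qq]
  field_simp at h
  exact h

lemma eta_mul (a b : F) : eta r (a*b) = eta r a * eta r b := mul_pow a b _

lemma eta_sq (a : F) (h0 : a ≠ 0) : eta r a * eta r a = 1 := by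
  have hq2 : q^2 - 1 = 2*(r*(r+1)) + 2*(r*(r+1)) := by
    have h : q^2 = 2*(r*(r+1)) + 2*(r*(r+1)) + 1 := by rw [S.hr]; ring
    omega
  rw [eta, ← pow_add, ← hq2]
  exact S.pow_card_sub_one a h0

lemma eta_dichot (a : F) (h0 : a ≠ 0) : eta r a = 1 ∨ eta r a = -1 :=
  mul_self_eq_one_iff.mp (S.eta_sq a h0)

lemma eta_isSquare (a : F) (h0 : a ≠ 0) : IsSquare a ↔ eta r a = 1 := by
  rw [FiniteField.isSquare_iff S.hchar2 h0, S.hcard, eta]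
  have : q^2/2 = 2*(r*(r+1)) := by
    have h : q^2 = 2*(r*(r+1)) + 2*(r*(r+1)) + 1 := by rw [S.hr]; ring
    omega
  rw [this]

lemma eta_kfix (x : F) (hx : x^q = x) (h0 : x ≠ 0) : eta r x = 1 := by
  have h1 := S.kfix_pow x hx h0
  have hq1 : q-1 = 2*r := by have := S.hr; omega
  have : (2:ℕ)*(r*(r+1)) = (q-1)*(r+1) := by rw [hq1]; ring
  rw [eta, this, pow_mul, h1, one_pow]

lemma eta_Q (x : F) (hx : x^(q+1) = 1) : eta r x = 1 := by
  have : (2:ℕ)*(r*(r+1)) = (q+1)*r := by rw [S.hr]; ring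
  rw [eta, this, pow_mul, hx, one_pow]

lemma eta_neg_one : eta r (-1 : F) = 1 := by
  rw [eta, pow_mul]
  norm_num

lemma eta_neg (a : F) : eta r (-a) = eta r a := by
  rw [show -a = -1 * a by ring, S.eta_mul, S.eta_neg_one, one_mul]

lemma eta_alpha : eta r α = (-1)^(r+1) := by
  rw [eta, pow_mul, S.hα2, pow_mul, S.hdpow]

lemma eta_mu (μ : F) (h : μ^(q+1) = -1) : eta r μ = (-1)^r := by
  have : (2:ℕ)*(r*(r+1)) = (q+1)*r := by rw [S.hr]; ring
  rw [eta, this, pow_mul, h]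

lemma eta_zero : eta r (0:F) = 0 := by
  rw [eta]
  have h1 := S.hr1
  have : 0 < r*(r+1) := Nat.mul_pos (by omega) (by omega)
  exact zero_pow (by omega)

lemma skew (β : F) (h : β^q = -β) : ∃ c : F, c^q = c ∧ β = c * α := by
  refine ⟨β * α⁻¹, ?_, by rw [mul_assoc, inv_mul_cancel₀ S.hα0, mul_one]⟩
  rw [mul_pow, h, inv_pow, S.hαq, inv_neg]
  ring


lemma card_pow_eq_le (n : ℕ) (hn : n ≠ 0) (a : F) [DecidableEq F] :
    #(Finset.univ.filter fun x : F => x^n = a) ≤ n := by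
  classical
  have hmonic : (Polynomial.X^n - Polynomial.C a : Polynomial F).Monic :=
    Polynomial.monic_X_pow_sub_C a hn
  have hsub : (Finset.univ.filter fun x : F => x^n = a)
      ⊆ (Polynomial.X^n - Polynomial.C a : Polynomial F).roots.toFinset := by
    intro x hx
    simp only [mem_filter, mem_univ, true_and] at hx
    rw [Multiset.mem_toFinset, Polynomial.mem_roots hmonic.ne_zero]
    simp [Polynomial.IsRoot, hx]
  calc #(Finset.univ.filter fun x : F => x^n = a) ≤ _ := card_le_card hsub
    _ ≤ Multiset.card (Polynomial.X^n - Polynomial.C a : Polynomial F).roots :=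
        Multiset.toFinset_card_le _
    _ ≤ (Polynomial.X^n - Polynomial.C a : Polynomial F).natDegree := Polynomial.card_roots' _
    _ = n := Polynomial.natDegree_X_pow_sub_C

lemma cardQ [DecidableEq F] : #(Finset.univ.filter fun x : F => x^(q+1) = 1) = q+1 := by
  have hq := S.hq3
  have hub : #(Finset.univ.filter fun x : F => x^(q+1) = 1) ≤ q+1 :=
    S.card_pow_eq_le (q+1) (by omega) 1
  set T := (Finset.univ.filter fun x : F => x ≠ 0).image (fun x => x^(q-1)) with hT
  have hTsub : T ⊆ Finset.univ.filter fun x : F => x^(q+1) = 1 := by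
    intro y hy
    simp only [hT, mem_image, mem_filter, mem_univ, true_and] at hy ⊢
    obtain ⟨x, hx0, rfl⟩ := hy
    rw [← pow_mul]
    have e1 : (q-1)*(q+1) = q^2 - 1 := by
      obtain ⟨m, rfl⟩ : ∃ m, q = 1 + m := ⟨q-1, by omega⟩
      have h1 : (1+m)^2 = m*m + 2*m + 1 := by ring
      have h2 : (1+m-1)*(1+m+1) = m*m + 2*m := by simp; ring
      omega
    rw [e1]
    exact S.pow_card_sub_one x hx0
  have hlb : q+1 ≤ #T := by
    by_contra hcon
    push_neg at hcon
    have hbound := Finset.card_le_mul_card_image_of_maps_to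
      (f := fun x : F => x^(q-1)) (s := Finset.univ.filter fun x : F => x ≠ 0) (t := T)
      (fun x hx => mem_image_of_mem _ hx) (q-1)
      (fun b _ => by
        have := S.card_pow_eq_le (q-1) (by omega) b
        refine le_trans (card_le_card ?_) this
        intro x hx
        simp only [mem_filter, mem_univ, true_and] at hx ⊢
        exact hx.2)
    have hcard0 : #(Finset.univ.filter fun x : F => x ≠ (0:F)) = q^2 - 1 := by
      rw [Finset.filter_ne', Finset.card_erase_of_mem (mem_univ 0), Finset.card_univ, S.hcard]
    rw [hcard0] at hbound
    have h2 : (q-1) * #T ≤ (q-1)*q := Nat.mul_le_mul_left _ (by omega)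
    have h23 : q^2 - 1 ≤ (q-1)*q := le_trans hbound h2
    have h4 : (q-1)*q + q = q*q := by
      rw [Nat.sub_mul, one_mul, Nat.sub_add_cancel (Nat.le_mul_of_pos_left q (by omega))]
    have h3 : q^2 = q*q := sq q
    omega
  exact le_antisymm hub (hlb.trans (card_le_card hTsub))

lemma card_sq_image [DecidableEq F] :
    #((Finset.univ.filter fun x : F => x^(q+1) = 1).image (fun γ => γ^2)) = r+1 := by
  have hq := S.hq3
  have hrr := S.hr
  set QF := Finset.univ.filter fun x : F => x^(q+1) = 1 with hQF
  have hfib : ∀ y ∈ QF.image (fun γ : F => γ^2), #{x ∈ QF | x^2 = y} = 2 := by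
    intro y hy
    simp only [mem_image] at hy
    obtain ⟨γ₀, hγ₀, rfl⟩ := hy
    have hγ₀Q : γ₀^(q+1) = 1 := by
      simp only [hQF, mem_filter, mem_univ, true_and] at hγ₀; exact hγ₀
    have hγ₀0 : γ₀ ≠ 0 := by
      intro h; rw [h, zero_pow (by omega)] at hγ₀Q; exact one_ne_zero hγ₀Q.symm
    have hset : {x ∈ QF | x^2 = γ₀^2} = ({γ₀, -γ₀} : Finset F) := by
      ext x
      simp only [mem_filter, hQF, mem_univ, true_and, mem_insert, mem_singleton]
      constructor
      · rintro ⟨hxQ, hx2⟩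
        have hz : (x - γ₀)*(x + γ₀) = 0 := by linear_combination hx2
        rcases mul_eq_zero.mp hz with h | h
        · left; exact sub_eq_zero.mp h
        · right; exact eq_neg_of_add_eq_zero_left h
      · rintro (rfl | rfl)
        · exact ⟨hγ₀Q, rfl⟩
        · constructor
          · have heven : Even (q+1) := ⟨r+1, by omega⟩
            rw [heven.neg_pow, hγ₀Q]
          · ring
    rw [hset, card_insert_of_notMem, card_singleton]
    simp only [mem_singleton]
    intro h
    have h2 : (2:F) * γ₀ = 0 := by linear_combination h
    have h3 := (mul_eq_zero.mp h2).resolve_right hγ₀0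
    exact S.hne (by linear_combination -h3)
  have hsum := Finset.card_eq_sum_card_fiberwise
    (f := fun γ : F => γ^2) (s := QF) (t := QF.image (fun γ : F => γ^2))
    (fun x hx => mem_image_of_mem _ hx)
  have hQcard : #QF = q + 1 := S.cardQ
  have hconst : ∑ y ∈ QF.image (fun γ : F => γ^2), #{x ∈ QF | x^2 = y}
      = 2 * #(QF.image (fun γ : F => γ^2)) := by
    rw [Finset.sum_congr rfl hfib, Finset.sum_const, smul_eq_mul, mul_comm]
  rw [hQcard, hconst] at hsum
  omega

lemma halfQ [DecidableEq F] :
    ((Finset.univ.filter fun x : F => x^(q+1) = 1).image (fun γ => γ^2))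
      = Finset.univ.filter (fun x : F => x^(q+1) = 1 ∧ x^(r+1) = 1) := by
  have hq := S.hq3
  have hrr := S.hr
  set QF := Finset.univ.filter fun x : F => x^(q+1) = 1 with hQF
  have hsub : QF.image (fun γ => γ^2)
      ⊆ Finset.univ.filter (fun x : F => x^(q+1) = 1 ∧ x^(r+1) = 1) := by
    intro y hy
    simp only [mem_image, hQF, mem_filter, mem_univ, true_and] at hy ⊢
    obtain ⟨γ, hγ, rfl⟩ := hy
    constructor
    · rw [← pow_mul, mul_comm, pow_mul, hγ, one_pow]
    · rw [← pow_mul]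
      have h5 : 2*(r+1) = q+1 := by omega
      rw [h5, hγ]
  have himgcard : #(QF.image (fun γ : F => γ^2)) = r+1 := S.card_sq_image
  have hub2 : #(Finset.univ.filter (fun x : F => x^(q+1) = 1 ∧ x^(r+1) = 1)) ≤ r+1 := by
    refine le_trans (card_le_card ?_) (S.card_pow_eq_le (r+1) (by omega) 1)
    intro x hx
    simp only [mem_filter, mem_univ, true_and] at hx ⊢
    exact hx.2
  exact Finset.eq_of_subset_of_card_le hsub (by omega)

lemma cardQhalf [DecidableEq F] :
    #(Finset.univ.filter (fun x : F => x^(q+1) = 1 ∧ x^(r+1) = 1)) = r+1 := by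
  rw [← S.halfQ]
  exact S.card_sq_image

lemma exists_sqrt (x : F) (hx : x^(q+1) = 1) (hh : x^(r+1) = 1) :
    ∃ γ : F, γ^(q+1) = 1 ∧ γ^2 = x := by
  classical
  have h1 := S.halfQ
  have hx' : x ∈ Finset.univ.filter (fun x : F => x^(q+1) = 1 ∧ x^(r+1) = 1) := by
    simp only [mem_filter, mem_univ, true_and]; exact ⟨hx, hh⟩
  rw [← h1] at hx'
  simp only [mem_image, mem_filter, mem_univ, true_and] at hx'
  obtain ⟨γ, hγ, hγ2⟩ := hx'
  exact ⟨γ, hγ, hγ2⟩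

lemma qmem_ne_zero (x : F) (hx : x^(q+1) = 1) : x ≠ 0 := by
  intro h
  have hq := S.hq3
  rw [h, zero_pow (by omega)] at hx
  exact one_ne_zero hx.symm

lemma qmem_pow_q (x : F) (hx : x^(q+1) = 1) : x^q = x⁻¹ :=
  eq_inv_of_mul_eq_one_left (by rw [← pow_succ]; exact hx)

lemma half_dichot (x : F) (hx : x^(q+1) = 1) : x^(r+1) = 1 ∨ x^(r+1) = -1 := by
  apply mul_self_eq_one_iff.mp
  rw [← pow_add]
  have h : (r+1) + (r+1) = q+1 := by have := S.hr; omega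
  rw [h, hx]

lemma eta_epspow (k : ℕ) (ε : F) (hε : ε = 1 ∨ ε = -1) : eta r (ε^k) = 1 := by
  rcases hε with rfl | rfl
  · rw [one_pow]; rw [eta, one_pow]
  · rcases Nat.even_or_odd k with he | ho
    · rw [he.neg_one_pow]; rw [eta, one_pow]
    · rw [ho.neg_one_pow, S.eta_neg_one]

lemma chord_same (x y : F) (hx : x^(q+1) = 1) (hy : y^(q+1) = 1)
    (hxy : x ≠ y) (hh : x^(r+1) = y^(r+1)) [DecidableEq F] :
    eta r (x - y) = (-1:F)^(r+1) := by
  have hx0 : x ≠ 0 := S.qmem_ne_zero x hx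
  have hy0 : y ≠ 0 := S.qmem_ne_zero y hy
  have hxr0 : x^(r+1) ≠ 0 := pow_ne_zero _ hx0
  have hw : (y * x⁻¹)^(q+1) = 1 := by
    rw [mul_pow, inv_pow, hx, hy, inv_one, mul_one]
  have hwh : (y * x⁻¹)^(r+1) = 1 := by
    rw [mul_pow, inv_pow, ← hh, mul_inv_cancel₀ hxr0]
  obtain ⟨γ, hγQ, hγ2⟩ := S.exists_sqrt _ hw hwh
  have hγ0 : γ ≠ 0 := S.qmem_ne_zero γ hγQ
  have hγq : γ^q = γ⁻¹ := S.qmem_pow_q γ hγQ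
  have hβq : (γ - γ^q)^q = -(γ - γ^q) := by
    rw [S.frob_sub, S.frob_frob]; ring
  obtain ⟨c, hcq, hcα⟩ := S.skew _ hβq
  have hc0 : c ≠ 0 := by
    intro h
    have h2 : γ - γ^q = 0 := by rw [hcα, h, zero_mul]
    have h2' : γ = γ⁻¹ := by
      have h3 := sub_eq_zero.mp h2
      rw [hγq] at h3
      exact h3
    have h3 : γ^2 = 1 := by
      rw [pow_two]; nth_rewrite 2 [h2']; exact mul_inv_cancel₀ hγ0
    apply hxy
    have h4 : y * x⁻¹ = 1 := by rw [← hγ2, h3]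
    field_simp at h4
    exact h4.symm
  have hyx : y = x * γ^2 := by
    rw [hγ2]
    field_simp
  have key : x - y = -1 * (x * (γ * (c * α))) := by
    rw [hyx, ← hcα, hγq]
    field_simp
    ring
  rw [key, S.eta_mul, S.eta_mul, S.eta_mul, S.eta_mul, S.eta_neg_one,
    S.eta_Q x hx, S.eta_Q γ hγQ, S.eta_kfix c hcq hc0, S.eta_alpha]
  ring

lemma chord_cross (x y : F) (hx : x^(q+1) = 1) (hy : y^(q+1) = 1)
    (hh : x^(r+1) ≠ y^(r+1)) : eta r (x - y) = (-1:F)^r := by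
  have hx0 : x ≠ 0 := S.qmem_ne_zero x hx
  have hy0 : y ≠ 0 := S.qmem_ne_zero y hy
  have hxr0 : x^(r+1) ≠ 0 := pow_ne_zero _ hx0
  have hw : (y * x⁻¹)^(q+1) = 1 := by
    rw [mul_pow, inv_pow, hx, hy, inv_one, mul_one]
  have hw0 : y * x⁻¹ ≠ 0 := S.qmem_ne_zero _ hw
  have hwh : (y * x⁻¹)^(r+1) ≠ 1 := by
    intro h
    apply hh
    rw [mul_pow, inv_pow] at h
    field_simp at h
    exact h.symm
  -- get a square root μ of w
  have hsq : IsSquare (y * x⁻¹) := (S.eta_isSquare _ hw0).mpr (S.eta_Q _ hw)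
  obtain ⟨μ, hμ⟩ := hsq
  have hμμ : μ^2 = y * x⁻¹ := by rw [pow_two]; exact hμ.symm
  have hμ0 : μ ≠ 0 := by
    intro h
    exact hw0 (by rw [← hμμ, h]; norm_num)
  have hμQ : μ^(q+1) = -1 := by
    have hd : μ^(q+1) = 1 ∨ μ^(q+1) = -1 := by
      apply mul_self_eq_one_iff.mp
      rw [← pow_add]
      have h2 : (q+1) + (q+1) = 2*(q+1) := by ring
      rw [h2, pow_mul, hμμ, hw]
    rcases hd with h | h
    · exfalso
      apply hwh
      rw [← hμμ, ← pow_mul]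
      have h2 : 2*(r+1) = q+1 := by have := S.hr; omega
      rw [h2, h]
    · exact h
  have hμinv : μ^q = -μ⁻¹ := by
    have h1 : μ^q * μ = -1 := by rw [← pow_succ]; exact hμQ
    field_simp
    linear_combination h1
  set c := μ - μ⁻¹ with hc
  have hcq : c^q = c := by
    rw [hc, S.frob_sub]
    rw [show μ⁻¹ = -(μ^q) by rw [hμinv]; ring]
    rw [S.frob_neg, S.frob_frob]
    ring
  have hc0 : c ≠ 0 := by
    intro h
    apply hwh
    have h2 : μ = μ⁻¹ := sub_eq_zero.mp h
    have h3 : μ^2 = 1 := by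
      rw [pow_two]; nth_rewrite 2 [h2]; exact mul_inv_cancel₀ hμ0
    rw [← hμμ, h3, one_pow]
  have key : x - y = -1 * (x * (μ * c)) := by
    have hyx : y = x * μ^2 := by rw [hμμ]; field_simp
    rw [hyx, hc]
    field_simp
    ring
  rw [key, S.eta_mul, S.eta_mul, S.eta_mul, S.eta_neg_one,
    S.eta_Q x hx, S.eta_mu μ hμQ, S.eta_kfix c hcq hc0]
  ring


lemma nat_e1 : (q-1)*(q+1) = q^2 - 1 := by
  have hq := S.hq3
  obtain ⟨m, rfl⟩ : ∃ m, q = 1 + m := ⟨q-1, by omega⟩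
  have h1 : (1+m)^2 = m*m + 2*m + 1 := by ring
  have h2 : (1+m-1)*(1+m+1) = m*m + 2*m := by simp; ring
  omega

lemma alpha_norm : α^(q+1) = -d := by
  rw [pow_succ, S.hαq]
  linear_combination -S.hα2

lemma neg_pow_ne : ((-1:F)^r) ≠ ((-1:F)^(r+1)) := by
  intro h
  have h1 : (-1:F)^r * 1 = (-1)^r * (-1) := by
    rw [mul_one, ← pow_succ]; exact h
  have h2 := mul_left_cancel₀ (pow_ne_zero r (neg_ne_zero.mpr one_ne_zero)) h1
  exact S.hne h2.symm

lemma neg_pow_sq : ((-1:F)^(r+1)) * ((-1:F)^(r+1)) = 1 := by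
  rw [← mul_pow]; norm_num

lemma expandN (a v t : F) (ht : t^q = t) :
    (a + t*v)^(q+1) = a^(q+1) + t*(a*v^q + a^q*v) + t^2*(v^(q+1)) := by
  rw [pow_succ, S.hfrob, S.frob_mul, ht, pow_succ a, pow_succ v]
  ring

lemma ratio_kfix (u v : F) (hu : u ≠ 0) (hD : u^(q-1) = v^(q-1)) :
    (v * u⁻¹)^q = v * u⁻¹ := by
  have hq := S.hq3
  have h1 : (v*u⁻¹)^(q-1) = 1 := by
    rw [mul_pow, inv_pow, ← hD, mul_inv_cancel₀ (pow_ne_zero _ hu)]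
  have h2 : (v*u⁻¹)^q = (v*u⁻¹)^(q-1) * (v*u⁻¹) := by
    rw [← pow_succ]; congr 1; omega
  rw [h2, h1, one_mul]

lemma three_collinear (z v : F) (hv0 : v ≠ 0) (b e : F)
    (hb : b^q = b) (he : e^q = e) (hb1 : b ≠ 1) (he1 : e ≠ 1) (hbe : b ≠ e)
    (h1 : (z + v)^(q+1) = -d) (h2 : (z + b*v)^(q+1) = -d)
    (h3 : (z + e*v)^(q+1) = -d) : False := by
  have f1 : z^(q+1) + (z*v^q + z^q*v) + v^(q+1) = -d := by
    have h := S.expandN z v 1 (one_pow q)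
    simp only [one_mul, one_pow] at h
    rw [← h]; exact h1
  have f2 : z^(q+1) + b*(z*v^q + z^q*v) + b^2*(v^(q+1)) = -d := by
    have h := S.expandN z v b hb
    rw [← h]; exact h2
  have f3 : z^(q+1) + e*(z*v^q + z^q*v) + e^2*(v^(q+1)) = -d := by
    have h := S.expandN z v e he
    rw [← h]; exact h3
  have k1 : (1-b) * ((z*v^q + z^q*v) + (1+b)*(v^(q+1))) = 0 := by
    linear_combination f1 - f2
  have k2 : (1-e) * ((z*v^q + z^q*v) + (1+e)*(v^(q+1))) = 0 := by
    linear_combination f1 - f3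
  have k1' := (mul_eq_zero.mp k1).resolve_left (sub_ne_zero.mpr hb1.symm)
  have k2' := (mul_eq_zero.mp k2).resolve_left (sub_ne_zero.mpr he1.symm)
  have k3 : (b - e) * (v^(q+1)) = 0 := by linear_combination k1' - k2'
  rcases mul_eq_zero.mp k3 with h | h
  · exact hbe (by linear_combination h)
  · exact (pow_ne_zero (q+1) hv0) h

lemma vne (z : F) (hz : z^(q+1) ≠ -d) (x : F) (hx : x^(q+1) = 1) : α*x - z ≠ 0 := by
  intro h
  apply hz
  have hzeq : z = α*x := by linear_combination -h
  rw [hzeq, mul_pow, S.alpha_norm, hx, mul_one]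

lemma claimB [DecidableEq F] (ε z : F) (hε : ε = 1 ∨ ε = -1) (hz : z^(q+1) ≠ -d)
    (hadj : ∀ x : F, x^(q+1) = 1 → x^(r+1) = ε → eta r (z - α*x) = 1) :
    ∀ x : F, x^(q+1) = 1 → eta r (α*x - z) = 1 := by
  intro x hx
  by_contra hcon
  have hx0 : x ≠ 0 := S.qmem_ne_zero x hx
  have hv0 : α*x - z ≠ 0 := S.vne z hz x hx
  have hvη : eta r (α*x - z) = -1 := (S.eta_dichot _ hv0).resolve_left hcon
  have hflip : eta r (z - α*x) = -1 := by
    rw [show z - α*x = -1*(α*x - z) by ring, S.eta_mul, S.eta_neg_one, one_mul, hvη]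
  have hxh : x^(r+1) = -ε := by
    have hne' : x^(r+1) ≠ ε := by
      intro h
      have h1 := hadj x hx h
      rw [hflip] at h1
      exact S.hne h1
    rcases S.half_dichot x hx with h | h <;> rcases hε with rfl | rfl
    · exact absurd h hne'
    · rw [h]; norm_num
    · rw [h]
    · exact absurd h hne'
  obtain ⟨w, hw⟩ : ∃ w, w = α*x := ⟨_, rfl⟩
  obtain ⟨v, hv⟩ : ∃ v, v = α*x - z := ⟨_, rfl⟩
  rw [← hv] at hvη hv0
  have hw0 : w ≠ 0 := by rw [hw]; exact mul_ne_zero S.hα0 hx0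
  have hwQ : w^(q+1) = -d := by rw [hw, mul_pow, S.alpha_norm, hx, mul_one]
  obtain ⟨sS, hs⟩ : ∃ sS, sS = w * v^q + w^q * v := ⟨_, rfl⟩
  have hsq : sS^q = sS := by
    rw [hs, S.hfrob, S.frob_mul, S.frob_mul, S.frob_frob, S.frob_frob]
    ring
  by_cases hs0 : sS = 0
  · have hwq0 : w^q ≠ 0 := pow_ne_zero _ hw0
    have hβ : (v/w)^q = -(v/w) := by
      rw [div_pow]
      have hws : w * v^q = -(w^q * v) := by rw [hs] at hs0; linear_combination hs0
      field_simp
      linear_combination hws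
    obtain ⟨c, hcq, hcα⟩ := S.skew _ hβ
    have hc0 : c ≠ 0 := by
      intro h
      rw [h, zero_mul] at hcα
      exact hv0 ((div_eq_zero_iff.mp hcα).resolve_right hw0)
    have hveq : v = c * α * w := by
      field_simp at hcα
      linear_combination hcα
    have heq1 : eta r v = 1 := by
      rw [hveq, S.eta_mul, S.eta_mul, S.eta_kfix c hcq hc0, hw, S.eta_mul,
        S.eta_Q x hx, S.eta_alpha, one_mul, mul_one, ← mul_pow]
      norm_num
    rw [heq1] at hvη
    exact S.hne hvη.symm
  · have hNv0 : v^(q+1) ≠ 0 := pow_ne_zero _ hv0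
    have hNvq : (v^(q+1))^q = v^(q+1) := by
      rw [← pow_mul]
      have h5 : (q+1)*q = q^2 + q := by ring
      rw [h5, pow_add, S.pow_qq, pow_succ']
    obtain ⟨t, ht⟩ : ∃ t, t = -sS / v^(q+1) := ⟨_, rfl⟩
    have htq : t^q = t := by rw [ht, div_pow, S.frob_neg, hsq, hNvq]
    have ht0 : t ≠ 0 := by rw [ht]; exact div_ne_zero (neg_ne_zero.mpr hs0) hNv0
    obtain ⟨w', hw'⟩ : ∃ w', w' = w + t*v := ⟨_, rfl⟩
    have hw'Q : w'^(q+1) = -d := by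
      have expand := S.expandN w v t htq
      have h0 : sS + t * v^(q+1) = 0 := by
        rw [ht, div_mul_cancel₀ _ hNv0]; ring
      have hts' : t * sS + t^2 * v^(q+1) = 0 := by linear_combination t * h0
      rw [hw', expand, hwQ]
      linear_combination hts' - t * hs
    obtain ⟨x', hx'⟩ : ∃ x', x' = w' * α⁻¹ := ⟨_, rfl⟩
    have hwx' : α * x' = w' := by rw [hx']; field_simp [S.hα0]
    have hx'Q : x'^(q+1) = 1 := by
      rw [hx', mul_pow, inv_pow, hw'Q, S.alpha_norm]
      exact mul_inv_cancel₀ (neg_ne_zero.mpr S.hd0)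
    have ht1 : (1:F) + t ≠ 0 := by
      intro h
      apply hz
      have h2 : w' = z := by rw [hw', show t = -1 by linear_combination h, hv, hw]; ring
      rw [← h2]; exact hw'Q
    have hx'x : x' ≠ x := by
      intro h
      have h2 : t*v = 0 := by
        have h3 : α * x' = α * x := by rw [h]
        rw [hwx', hw', ← hw] at h3
        linear_combination h3
      rcases mul_eq_zero.mp h2 with h3 | h3
      · exact ht0 h3
      · exact hv0 h3
    have hchordα : (-1:F)^(r+1) * eta r (x' - x) = -1 := by
      rw [← S.eta_alpha, ← S.eta_mul]
      have h3 : α*(x' - x) = t*v := by rw [mul_sub, hwx', hw', ← hw]; ring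
      rw [h3, S.eta_mul, S.eta_kfix t htq ht0, one_mul, hvη]
    have hchord : eta r (x' - x) = (-1:F)^r := by
      calc eta r (x' - x) = ((-1:F)^(r+1) * (-1)^(r+1)) * eta r (x' - x) := by
            rw [S.neg_pow_sq, one_mul]
        _ = (-1)^(r+1) * ((-1)^(r+1) * eta r (x' - x)) := by ring
        _ = (-1)^(r+1) * (-1) := by rw [hchordα]
        _ = (-1)^r * ((-1)*(-1)) := by rw [pow_succ]; ring
        _ = (-1)^r := by norm_num
    have hx'h : x'^(r+1) = ε := by
      have hne2 : x'^(r+1) ≠ x^(r+1) := by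
        intro hsame
        have h7 := S.chord_same x' x hx'Q hx hx'x hsame
        rw [hchord] at h7
        exact S.neg_pow_ne h7
      rcases S.half_dichot x' hx'Q with h | h <;> rcases hε with rfl | rfl
      · exact h
      · exfalso; apply hne2; rw [h, hxh]; norm_num
      · exfalso; apply hne2; rw [h, hxh]
      · exact h
    have hfin := hadj x' hx'Q hx'h
    have h8 : z - α*x' = -1 * ((1+t) * v) := by rw [hwx', hw', hw, hv]; ring
    rw [h8, S.eta_mul, S.eta_neg_one, one_mul, S.eta_mul, hvη,
      S.eta_kfix (1+t) (by rw [S.hfrob, one_pow, htq]) ht1, one_mul] at hfin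
    exact S.hne hfin

lemma count_even [DecidableEq F] (z : F) (hz : z^(q+1) ≠ -d)
    (hB : ∀ x : F, x^(q+1) = 1 → eta r (α*x - z) = 1) : Even (r+1) := by
  have hq := S.hq3
  have hrr := S.hr
  set QF := Finset.univ.filter (fun x : F => x^(q+1) = 1) with hQF
  set Q0F := Finset.univ.filter (fun x : F => x^(q+1) = 1 ∧ x^(r+1) = 1) with hQ0F
  set D := fun x : F => (α*x - z)^(q-1) with hD
  have hmemQF : ∀ x : F, x ∈ QF ↔ x^(q+1) = 1 := by
    intro x; simp [hQF]
  have hmemQ0F : ∀ x : F, x ∈ Q0F ↔ (x^(q+1) = 1 ∧ x^(r+1) = 1) := by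
    intro x; simp [hQ0F]
  have hmaps : ∀ x ∈ QF, D x ∈ Q0F := by
    intro x hx
    rw [hmemQF] at hx
    have h0 := S.vne z hz x hx
    rw [hmemQ0F]
    constructor
    · show ((α*x - z)^(q-1))^(q+1) = 1
      rw [← pow_mul, S.nat_e1]
      exact S.pow_card_sub_one _ h0
    · show ((α*x - z)^(q-1))^(r+1) = 1
      rw [← pow_mul]
      have he : (q-1)*(r+1) = 2*(r*(r+1)) := by
        have h1 : q - 1 = 2*r := by omega
        rw [h1]; ring
      rw [he]
      exact hB x hx
  have hratio : ∀ x y : F, x^(q+1) = 1 → y^(q+1) = 1 → D x = D y →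
      ((α*y - z) * (α*x - z)⁻¹)^q = (α*y - z) * (α*x - z)⁻¹ := by
    intro x y hx hy hDxy
    have hDxy' : (α*x - z)^(q-1) = (α*y - z)^(q-1) := hDxy
    exact S.ratio_kfix _ _ (S.vne z hz x hx) hDxy'
  have hfib_le : ∀ y ∈ QF.image D, #(QF.filter (fun x => D x = y)) ≤ 2 := by
    intro y hy
    by_contra hcon
    push_neg at hcon
    obtain ⟨a, ha, a', ha', a'', ha'', h1, h2, h3⟩ := Finset.two_lt_card.mp hcon
    rw [mem_filter] at ha ha' ha''
    obtain ⟨haQ, haD⟩ := ha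
    obtain ⟨ha'Q, ha'D⟩ := ha'
    obtain ⟨ha''Q, ha''D⟩ := ha''
    rw [hmemQF] at haQ ha'Q ha''Q
    have hva := S.vne z hz a haQ
    set b := (α*a' - z) * (α*a - z)⁻¹ with hb
    set e := (α*a'' - z) * (α*a - z)⁻¹ with he
    have hbq : b^q = b := hratio a a' haQ ha'Q (haD.trans ha'D.symm)
    have heq : e^q = e := hratio a a'' haQ ha''Q (haD.trans ha''D.symm)
    have hbv : b * (α*a - z) = α*a' - z := by rw [hb]; field_simp
    have hev : e * (α*a - z) = α*a'' - z := by rw [he]; field_simp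
    have hb1 : b ≠ 1 := by
      intro h
      rw [h, one_mul] at hbv
      exact h1 (mul_left_cancel₀ S.hα0 (by linear_combination hbv))
    have he1 : e ≠ 1 := by
      intro h
      rw [h, one_mul] at hev
      exact h2 (mul_left_cancel₀ S.hα0 (by linear_combination hev))
    have hbe : b ≠ e := by
      intro h
      rw [h] at hbv
      exact h3 (mul_left_cancel₀ S.hα0 (by linear_combination hev - hbv))
    apply S.three_collinear z (α*a - z) hva b e hbq heq hb1 he1 hbe
    · rw [show z + (α*a - z) = α*a by ring, mul_pow, S.alpha_norm, haQ, mul_one]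
    · rw [hbv, show z + (α*a' - z) = α*a' by ring, mul_pow, S.alpha_norm, ha'Q, mul_one]
    · rw [hev, show z + (α*a'' - z) = α*a'' by ring, mul_pow, S.alpha_norm, ha''Q, mul_one]
  have hQ0card : #Q0F = r+1 := by rw [hQ0F]; exact S.cardQhalf
  have himg_le : #(QF.image D) ≤ r+1 := by
    refine le_trans (card_le_card ?_) (le_of_eq hQ0card)
    intro y hy
    obtain ⟨x, hx, rfl⟩ := mem_image.mp hy
    exact hmaps x hx
  have hsum := Finset.card_eq_sum_card_fiberwise
    (f := D) (s := QF) (t := QF.image D) (fun x hx => mem_image_of_mem _ hx)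
  have hQFcard : #QF = q+1 := by rw [hQF]; exact S.cardQ
  have hfib_eq : ∀ y ∈ QF.image D, #(QF.filter (fun x => D x = y)) = 2 := by
    by_contra hcon
    push_neg at hcon
    obtain ⟨y₀, hy₀, hy₀ne⟩ := hcon
    have hy₀le : #(QF.filter (fun x => D x = y₀)) ≤ 1 := by
      have := hfib_le y₀ hy₀; omega
    have hsplit : #(QF.filter (fun x => D x = y₀))
        + ∑ y ∈ (QF.image D).erase y₀, #(QF.filter (fun x => D x = y))
        = ∑ y ∈ QF.image D, #(QF.filter (fun x => D x = y)) :=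
      Finset.add_sum_erase _ (fun y => #(QF.filter (fun x => D x = y))) hy₀
    have hrest : ∑ y ∈ (QF.image D).erase y₀, #(QF.filter (fun x => D x = y))
        ≤ 2 * #((QF.image D).erase y₀) := by
      calc ∑ y ∈ (QF.image D).erase y₀, #(QF.filter (fun x => D x = y))
          ≤ #((QF.image D).erase y₀) • 2 :=
            Finset.sum_le_card_nsmul _ _ 2 (fun y hy => hfib_le y (mem_of_mem_erase hy))
        _ = 2 * #((QF.image D).erase y₀) := by rw [smul_eq_mul, mul_comm]
    have herase : #((QF.image D).erase y₀) = #(QF.image D) - 1 := card_erase_of_mem hy₀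
    rw [hQFcard] at hsum
    have himgpos : 1 ≤ #(QF.image D) := card_pos.mpr ⟨y₀, hy₀⟩
    omega
  have hpair : ∀ u x₀ : F, u ∈ QF → x₀ ∈ Q0F → D u = D x₀ → u ∈ Q0F := by
    intro u x₀ hu hx₀ hDeq
    by_cases hequ : u = x₀
    · rw [hequ]; exact hx₀
    rw [hmemQ0F] at hx₀ ⊢
    rw [hmemQF] at hu
    obtain ⟨hx₀Q, hx₀h⟩ := hx₀
    refine ⟨hu, ?_⟩
    have hvu := S.vne z hz u hu
    set c := (α*x₀ - z) * (α*u - z)⁻¹ with hc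
    have hcq : c^q = c := hratio u x₀ hu hx₀Q hDeq
    have hcv : c * (α*u - z) = α*x₀ - z := by rw [hc]; field_simp [hvu]
    have hc1 : c ≠ 1 := by
      intro h
      rw [h, one_mul] at hcv
      exact hequ (mul_left_cancel₀ S.hα0 (by linear_combination hcv))
    have hchordeq : α*(u - x₀) = (1 - c) * (α*u - z) := by linear_combination hcv
    have h1c : (1:F) - c ≠ 0 := fun h => hc1 (by linear_combination -h)
    have h1cq : (1 - c)^q = 1 - c := by rw [S.frob_sub, one_pow, hcq]
    have hchordeta : eta r α * eta r (u - x₀) = 1 := by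
      rw [← S.eta_mul, hchordeq, S.eta_mul, S.eta_kfix _ h1cq h1c, one_mul]
      exact hB u hu
    by_contra hne3
    have hdiff : u^(r+1) ≠ x₀^(r+1) := by
      rcases S.half_dichot u hu with h | h
      · exact absurd h hne3
      · rw [h, hx₀h]; exact fun hh => S.hne hh
    have hcc := S.chord_cross u x₀ hu hx₀Q hdiff
    rw [hcc, S.eta_alpha, ← pow_add] at hchordeta
    have hodd : ((-1:F))^(r+1+r) = -1 := Odd.neg_one_pow ⟨r, by omega⟩
    rw [hodd] at hchordeta
    exact S.hne hchordeta
  have hsum0 := Finset.card_eq_sum_card_fiberwise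
    (f := D) (s := Q0F) (t := Q0F.image D) (fun x hx => mem_image_of_mem _ hx)
  have hfib0 : ∀ y ∈ Q0F.image D, #(Q0F.filter (fun x => D x = y)) = 2 := by
    intro y hy
    obtain ⟨x₀, hx₀, hx₀D⟩ := mem_image.mp hy
    have hx₀QF : x₀ ∈ QF := by rw [hmemQF]; exact ((hmemQ0F x₀).mp hx₀).1
    have hyQF : y ∈ QF.image D := mem_image.mpr ⟨x₀, hx₀QF, hx₀D⟩
    have h2 := hfib_eq y hyQF
    have hseteq : Q0F.filter (fun x => D x = y) = QF.filter (fun x => D x = y) := by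
      ext u
      simp only [mem_filter]
      constructor
      · rintro ⟨hu, hDu⟩
        refine ⟨?_, hDu⟩
        rw [hmemQF]; exact ((hmemQ0F u).mp hu).1
      · rintro ⟨hu, hDu⟩
        exact ⟨hpair u x₀ hu hx₀ (hDu.trans hx₀D.symm), hDu⟩
    rw [hseteq]; exact h2
  rw [hQ0card] at hsum0
  rw [Finset.sum_congr rfl hfib0, Finset.sum_const, smul_eq_mul] at hsum0
  exact ⟨#(Q0F.image D), by omega⟩

lemma eps_ne (ε : F) (hε : ε = 1 ∨ ε = -1) : ε ≠ -ε := by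
  rcases hε with rfl | rfl
  · intro h; exact S.hne h.symm
  · intro h; exact S.hne (by linear_combination h)

lemma isSquare_neg_one : IsSquare (-1:F) :=
  (S.eta_isSquare _ (neg_ne_zero.mpr one_ne_zero)).mpr S.eta_neg_one

lemma isSquare_symm (a b : F) (h : IsSquare (a - b)) : IsSquare (b - a) := by
  rw [show b - a = (-1) * (a - b) by ring]
  exact S.isSquare_neg_one.mul h

lemma clique_bound [DecidableEq F] (W : Finset F)
    (hW : ∀ a ∈ W, ∀ b ∈ W, a ≠ b → IsSquare (a - b)) : #W ≤ q := by
  obtain ⟨μ, hμ⟩ := FiniteField.exists_nonsquare (F := F) S.hchar2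
  have hμ0 : μ ≠ 0 := by rintro rfl; exact hμ ⟨0, by ring⟩
  set I := W.image (fun w => μ * w) with hI
  have hIcard : #I = #W := Finset.card_image_of_injective _ (mul_right_injective₀ hμ0)
  have hinj : Set.InjOn (fun p : F × F => p.1 - p.2) ↑(W ×ˢ I) := by
    rintro ⟨a, b⟩ hab ⟨a', b'⟩ hab' hEq
    rw [Finset.mem_coe, Finset.mem_product] at hab hab'
    obtain ⟨haW, hbI⟩ := hab
    obtain ⟨ha'W, hb'I⟩ := hab'
    simp only at hEq
    by_cases haa : a = a'
    · have hbb : b = b' := by rw [haa] at hEq; linear_combination -hEq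
      rw [haa, hbb]
    · exfalso
      obtain ⟨w, hwW, rfl⟩ := mem_image.mp hbI
      obtain ⟨w', hw'W, rfl⟩ := mem_image.mp hb'I
      have hww' : w ≠ w' := by
        intro h
        rw [h] at hEq
        exact haa (by linear_combination hEq)
      have hs1 : IsSquare (a - a') := hW a haW a' ha'W haa
      have hs2 : IsSquare (w - w') := hW w hwW w' hw'W hww'
      obtain ⟨sq1, hsq1⟩ := hs1
      obtain ⟨u2, hu2⟩ := hs2
      have hw0 : w - w' ≠ 0 := sub_ne_zero.mpr hww'
      have hu20 : u2 ≠ 0 := by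
        intro h
        rw [h, mul_zero] at hu2
        exact hw0 hu2
      apply hμ
      refine ⟨sq1 * u2⁻¹, ?_⟩
      have h5 : a - a' = μ * (w - w') := by linear_combination hEq
      rw [hsq1, hu2] at h5
      field_simp
      linear_combination -h5
  have hle : #(W ×ˢ I) ≤ Fintype.card F := by
    rw [← Finset.card_univ]
    exact Finset.card_le_card_of_injOn (fun p : F × F => p.1 - p.2)
      (fun p _ => mem_univ _) hinj
  rw [Finset.card_product, hIcard, S.hcard] at hle
  by_contra hcon
  push_neg at hcon
  have h7 : q^2 = q*q := sq q
  nlinarith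
  
lemma cardQeps [DecidableEq F] (ε : F) (hε : ε = 1 ∨ ε = -1) :
    #(Finset.univ.filter (fun x : F => x^(q+1) = 1 ∧ x^(r+1) = ε)) = r+1 := by
  rcases hε with rfl | rfl
  · exact S.cardQhalf
  · have hq := S.hq3
    have hrr := S.hr
    set QF := Finset.univ.filter (fun x : F => x^(q+1) = 1) with hQF
    have hsplit := Finset.card_filter_add_card_filter_not
      (s := QF) (p := fun x => x^(r+1) = 1)
    have he1 : QF.filter (fun x => x^(r+1) = 1)
        = Finset.univ.filter (fun x : F => x^(q+1) = 1 ∧ x^(r+1) = 1) := by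
      rw [hQF, Finset.filter_filter]
    have he2 : QF.filter (fun x => ¬ x^(r+1) = 1)
        = Finset.univ.filter (fun x : F => x^(q+1) = 1 ∧ x^(r+1) = -1) := by
      rw [hQF, Finset.filter_filter]
      apply Finset.filter_congr
      intro x _
      simp only [and_congr_right_iff]
      intro hx
      constructor
      · intro h
        exact (S.half_dichot x hx).resolve_left h
      · intro h hcon
        rw [h] at hcon
        exact S.hne hcon
    rw [he1, he2] at hsplit
    have hc1 : #(Finset.univ.filter (fun x : F => x^(q+1) = 1 ∧ x^(r+1) = 1)) = r+1 :=
      S.cardQhalf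
    have hc2 : #QF = q+1 := by rw [hQF]; exact S.cardQ
    rw [hc1, hc2] at hsplit
    omega

lemma not_on_circle [DecidableEq F] (ε z : F) (hε : ε = 1 ∨ ε = -1)
    (hcon : ∀ x : F, x^(q+1) = 1 → x^(r+1) = ε → z ≠ α*x)
    (hadj : ∀ x : F, x^(q+1) = 1 → x^(r+1) = ε → eta r (z - α*x) = 1) :
    z^(q+1) ≠ -d := by
  intro h
  have hy : (z * α⁻¹)^(q+1) = 1 := by
    rw [mul_pow, inv_pow, h, S.alpha_norm]
    exact mul_inv_cancel₀ (neg_ne_zero.mpr S.hd0)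
  have hzy : z = α * (z * α⁻¹) := by
    rw [mul_comm z, ← mul_assoc, mul_inv_cancel₀ S.hα0, one_mul]
  have hx₀ex : 0 < #(Finset.univ.filter (fun x : F => x^(q+1) = 1 ∧ x^(r+1) = ε)) := by
    rw [S.cardQeps ε hε]; omega
  obtain ⟨x₀, hx₀⟩ := Finset.card_pos.mp hx₀ex
  simp only [mem_filter, mem_univ, true_and] at hx₀
  obtain ⟨hx₀Q, hx₀h⟩ := hx₀
  by_cases hcase : (z*α⁻¹)^(r+1) = ε
  · exact hcon _ hy hcase hzy
  · have hdiff : (z*α⁻¹)^(r+1) ≠ x₀^(r+1) := by rw [hx₀h]; exact hcase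
    have hch := S.chord_cross _ x₀ hy hx₀Q hdiff
    have h6 := hadj x₀ hx₀Q hx₀h
    have h7 : z - α*x₀ = α * ((z*α⁻¹) - x₀) := by
      rw [mul_sub, mul_comm z, ← mul_assoc, mul_inv_cancel₀ S.hα0, one_mul]
    rw [h7, S.eta_mul, S.eta_alpha, hch, ← pow_add] at h6
    have hodd : ((-1:F))^(r+1+r) = -1 := Odd.neg_one_pow ⟨r, by omega⟩
    rw [hodd] at h6
    exact S.hne h6

lemma case3_main [DecidableEq F] (ε z : F) (hε : ε = 1 ∨ ε = -1) (hro : r % 2 = 1)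
    (hz0 : z ≠ 0) (hzη : eta r z = 1) (hz : z^(q+1) ≠ -d)
    (hadj : ∀ x : F, x^(q+1) = 1 → x^(r+1) = ε → eta r (z - α*x) = 1) : False := by
  have hq := S.hq3
  have hrr := S.hr
  have hrodd : ((-1:F))^(r+1) = 1 := by
    rw [show r+1 = 2*((r+1)/2) by omega, pow_mul]
    norm_num
  set QεF := Finset.univ.filter (fun x : F => x^(q+1) = 1 ∧ x^(r+1) = ε) with hQε
  set Q0F := Finset.univ.filter (fun x : F => x^(q+1) = 1 ∧ x^(r+1) = 1) with hQ0
  set W := ((QεF.image (fun x => α * x)) ∪ (Q0F.image (fun x => z * x))) ∪ {(0:F)} with hW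
  -- the square facts
  have hAA : ∀ x x' : F, x^(q+1) = 1 → x'^(q+1) = 1 → x^(r+1) = x'^(r+1) → x ≠ x' →
      IsSquare (α*x - α*x') := by
    intro x x' h1 h2 h3 h4
    have h6 : eta r (α*(x-x')) = 1 := by
      rw [S.eta_mul, S.eta_alpha, S.chord_same x x' h1 h2 h4 h3, ← mul_pow]
      norm_num
    have h7 : α*(x - x') ≠ 0 := mul_ne_zero S.hα0 (sub_ne_zero.mpr h4)
    rw [show α*x - α*x' = α*(x - x') by ring]
    exact (S.eta_isSquare _ h7).mpr h6
  have hZZ : ∀ x x' : F, x^(q+1) = 1 → x'^(q+1) = 1 → x^(r+1) = x'^(r+1) → x ≠ x' →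
      IsSquare (z*x - z*x') := by
    intro x x' h1 h2 h3 h4
    have h6 : eta r (z*(x-x')) = 1 := by
      rw [S.eta_mul, hzη, one_mul, S.chord_same x x' h1 h2 h4 h3, hrodd]
    have h7 : z*(x - x') ≠ 0 := mul_ne_zero hz0 (sub_ne_zero.mpr h4)
    rw [show z*x - z*x' = z*(x - x') by ring]
    exact (S.eta_isSquare _ h7).mpr h6
  have hQsq : ∀ x : F, x^(q+1) = 1 → IsSquare (α*x) := by
    intro x h1
    have h7 : α*x ≠ 0 := mul_ne_zero S.hα0 (S.qmem_ne_zero x h1)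
    refine (S.eta_isSquare _ h7).mpr ?_
    rw [S.eta_mul, S.eta_alpha, S.eta_Q x h1, hrodd, one_mul]
  have hZsq : ∀ x : F, x^(q+1) = 1 → IsSquare (z*x) := by
    intro x h1
    have h7 : z*x ≠ 0 := mul_ne_zero hz0 (S.qmem_ne_zero x h1)
    refine (S.eta_isSquare _ h7).mpr ?_
    rw [S.eta_mul, hzη, S.eta_Q x h1, one_mul]
  have hmix : ∀ x x' : F, x^(q+1) = 1 → x^(r+1) = 1 → x'^(q+1) = 1 → x'^(r+1) = ε →
      IsSquare (z*x - α*x') := by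
    intro x x' h1 h2 h3 h4
    have hx0 : x ≠ 0 := S.qmem_ne_zero x h1
    have hxr0 : x^(r+1) ≠ 0 := pow_ne_zero _ hx0
    have hxx : (x' * x⁻¹)^(q+1) = 1 := by
      rw [mul_pow, inv_pow, h1, h3, inv_one, mul_one]
    have hxh : (x' * x⁻¹)^(r+1) = ε := by
      rw [mul_pow, inv_pow, h2, h4, inv_one, mul_one]
    have h6 := hadj _ hxx hxh
    have h7 : z*x - α*x' = x * (z - α*(x' * x⁻¹)) := by
      field_simp
    have h8 : z - α*(x' * x⁻¹) ≠ 0 := by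
      intro hcc
      apply hz
      have h9 : z = α*(x' * x⁻¹) := by linear_combination hcc
      rw [h9, mul_pow, S.alpha_norm, hxx, mul_one]
    rw [h7]
    refine (S.eta_isSquare _ (mul_ne_zero hx0 h8)).mpr ?_
    rw [S.eta_mul, S.eta_Q x h1, one_mul]
    exact h6
  -- W is a clique
  have hWmem : ∀ a : F, a ∈ W ↔
      (∃ x : F, (x^(q+1) = 1 ∧ x^(r+1) = ε) ∧ α * x = a) ∨
       (∃ x : F, (x^(q+1) = 1 ∧ x^(r+1) = 1) ∧ z * x = a) ∨ a = 0 := by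
    intro a
    rw [hW, mem_union, mem_union, mem_singleton]
    constructor
    · rintro ((h | h) | h)
      · left
        obtain ⟨x, hx, hax⟩ := mem_image.mp h
        simp only [hQε, mem_filter, mem_univ, true_and] at hx
        exact ⟨x, hx, hax⟩
      · right; left
        obtain ⟨x, hx, hax⟩ := mem_image.mp h
        simp only [hQ0, mem_filter, mem_univ, true_and] at hx
        exact ⟨x, hx, hax⟩
      · right; right; exact h
    · rintro (⟨x, hx, hax⟩ | ⟨x, hx, hax⟩ | h)
      · left; left
        exact mem_image.mpr ⟨x, by simp only [hQε, mem_filter, mem_univ, true_and]; exact hx, hax⟩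
      · left; right
        exact mem_image.mpr ⟨x, by simp only [hQ0, mem_filter, mem_univ, true_and]; exact hx, hax⟩
      · right; exact h
  have hclique : ∀ a ∈ W, ∀ b ∈ W, a ≠ b → IsSquare (a - b) := by
    intro a ha b hb hab
    rw [hWmem] at ha hb
    rcases ha with ⟨x, ⟨hx1, hx2⟩, rfl⟩ | ⟨x, ⟨hx1, hx2⟩, rfl⟩ | rfl <;>
      rcases hb with ⟨x', ⟨hx'1, hx'2⟩, rfl⟩ | ⟨x', ⟨hx'1, hx'2⟩, rfl⟩ | rfl
    · exact hAA x x' hx1 hx'1 (hx2.trans hx'2.symm) (fun h => hab (by rw [h]))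
    · exact S.isSquare_symm _ _ (hmix x' x hx'1 hx'2 hx1 hx2)
    · rw [sub_zero]; exact hQsq x hx1
    · exact hmix x x' hx1 hx2 hx'1 hx'2
    · exact hZZ x x' hx1 hx'1 (hx2.trans hx'2.symm) (fun h => hab (by rw [h]))
    · rw [sub_zero]; exact hZsq x hx1
    · rw [zero_sub, show -(α*x') = (-1) * (α*x') by ring]
      exact S.isSquare_neg_one.mul (hQsq x' hx'1)
    · rw [zero_sub, show -(z*x') = (-1) * (z*x') by ring]
      exact S.isSquare_neg_one.mul (hZsq x' hx'1)
    · exact absurd rfl hab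
  -- cardinality of W
  have hdisj1 : Disjoint (QεF.image (fun x => α * x)) (Q0F.image (fun x => z * x)) := by
    rw [Finset.disjoint_left]
    intro a ha hb
    obtain ⟨x, hx, rfl⟩ := mem_image.mp ha
    obtain ⟨x', hx', hzx⟩ := mem_image.mp hb
    simp only [hQε, hQ0, mem_filter, mem_univ, true_and] at hx hx'
    apply hz
    have hx'0 : x' ≠ 0 := S.qmem_ne_zero x' hx'.1
    have hzval : z = α * (x * x'⁻¹) := by
      rw [← mul_assoc]
      field_simp
      linear_combination hzx
    have hxx : (x * x'⁻¹)^(q+1) = 1 := by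
      rw [mul_pow, inv_pow, hx.1, hx'.1, inv_one, mul_one]
    rw [hzval, mul_pow, S.alpha_norm, hxx, mul_one]
  have hdisj2 : Disjoint ((QεF.image (fun x => α * x)) ∪ (Q0F.image (fun x => z * x)))
      ({(0:F)} : Finset F) := by
    rw [Finset.disjoint_right]
    intro a ha hb
    rw [mem_singleton] at ha
    subst ha
    rw [mem_union] at hb
    rcases hb with h | h
    · obtain ⟨x, hx, hx0⟩ := mem_image.mp h
      simp only [hQε, mem_filter, mem_univ, true_and] at hx
      exact mul_ne_zero S.hα0 (S.qmem_ne_zero x hx.1) hx0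
    · obtain ⟨x, hx, hx0⟩ := mem_image.mp h
      simp only [hQ0, mem_filter, mem_univ, true_and] at hx
      exact mul_ne_zero hz0 (S.qmem_ne_zero x hx.1) hx0
  have hcard1 : #(QεF.image (fun x => α * x)) = r+1 := by
    rw [Finset.card_image_of_injective _ (mul_right_injective₀ S.hα0), hQε]
    exact S.cardQeps ε hε
  have hcard2 : #(Q0F.image (fun x => z * x)) = r+1 := by
    rw [Finset.card_image_of_injective _ (mul_right_injective₀ hz0), hQ0]
    exact S.cardQhalf
  have hWcard : #W = 2*r + 3 := by
    rw [hW, Finset.card_union_of_disjoint hdisj2, Finset.card_union_of_disjoint hdisj1,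
      hcard1, hcard2, card_singleton]
    omega
  have := S.clique_bound W hclique
  omega

lemma max_case1 [DecidableEq F] (ε z : F) (hε : ε = 1 ∨ ε = -1) (hre : r % 2 = 0)
    (hadj : ∀ x : F, x^(q+1) = 1 → x^(r+1) = ε → z ≠ α*x → eta r (z - α*x) = 1) :
    ∃ x : F, x^(q+1) = 1 ∧ x^(r+1) = ε ∧ z = α*x := by
  by_contra hcon
  push_neg at hcon
  have hcon' : ∀ x : F, x^(q+1) = 1 → x^(r+1) = ε → z ≠ α*x := by
    intro x h1 h2
    exact hcon x h1 h2
  have hadj' : ∀ x : F, x^(q+1) = 1 → x^(r+1) = ε → eta r (z - α*x) = 1 :=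
    fun x h1 h2 => hadj x h1 h2 (hcon' x h1 h2)
  have hzQ := S.not_on_circle ε z hε hcon' hadj'
  have heven := S.count_even z hzQ (S.claimB ε z hε hzQ hadj')
  rw [Nat.even_iff] at heven
  omega

lemma max_case3 [DecidableEq F] (ε z : F) (hε : ε = 1 ∨ ε = -1) (hro : r % 2 = 1)
    (hz0 : z ≠ 0) (hzη : eta r z = 1)
    (hadj : ∀ x : F, x^(q+1) = 1 → x^(r+1) = ε → z ≠ α*x → eta r (z - α*x) = 1) :
    ∃ x : F, x^(q+1) = 1 ∧ x^(r+1) = ε ∧ z = α*x := by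
  by_contra hcon
  push_neg at hcon
  have hcon' : ∀ x : F, x^(q+1) = 1 → x^(r+1) = ε → z ≠ α*x := by
    intro x h1 h2
    exact hcon x h1 h2
  have hadj' : ∀ x : F, x^(q+1) = 1 → x^(r+1) = ε → eta r (z - α*x) = 1 :=
    fun x h1 h2 => hadj x h1 h2 (hcon' x h1 h2)
  have hzQ := S.not_on_circle ε z hε hcon' hadj'
  exact S.case3_main ε z hε hro hz0 hzη hzQ hadj'

lemma sq_chord [DecidableEq F] (x x' : F) (h1 : x^(q+1) = 1) (h1' : x'^(q+1) = 1)
    (h3 : x^(r+1) = x'^(r+1)) (h4 : x ≠ x') : IsSquare (α*x - α*x') := by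
  have h6 : eta r (α*(x-x')) = 1 := by
    rw [S.eta_mul, S.eta_alpha, S.chord_same x x' h1 h1' h4 h3, ← mul_pow]
    norm_num
  have h7 : α*(x - x') ≠ 0 := mul_ne_zero S.hα0 (sub_ne_zero.mpr h4)
  rw [show α*x - α*x' = α*(x - x') by ring]
  exact (S.eta_isSquare _ h7).mpr h6

lemma sq_point (hro : r % 2 = 1) (x : F) (h1 : x^(q+1) = 1) : IsSquare (α*x) := by
  have hrodd : ((-1:F))^(r+1) = 1 := by
    rw [show r+1 = 2*((r+1)/2) by omega, pow_mul]
    norm_num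
  have h7 : α*x ≠ 0 := mul_ne_zero S.hα0 (S.qmem_ne_zero x h1)
  refine (S.eta_isSquare _ h7).mpr ?_
  rw [S.eta_mul, S.eta_alpha, S.eta_Q x h1, hrodd, one_mul]

lemma main_eps [DecidableEq F] (ε : F) (hε : ε = 1 ∨ ε = -1) (A : Set F)
    (hA : ∀ w : F, w ∈ A ↔ ∃ x : F, (x^(q+1) = 1 ∧ x^(r+1) = ε) ∧ w = α * x) :
    (r % 2 = 0 → maxPaleyClique A ∧ A.ncard = r+1) ∧
    (r % 2 = 1 → maxPaleyClique (A ∪ {0}) ∧ (A ∪ {0} : Set F).ncard = r+2) := by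
  have hq := S.hq3
  have hrr := S.hr
  set QεF := Finset.univ.filter (fun x : F => x^(q+1) = 1 ∧ x^(r+1) = ε) with hQε
  set AF := QεF.image (fun x => α * x) with hAF
  have hAset : A = ↑AF := by
    ext w
    rw [hA w]
    simp only [hAF, Finset.coe_image, Set.mem_image, Finset.mem_coe, hQε,
      mem_filter, mem_univ, true_and]
    constructor
    · rintro ⟨x, hx, rfl⟩
      exact ⟨x, hx, rfl⟩
    · rintro ⟨x, hx, rfl⟩
      exact ⟨x, hx, rfl⟩
  have hAFcard : #AF = r+1 := by
    rw [hAF, Finset.card_image_of_injective _ (mul_right_injective₀ S.hα0), hQε]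
    exact S.cardQeps ε hε
  have hcardA : A.ncard = r+1 := by
    rw [hAset, Set.ncard_coe_finset, hAFcard]
  have h0A : (0:F) ∉ A := by
    rw [hA]
    rintro ⟨x, ⟨h1, _⟩, h2⟩
    exact mul_ne_zero S.hα0 (S.qmem_ne_zero x h1) h2.symm
  have hcl : paleyClique A := by
    intro w hw w' hw' hne
    rw [hA] at hw hw'
    obtain ⟨x, ⟨h1, h2⟩, rfl⟩ := hw
    obtain ⟨x', ⟨h1', h2'⟩, rfl⟩ := hw'
    exact S.sq_chord x x' h1 h1' (h2.trans h2'.symm) (fun h => hne (by rw [h]))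
  constructor
  · intro hre
    refine ⟨⟨hcl, ?_⟩, hcardA⟩
    intro C' hC' hsub
    apply Set.Subset.antisymm ?_ hsub
    intro z hz
    have hadj : ∀ x : F, x^(q+1) = 1 → x^(r+1) = ε → z ≠ α*x → eta r (z - α*x) = 1 := by
      intro x h1 h2 h3
      have hxA : α*x ∈ A := (hA _).mpr ⟨x, ⟨h1, h2⟩, rfl⟩
      have hsq := hC' z hz (α*x) (hsub hxA) h3
      exact (S.eta_isSquare _ (sub_ne_zero.mpr h3)).mp hsq
    obtain ⟨x, h1, h2, h3⟩ := S.max_case1 ε z hε hre hadj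
    exact (hA z).mpr ⟨x, ⟨h1, h2⟩, h3⟩
  · intro hro
    have hclU : paleyClique (A ∪ {0}) := by
      intro w hw w' hw' hne
      rcases hw with hw | hw <;> rcases hw' with hw' | hw'
      · exact hcl w hw w' hw' hne
      · rw [Set.mem_singleton_iff] at hw'
        subst hw'
        obtain ⟨x, ⟨h1, _⟩, rfl⟩ := (hA w).mp hw
        rw [sub_zero]
        exact S.sq_point hro x h1
      · rw [Set.mem_singleton_iff] at hw
        subst hw
        obtain ⟨x, ⟨h1, _⟩, rfl⟩ := (hA w').mp hw'
        rw [zero_sub, show -(α*x) = (-1) * (α*x) by ring]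
        exact S.isSquare_neg_one.mul (S.sq_point hro x h1)
      · rw [Set.mem_singleton_iff] at hw hw'
        exact absurd (hw.trans hw'.symm) hne
    constructor
    · refine ⟨hclU, ?_⟩
      intro C' hC' hsub
      apply Set.Subset.antisymm ?_ hsub
      intro z hz
      by_cases hz0 : z = 0
      · right; rw [Set.mem_singleton_iff]; exact hz0
      have h0C : (0:F) ∈ C' := hsub (Or.inr rfl)
      have hzη : eta r z = 1 := by
        have hsq := hC' z hz 0 h0C hz0
        rw [sub_zero] at hsq
        exact (S.eta_isSquare _ hz0).mp hsq
      have hadj : ∀ x : F, x^(q+1) = 1 → x^(r+1) = ε → z ≠ α*x → eta r (z - α*x) = 1 := by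
        intro x h1 h2 h3
        have hxA : α*x ∈ A ∪ {0} := Or.inl ((hA _).mpr ⟨x, ⟨h1, h2⟩, rfl⟩)
        have hsq := hC' z hz (α*x) (hsub hxA) h3
        exact (S.eta_isSquare _ (sub_ne_zero.mpr h3)).mp hsq
      obtain ⟨x, h1, h2, h3⟩ := S.max_case3 ε z hε hro hz0 hzη hadj
      exact Or.inl ((hA z).mpr ⟨x, ⟨h1, h2⟩, h3⟩)
    · have h0AF : (0:F) ∉ AF := by
        intro h
        apply h0A
        rw [hAset]
        exact h
      have : (A ∪ {0} : Set F) = ↑(AF ∪ {(0:F)}) := by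
        rw [Finset.coe_union, Finset.coe_singleton, hAset]
      rw [this, Set.ncard_coe_finset,
        Finset.card_union_of_disjoint (by simp [h0AF]), hAFcard, card_singleton]

end Setup

end Stmt9

open Stmt9

/-- the αQ-construction. For q ≡ 1 (mod 4), α·Q₀ and α·Q₁ are maximal
cliques of size (q+1)/2 in P(q²); for q ≡ 3 (mod 4), α·Q₀ ∪ {0} and α·Q₁ ∪ {0}
are maximal cliques of size (q+3)/2. -/
theorem stmt_9 (q : ℕ) (hq : Odd q) (hq' : IsPrimePow q)
    (F : Type*) [Field F] (hF : Nat.card F = q ^ 2)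
    (K : Subfield F) (hK : Nat.card K = q)
    (d : F) (hdK : d ∈ K) (hd0 : d ≠ 0) (hdns : ¬ ∃ c ∈ K, c * c = d)
    (α : F) (hα : α ^ 2 = d)
    (Q Q₀ Q₁ : Set F) (hQ : Q = {γ : F | γ ^ (q + 1) = 1})
    (hQ₀ : Q₀ = (fun γ => γ ^ 2) '' Q) (hQ₁ : Q₁ = Q \ Q₀) :
    (q % 4 = 1 →
      (maxPaleyClique ((fun x => α * x) '' Q₀) ∧
        ((fun x => α * x) '' Q₀).ncard = (q + 1) / 2) ∧
      (maxPaleyClique ((fun x => α * x) '' Q₁) ∧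
        ((fun x => α * x) '' Q₁).ncard = (q + 1) / 2)) ∧
    (q % 4 = 3 →
      (maxPaleyClique (((fun x => α * x) '' Q₀) ∪ {0}) ∧
        (((fun x => α * x) '' Q₀) ∪ {0} : Set F).ncard = (q + 3) / 2) ∧
      (maxPaleyClique (((fun x => α * x) '' Q₁) ∪ {0}) ∧
        (((fun x => α * x) '' Q₁) ∪ {0} : Set F).ncard = (q + 3) / 2)) := by
  have hq2 : 2 ≤ q := hq'.two_le
  have hqodd : q % 2 = 1 := Nat.odd_iff.mp hq
  obtain ⟨r, hr⟩ : ∃ r, q = 2*r + 1 := ⟨q/2, by omega⟩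
  have hr1 : 1 ≤ r := by omega
  have hFin : Finite F := Nat.finite_of_card_ne_zero (by rw [hF]; positivity)
  letI : Fintype F := Fintype.ofFinite F
  letI : DecidableEq F := Classical.decEq F
  have hcard : Fintype.card F = q^2 := by rw [← Nat.card_eq_fintype_card]; exact hF
  set p := ringChar F with hp
  haveI hCharF : CharP F p := ringChar.charP F
  have hpprime : p.Prime := CharP.char_is_prime F p
  obtain ⟨m, -, hm⟩ := FiniteField.card F p
  obtain ⟨p', k, hp', hk, hpk⟩ := hq'
  have hp'prime : p'.Prime := Nat.prime_iff.mpr hp'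
  have hpp' : p = p' := by
    have e1 : p ^ (m:ℕ) = q^2 := by rw [← hm]; exact hcard
    have e2 : q^2 = p' ^ (k*2) := by rw [← hpk, ← pow_mul]
    have h1 : p ∣ p' ^ (k*2) := by
      rw [← e2, ← e1]
      exact dvd_pow_self p m.pos.ne'
    exact (Nat.prime_dvd_prime_iff_eq hpprime hp'prime).mp (hpprime.dvd_of_dvd_pow h1)
  have hqpk : p^k = q := by rw [hpp']; exact hpk
  haveI : Fact p.Prime := ⟨hpprime⟩
  have hfrob : ∀ a b : F, (a + b)^q = a^q + b^q := by
    intro a b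
    rw [← hqpk]
    exact add_pow_char_pow (x := a) (y := b) (p := p) (n := k)
  have hpodd : p ≠ 2 := by
    intro h2
    rw [h2] at hqpk
    have hdvd : 2 ∣ q := by rw [← hqpk]; exact dvd_pow_self 2 (by omega)
    omega
  have hchar2 : ringChar F ≠ 2 := by rw [← hp]; exact hpodd
  have hne : (-1:F) ≠ 1 := by
    intro h
    have h2 : (2:F) = 0 := by linear_combination -h
    have h3 : p ∣ 2 := (CharP.cast_eq_zero_iff F p 2).mp (by exact_mod_cast h2)
    exact hpodd ((Nat.prime_dvd_prime_iff_eq hpprime Nat.prime_two).mp h3)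
  haveI hKfin : Fintype K := Fintype.ofFinite K
  have hKcard : Fintype.card K = q := by rw [← Nat.card_eq_fintype_card]; exact hK
  haveI hKchar : CharP K p := (K.subtype).charP Subtype.val_injective p
  have hKchar2 : ringChar K ≠ 2 := by
    rw [ringChar.eq (R := K) p]
    exact hpodd
  set dK : K := ⟨d, hdK⟩ with hdKdef
  have hdK0 : dK ≠ 0 := by
    intro h
    exact hd0 (congrArg Subtype.val h)
  have hdKns : ¬ IsSquare dK := by
    rintro ⟨c, hc⟩
    apply hdns
    refine ⟨(c:F), c.2, ?_⟩
    have h5 : (dK : F) = ((c*c : K) : F) := congrArg Subtype.val hc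
    push_cast at h5
    exact h5.symm
  have hq2r : q / 2 = r := by omega
  have hdpowK : dK ^ r = -1 := by
    have hdich := FiniteField.pow_dichotomy hKchar2 hdK0
    rw [hKcard, hq2r] at hdich
    rcases hdich with h | h
    · exact absurd ((FiniteField.isSquare_iff hKchar2 hdK0).mpr
        (by rw [hKcard, hq2r]; exact h)) hdKns
    · exact h
  have hdpow : d ^ r = (-1:F) := by
    have h6 : ((dK^r : K) : F) = ((-1 : K) : F) := congrArg Subtype.val hdpowK
    push_cast at h6
    exact h6
  have S : Stmt9.Setup F q r d α :=
    ⟨hr, hr1, hcard, hchar2, hfrob, hne, hd0, hdpow, hα⟩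
  have hQmem : ∀ x : F, x ∈ Q ↔ x^(q+1) = 1 := by
    intro x
    rw [hQ]
    exact Iff.rfl
  have hQ0mem : ∀ x : F, x ∈ Q₀ ↔ (x^(q+1) = 1 ∧ x^(r+1) = 1) := by
    intro x
    rw [hQ₀]
    constructor
    · rintro ⟨γ, hγ, rfl⟩
      rw [hQmem] at hγ
      constructor
      · show (γ^2)^(q+1) = 1
        rw [← pow_mul, mul_comm, pow_mul, hγ, one_pow]
      · show (γ^2)^(r+1) = 1
        rw [← pow_mul, show 2*(r+1) = q+1 by omega, hγ]
    · rintro ⟨h1, h2⟩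
      obtain ⟨γ, hγ1, hγ2⟩ := S.exists_sqrt x h1 h2
      exact ⟨γ, (hQmem γ).mpr hγ1, hγ2⟩
  have hQ1mem : ∀ x : F, x ∈ Q₁ ↔ (x^(q+1) = 1 ∧ x^(r+1) = -1) := by
    intro x
    rw [hQ₁, Set.mem_diff, hQmem, hQ0mem]
    constructor
    · rintro ⟨h1, h2⟩
      refine ⟨h1, ?_⟩
      rcases S.half_dichot x h1 with h | h
      · exact absurd ⟨h1, h⟩ h2
      · exact h
    · rintro ⟨h1, h2⟩
      refine ⟨h1, ?_⟩
      rintro ⟨-, h3⟩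
      rw [h3] at h2
      exact hne h2.symm
  have hA0 : ∀ w : F, (w ∈ (fun x => α * x) '' Q₀) ↔
      ∃ x : F, (x^(q+1) = 1 ∧ x^(r+1) = (1:F)) ∧ w = α * x := by
    intro w
    rw [Set.mem_image]
    constructor
    · rintro ⟨x, hx, rfl⟩
      rw [hQ0mem] at hx
      exact ⟨x, ⟨hx.1, hx.2⟩, rfl⟩
    · rintro ⟨x, ⟨h1, h2⟩, rfl⟩
      exact ⟨x, (hQ0mem x).mpr ⟨h1, h2⟩, rfl⟩
  have hA1 : ∀ w : F, (w ∈ (fun x => α * x) '' Q₁) ↔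
      ∃ x : F, (x^(q+1) = 1 ∧ x^(r+1) = (-1:F)) ∧ w = α * x := by
    intro w
    rw [Set.mem_image]
    constructor
    · rintro ⟨x, hx, rfl⟩
      rw [hQ1mem] at hx
      exact ⟨x, ⟨hx.1, hx.2⟩, rfl⟩
    · rintro ⟨x, ⟨h1, h2⟩, rfl⟩
      exact ⟨x, (hQ1mem x).mpr ⟨h1, h2⟩, rfl⟩
  have hM0 := S.main_eps 1 (Or.inl rfl) ((fun x => α * x) '' Q₀) hA0
  have hM1 := S.main_eps (-1) (Or.inr rfl) ((fun x => α * x) '' Q₁) hA1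
  constructor
  · intro h4
    have hre : r % 2 = 0 := by omega
    obtain ⟨hmax0, hcard0⟩ := hM0.1 hre
    obtain ⟨hmax1, hcard1⟩ := hM1.1 hre
    have hhalf : (q+1)/2 = r+1 := by omega
    exact ⟨⟨hmax0, by rw [hcard0, hhalf]⟩, ⟨hmax1, by rw [hcard1, hhalf]⟩⟩
  · intro h4
    have hro : r % 2 = 1 := by omega
    obtain ⟨hmax0, hcard0⟩ := hM0.2 hro
    obtain ⟨hmax1, hcard1⟩ := hM1.2 hro
    have hhalf : (q+3)/2 = r+2 := by omega
    exact ⟨⟨hmax0, by rw [hcard0, hhalf]⟩, ⟨hmax1, by rw [hcard1, hhalf]⟩⟩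
end

section
/- Let q be an odd prime power, d a non-square in F_q*, and α in F_{q^2} with α² = d. Let γ be an element of Q = {γ in F_{q^2} : γ^{q+1} = 1} with γ ≠ 1 and γ ≠ −1, and write γ = x + y*α with x, y in F_q (so y ≠ 0). Then φ(γ²) = (x/(y*d))·α. -/
/-!
The `q`-power Frobenius fixes `K` and maps `α` to `-α` (it fixes no element outside `K`, and
`α ∉ K` because `d` is not a square there), so it acts on `K(α)` as conjugation
`x + yα ↦ x - yα`. Hence `γ ^ (q + 1) = γ * conj γ = x² - y²d`, and on the norm-one conic
`x² - y²d = 1` one has `γ² + 1 = 2xγ` and `γ² - 1 = 2yαγ`, whose quotient is `x / (yα) = xα / (yd)`.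
-/

open Polynomial

namespace FiniteField

variable {K L : Type*} [Field K] [Fintype K] [CommRing L] [IsDomain L] [Algebra K L]

theorem X_pow_card_sub_X_splits : (X ^ Fintype.card K - X : K[X]).Splits := by
  rw [splits_iff_card_roots, roots_X_pow_card_sub_X, X_pow_card_sub_X_natDegree_eq K
    Fintype.one_lt_card]
  rfl

theorem mem_range_algebraMap_of_pow_card_eq_self {a : L} (ha : a ^ Fintype.card K = a) :
    a ∈ (algebraMap K L).range := by
  refine X_pow_card_sub_X_splits.mem_range_of_isRoot
    (X_pow_card_sub_X_ne_zero K Fintype.one_lt_card) ?_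
  simp [ha]

theorem pow_card_eq_neg_of_sq_eq_of_not_isSquare {α : L} {d : K}
    (hα : α ^ 2 = algebraMap K L d) (hd : ¬IsSquare d) : α ^ Fintype.card K = -α := by
  have hsq : (α ^ Fintype.card K) ^ 2 = α ^ 2 := by
    rw [← pow_mul, mul_comm, pow_mul, hα, ← map_pow, pow_card]
  rcases sq_eq_sq_iff_eq_or_eq_neg.mp hsq with hfix | hneg
  · obtain ⟨c, rfl⟩ := mem_range_algebraMap_of_pow_card_eq_self hfix
    refine absurd ⟨c, (algebraMap K L).injective ?_⟩ hd
    rw [map_mul, ← sq, hα]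
  · exact hneg

theorem add_mul_pow_card_eq_sub_mul {α : L} {d : K} (hα : α ^ 2 = algebraMap K L d)
    (hd : ¬IsSquare d) (x y : K) :
    (algebraMap K L x + algebraMap K L y * α) ^ Fintype.card K =
      algebraMap K L x - algebraMap K L y * α := by
  rw [← frobeniusAlgHom_apply K, map_add, map_mul, AlgHom.commutes, AlgHom.commutes,
    frobeniusAlgHom_apply, pow_card_eq_neg_of_sq_eq_of_not_isSquare hα hd, mul_neg, sub_eq_add_neg]

theorem two_ne_zero_of_odd_card (hK : Odd (Fintype.card K)) : (2 : L) ≠ 0 := by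
  obtain ⟨m, hm⟩ := hK
  have hcard : ((Fintype.card K : ℕ) : L) = 0 := by
    rw [← map_natCast (algebraMap K L), cast_card_eq_zero, map_zero]
  intro h2
  rw [hm, Nat.cast_add, Nat.cast_mul, Nat.cast_ofNat, h2, zero_mul, zero_add, Nat.cast_one] at hcard
  exact one_ne_zero hcard

end FiniteField

section NormOne

variable {L : Type*} [Field L] {α d x y : L}

theorem sq_sub_one_of_norm_eq_one (hα : α ^ 2 = d) (hnorm : x ^ 2 - y ^ 2 * d = 1) :
    (x + y * α) ^ 2 - 1 = 2 * y * α * (x + y * α) := by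
  linear_combination hnorm - y ^ 2 * hα

theorem sq_add_one_of_norm_eq_one (hα : α ^ 2 = d) (hnorm : x ^ 2 - y ^ 2 * d = 1) :
    (x + y * α) ^ 2 + 1 = 2 * x * (x + y * α) := by
  linear_combination -hnorm + y ^ 2 * hα

theorem add_mul_ne_zero_of_norm_eq_one (hα : α ^ 2 = d) (hnorm : x ^ 2 - y ^ 2 * d = 1) :
    x + y * α ≠ 0 := by
  intro h
  have : (x + y * α) * (x - y * α) = 1 := by linear_combination hnorm - y ^ 2 * hα
  simp [h] at this

theorem ne_zero_of_norm_eq_one_of_ne_one_of_ne_neg_one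
    (hnorm : x ^ 2 - y ^ 2 * d = 1) (h1 : x + y * α ≠ 1) (hn1 : x + y * α ≠ -1) : y ≠ 0 := by
  rintro rfl
  have hx : x ^ 2 = 1 ^ 2 := by linear_combination hnorm
  rcases sq_eq_sq_iff_eq_or_eq_neg.mp hx with rfl | rfl <;> simp_all

theorem sq_ne_one_of_norm_eq_one (h2 : (2 : L) ≠ 0) (hα : α ^ 2 = d) (hd : d ≠ 0) (hy : y ≠ 0)
    (hnorm : x ^ 2 - y ^ 2 * d = 1) : (x + y * α) ^ 2 ≠ 1 := by
  have hα0 : α ≠ 0 := ne_zero_pow two_ne_zero (hα ▸ hd)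
  rw [← sub_ne_zero, sq_sub_one_of_norm_eq_one hα hnorm]
  exact mul_ne_zero (by simp [h2, hy, hα0]) (add_mul_ne_zero_of_norm_eq_one hα hnorm)

theorem sq_add_one_div_sq_sub_one_of_norm_eq_one (h2 : (2 : L) ≠ 0) (hα : α ^ 2 = d)
    (hd : d ≠ 0) (hy : y ≠ 0) (hnorm : x ^ 2 - y ^ 2 * d = 1) :
    ((x + y * α) ^ 2 + 1) / ((x + y * α) ^ 2 - 1) = x / (y * d) * α := by
  have hα0 : α ≠ 0 := ne_zero_pow two_ne_zero (hα ▸ hd)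
  have hγ0 := add_mul_ne_zero_of_norm_eq_one hα hnorm
  rw [sq_add_one_of_norm_eq_one hα hnorm, sq_sub_one_of_norm_eq_one hα hnorm, ← hα]
  field_simp

end NormOne

theorem stmt_13_general (q : ℕ) (hq : Odd q)
    (F : Type*) [Field F]
    (K : Subfield F) (hK : Nat.card K = q)
    (d : F) (hdK : d ∈ K) (hd0 : d ≠ 0) (hdns : ¬ ∃ c ∈ K, c * c = d)
    (α : F) (hα : α ^ 2 = d)
    (φ : F → F) (hφ : ∀ γ : F, γ ≠ 1 → φ γ = (γ + 1) / (γ - 1))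
    (γ x y : F) (hγQ : γ ^ (q + 1) = 1) (hγ1 : γ ≠ 1) (hγn1 : γ ≠ -1)
    (hx : x ∈ K) (hy : y ∈ K) (hγ : γ = x + y * α) :
    φ (γ ^ 2) = (x / (y * d)) * α := by
  have : Fintype K := @Fintype.ofFinite K (Nat.finite_of_card_ne_zero (hK ▸ hq.pos.ne'))
  rw [Nat.card_eq_fintype_card] at hK
  subst hK hγ
  lift d to K using hdK
  lift x to K using hx
  lift y to K using hy
  have hd : ¬IsSquare d := fun ⟨c, hc⟩ ↦ hdns ⟨c, c.2, congrArg Subtype.val hc.symm⟩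
  have hnorm : (x : F) ^ 2 - (y : F) ^ 2 * d = 1 := by
    have hconj : ((x : F) + y * α) ^ Fintype.card K = x - y * α :=
      FiniteField.add_mul_pow_card_eq_sub_mul hα hd x y
    rw [pow_succ, hconj] at hγQ
    linear_combination hγQ + (y : F) ^ 2 * hα
  have hy0 := ne_zero_of_norm_eq_one_of_ne_one_of_ne_neg_one hnorm hγ1 hγn1
  have h2 : (2 : F) ≠ 0 := FiniteField.two_ne_zero_of_odd_card hq
  rw [hφ _ (sq_ne_one_of_norm_eq_one h2 hα hd0 hy0 hnorm),
    sq_add_one_div_sq_sub_one_of_norm_eq_one h2 hα hd0 hy0 hnorm]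

/-- if γ = x + y·α lies in Q = {γ : γ^{q+1} = 1} with γ ≠ 1 and
γ ≠ −1, then φ(γ²) = (x/(y·d))·α. -/
theorem stmt_13 (q : ℕ) (hq : Odd q) (hq' : IsPrimePow q)
    (F : Type*) [Field F] (hF : Nat.card F = q ^ 2)
    (K : Subfield F) (hK : Nat.card K = q)
    (d : F) (hdK : d ∈ K) (hd0 : d ≠ 0) (hdns : ¬ ∃ c ∈ K, c * c = d)
    (α : F) (hα : α ^ 2 = d)
    (φ : F → F) (hφ : ∀ γ : F, γ ≠ 1 → φ γ = (γ + 1) / (γ - 1)) (hφ1 : φ 1 = 1)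
    (γ x y : F) (hγQ : γ ^ (q + 1) = 1) (hγ1 : γ ≠ 1) (hγn1 : γ ≠ -1)
    (hx : x ∈ K) (hy : y ∈ K) (hγ : γ = x + y * α) :
    φ (γ ^ 2) = (x / (y * d)) * α :=
  stmt_13_general q hq F K hK d hdK hd0 hdns α hα φ hφ γ x y hγQ hγ1 hγn1 hx hy hγ
end

section
/- Let q be an odd prime power, d a non-square in F_q*, α in F_{q^2} with α² = d, Q = {γ in F_{q^2} : γ^{q+1} = 1}, and Q₀ = {γ² : γ in Q}. If q ≡ 1 (mod 4), then φ(Q₀) = {1} ∪ {c*α : c in F_q and c*α − 1 is not a square in F_{q^2}}, the maximal independent set of size (q+1)/2 from the (αF_q, 1)-construction. If q ≡ 3 (mod 4), then φ(Q₀ ∪ {0}) = {1, −1} ∪ {c*α : c in F_q and c*α − 1 is a square in F_{q^2}}, the maximal clique of size (q+3)/2 from the (αF_q, 1)-construction. -/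
/-!
The map `φ` is an involution of `F` with `φ 1 = 1` and `φ 0 = -1`. If `σ x = x ^ q` is the
Frobenius of `F / K`, then for `y ≠ 1` we have `σ (φ y) = - φ y` iff `σ y * y = 1`, so `φ`
exchanges `Q \ {1}` with the line `α K = {x | σ x = -x}`. For such `x`, `φ x = -(x - 1) ^ (q - 1)`,
hence with `m = (q + 1) / 2` we get `(φ x) ^ m = (-1) ^ m * (x - 1) ^ ((q ^ 2 - 1) / 2)`. As
`Q₀ = {γ | γ ^ m = 1}`, Euler's criterion shows that `φ x ∈ Q₀` iff (`x - 1` is a square iff `m` is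
even), and `m` is even iff `q ≡ 3 [MOD 4]`.
-/

open Polynomial in
theorem Subfield.mem_iff_pow_card_eq_self {F : Type*} [Field F] (K : Subfield F) [Fintype K]
    {y : F} : y ∈ K ↔ y ^ Fintype.card K = y := by
  refine ⟨fun hy => congrArg Subtype.val (FiniteField.pow_card (⟨y, hy⟩ : K)), fun hy => ?_⟩
  set P : K[X] := X ^ Fintype.card K - X
  have hP : P ≠ 0 := FiniteField.X_pow_card_sub_X_ne_zero K Fintype.one_lt_card
  have hroots : P.roots.map K.subtype = (P.map K.subtype).roots :=
    roots_map_of_injective_of_card_eq_natDegree K.subtype.injective (by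
      rw [FiniteField.roots_X_pow_card_sub_X,
        FiniteField.X_pow_card_sub_X_natDegree_eq K Fintype.one_lt_card]
      rfl)
  have hy : y ∈ (P.map K.subtype).roots := by
    rw [mem_roots ((Polynomial.map_ne_zero_iff K.subtype.injective).mpr hP)]
    simp [P, hy]
  rw [← hroots, FiniteField.roots_X_pow_card_sub_X] at hy
  obtain ⟨z, -, rfl⟩ := Multiset.mem_map.mp hy
  exact z.2

theorem FiniteField.exists_ringHom_eq_pow {F : Type*} [Field F] [Fintype F] {q : ℕ}
    (hq : q ∣ Fintype.card F) : ∃ σ : F →+* F, ∀ x, σ x = x ^ q := by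
  obtain ⟨n, hp, hcard⟩ := FiniteField.card F (ringChar F)
  have : Fact (ringChar F).Prime := ⟨hp⟩
  obtain ⟨i, -, rfl⟩ := (Nat.dvd_prime_pow hp).1 (hcard ▸ hq)
  exact ⟨iterateFrobenius F (ringChar F) i, fun x => iterateFrobenius_def ..⟩

section Cayley

variable {F : Type*} [Field F] {x y : F}

open Classical in
noncomputable def cayley (x : F) : F := if x = 1 then 1 else (x + 1) / (x - 1)

@[simp] theorem cayley_one : cayley (1 : F) = 1 := if_pos rfl

theorem cayley_of_ne_one (hx : x ≠ 1) : cayley x = (x + 1) / (x - 1) := if_neg hx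

@[simp] theorem cayley_zero : cayley (0 : F) = -1 := by
  simp [cayley_of_ne_one zero_ne_one]

theorem map_cayley (σ : F →+* F) (x : F) : σ (cayley x) = cayley (σ x) := by
  by_cases hx : x = 1
  · simp [hx]
  · rw [cayley_of_ne_one hx, cayley_of_ne_one ((map_ne_one_iff σ σ.injective).mpr hx)]
    simp

theorem cayley_ne_one (h2 : (2 : F) ≠ 0) (hx : x ≠ 1) : cayley x ≠ 1 := by
  have hx' : x - 1 ≠ 0 := sub_ne_zero.mpr hx
  rw [cayley_of_ne_one hx, Ne, div_eq_one_iff_eq hx']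
  intro h
  exact h2 (by linear_combination h)

theorem cayley_cayley (h2 : (2 : F) ≠ 0) (x : F) : cayley (cayley x) = x := by
  by_cases hx : x = 1
  · simp [hx]
  have hx' : x - 1 ≠ 0 := sub_ne_zero.mpr hx
  rw [cayley_of_ne_one (cayley_ne_one h2 hx), cayley_of_ne_one hx, div_add_one hx',
    div_sub_one hx', div_div_div_cancel_right₀ hx', div_eq_iff (by ring_nf; exact h2)]
  ring

theorem cayley_involutive (h2 : (2 : F) ≠ 0) : Function.Involutive (cayley : F → F) :=
  cayley_cayley h2

theorem cayley_eq_neg_cayley_iff (h2 : (2 : F) ≠ 0) (hx : x ≠ 1) (hy : y ≠ 1) :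
    cayley x = -cayley y ↔ x * y = 1 := by
  have hx' : x - 1 ≠ 0 := sub_ne_zero.mpr hx
  have hy' : y - 1 ≠ 0 := sub_ne_zero.mpr hy
  rw [cayley_of_ne_one hx, cayley_of_ne_one hy, ← neg_div, div_eq_div_iff hx' hy']
  constructor
  · intro h
    exact mul_left_cancel₀ h2 (by linear_combination h)
  · intro h
    linear_combination 2 * h

theorem map_eq_neg_iff_map_cayley_mul_eq_one (h2 : (2 : F) ≠ 0) (σ : F →+* F) (hx : x ≠ 1) :
    σ x = -x ↔ σ (cayley x) * cayley x = 1 := by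
  have hσx : σ x ≠ 1 := (map_ne_one_iff σ σ.injective).mpr hx
  rw [map_cayley, ← cayley_eq_neg_cayley_iff h2 (cayley_ne_one h2 hσx) (cayley_ne_one h2 hx),
    cayley_cayley h2, cayley_cayley h2]

theorem cayley_eq_neg_map_sub_one_div (σ : F →+* F) (hx : σ x = -x) (hx1 : x ≠ 1) :
    cayley x = -(σ (x - 1) / (x - 1)) := by
  rw [cayley_of_ne_one hx1, map_sub, map_one, hx, ← neg_div]
  ring

end Cayley

theorem map_eq_neg_of_sq_mem {F : Type*} [Field F] {σ : F →+* F} {K : Subfield F}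
    (hK : ∀ y, y ∈ K ↔ σ y = y) {α : F} (hsq : α ^ 2 ∈ K) (hα : α ∉ K) : σ α = -α := by
  have : σ α ^ 2 = α ^ 2 := by rw [← map_pow, (hK _).mp hsq]
  exact (sq_eq_sq_iff_eq_or_eq_neg.mp this).resolve_left fun h => hα ((hK α).mpr h)

theorem setOf_map_eq_neg_and {F : Type*} [Field F] {σ : F →+* F} {K : Subfield F}
    (hK : ∀ y, y ∈ K ↔ σ y = y) {α : F} (hα : σ α = -α) (hα0 : α ≠ 0) (P : F → Prop) :
    {x | σ x = -x ∧ P x} = {x | ∃ c ∈ K, x = c * α ∧ P (c * α)} := by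
  ext x
  constructor
  · rintro ⟨hx, h⟩
    refine ⟨x / α, (hK _).mpr ?_, (div_mul_cancel₀ x hα0).symm, by rwa [div_mul_cancel₀ x hα0]⟩
    rw [map_div₀, hx, hα, neg_div_neg_eq]
  · rintro ⟨c, hc, rfl, h⟩
    refine ⟨?_, h⟩
    rw [map_mul, (hK c).mp hc, hα, mul_neg]

theorem Nat.sq_div_two_of_odd {q : ℕ} (hq : Odd q) : q ^ 2 / 2 = (q - 1) * ((q + 1) / 2) := by
  obtain ⟨k, rfl⟩ := hq
  have h1 : (2 * k + 1) ^ 2 = 2 * (2 * k * (k + 1)) + 1 := by ring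
  have h2 : 2 * k + 1 - 1 = 2 * k := by omega
  have h3 : (2 * k + 1 + 1) / 2 = k + 1 := by omega
  rw [h1, h2, h3]
  omega

section FiniteField

variable {F : Type*} [Field F] [Fintype F] {q : ℕ}

theorem ringChar_ne_two_of_card_eq_sq_s14 (hq : Odd q) (hF : Fintype.card F = q ^ 2) :
    ringChar F ≠ 2 := fun h => by
  have := FiniteField.even_card_of_char_two h
  rw [hF, ← Nat.even_iff] at this
  exact Nat.not_even_iff_odd.mpr hq.pow this

theorem sq_image_setOf_pow_eq_one (hq : Odd q) (hF : Fintype.card F = q ^ 2) :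
    (· ^ 2) '' {δ : F | δ ^ (q + 1) = 1} = {γ | γ ^ ((q + 1) / 2) = 1} := by
  have hm : 2 * ((q + 1) / 2) = q + 1 := by obtain ⟨k, rfl⟩ := hq; omega
  ext γ
  constructor
  · rintro ⟨δ, hδ, rfl⟩
    rw [Set.mem_ofPred_eq, ← pow_mul, hm, hδ]
  · intro hγ
    have hγ0 : γ ≠ 0 := by
      rintro rfl
      exact zero_ne_one ((zero_pow (by omega)).symm.trans hγ)
    obtain ⟨δ, rfl⟩ := (FiniteField.isSquare_iff (ringChar_ne_two_of_card_eq_sq_s14 hq hF) hγ0).mpr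
      (by rw [hF, Nat.sq_div_two_of_odd hq, mul_comm, pow_mul, hγ, one_pow])
    refine ⟨δ, ?_, sq δ⟩
    rw [Set.mem_ofPred_eq, ← hm, pow_mul, sq]
    exact hγ

theorem cayley_pow_half (hq : Odd q) (hF : Fintype.card F = q ^ 2) {σ : F →+* F}
    (hσ : ∀ y, σ y = y ^ q) {x : F} (hx : σ x = -x) (hx1 : x ≠ 1) :
    cayley x ^ ((q + 1) / 2) = (-1) ^ ((q + 1) / 2) * (x - 1) ^ (Fintype.card F / 2) := by
  have hx' : x - 1 ≠ 0 := sub_ne_zero.mpr hx1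
  have hq1 : q = q - 1 + 1 := by obtain ⟨k, rfl⟩ := hq; omega
  rw [cayley_eq_neg_map_sub_one_div σ hx hx1, hσ, hq1, pow_succ, mul_div_cancel_right₀ _ hx',
    ← hq1, neg_pow, ← pow_mul, hF, Nat.sq_div_two_of_odd hq]

theorem cayley_pow_half_eq_one_iff (hq : Odd q) (hF : Fintype.card F = q ^ 2) {σ : F →+* F}
    (hσ : ∀ y, σ y = y ^ q) {x : F} (hx : σ x = -x) :
    cayley x ^ ((q + 1) / 2) = 1 ↔ (IsSquare (x - 1) ↔ Even ((q + 1) / 2)) := by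
  have hF2 := ringChar_ne_two_of_card_eq_sq_s14 hq hF
  have hne : (-1 : F) ≠ 1 := Ring.neg_one_ne_one_of_char_ne_two hF2
  have hx1 : x ≠ 1 := by
    rintro rfl
    exact hne (by simpa using hx.symm)
  have hx' : x - 1 ≠ 0 := sub_ne_zero.mpr hx1
  rw [cayley_pow_half hq hF hσ hx hx1, FiniteField.isSquare_iff hF2 hx']
  rcases Nat.even_or_odd ((q + 1) / 2) with hm | hm <;>
    rcases FiniteField.pow_dichotomy hF2 hx' with hs | hs <;>
    simp [hs, hm, hm.neg_one_pow, hne, Nat.not_even_iff_odd]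

theorem cayley_image_sq_image_setOf_pow_eq_one (hq : Odd q) (hF : Fintype.card F = q ^ 2)
    {σ : F →+* F} (hσ : ∀ y, σ y = y ^ q) :
    cayley '' ((· ^ 2) '' {δ : F | δ ^ (q + 1) = 1}) =
      {1} ∪ {x | σ x = -x ∧ (IsSquare (x - 1) ↔ Even ((q + 1) / 2))} := by
  have h2 : (2 : F) ≠ 0 := Ring.two_ne_zero (ringChar_ne_two_of_card_eq_sq_s14 hq hF)
  rw [sq_image_setOf_pow_eq_one hq hF, (cayley_involutive h2).image_eq_preimage_symm]
  ext x
  simp only [Set.mem_preimage, Set.mem_ofPred_eq, Set.mem_union, Set.mem_singleton_iff]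
  by_cases hx1 : x = 1
  · simp [hx1]
  refine ⟨fun h => Or.inr ?_, ?_⟩
  · have hx : σ x = -x := by
      have hm : (q + 1) / 2 * 2 = q + 1 := by obtain ⟨k, rfl⟩ := hq; omega
      rw [map_eq_neg_iff_map_cayley_mul_eq_one h2 σ hx1, hσ, ← pow_succ, ← hm, pow_mul, h,
        one_pow]
    exact ⟨hx, (cayley_pow_half_eq_one_iff hq hF hσ hx).mp h⟩
  · rintro (h | ⟨hx, h⟩)
    · exact absurd h hx1
    · exact (cayley_pow_half_eq_one_iff hq hF hσ hx).mpr h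

end FiniteField

theorem stmt_14_general (q : ℕ) (hq : Odd q)
    (F : Type*) [Field F] (hF : Nat.card F = q ^ 2)
    (K : Subfield F) (hK : Nat.card K = q)
    (d : F) (hdK : d ∈ K) (hdns : ¬ ∃ c ∈ K, c * c = d)
    (α : F) (hα : α ^ 2 = d)
    (φ : F → F) (hφ : ∀ γ : F, γ ≠ 1 → φ γ = (γ + 1) / (γ - 1)) (hφ1 : φ 1 = 1)
    (Q Q₀ : Set F) (hQ : Q = {γ : F | γ ^ (q + 1) = 1})
    (hQ₀ : Q₀ = (fun γ => γ ^ 2) '' Q) :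
    (q % 4 = 1 →
      φ '' Q₀ = {1} ∪ {x : F | ∃ c ∈ K, x = c * α ∧ ¬ IsSquare (c * α - 1)}) ∧
    (q % 4 = 3 →
      φ '' (Q₀ ∪ {0}) = {1, -1} ∪ {x : F | ∃ c ∈ K, x = c * α ∧ IsSquare (c * α - 1)}) := by
  have : Finite F := Nat.finite_of_card_ne_zero (by rw [hF]; exact pow_ne_zero 2 hq.pos.ne')
  have := Fintype.ofFinite F
  have := Fintype.ofFinite K
  rw [Nat.card_eq_fintype_card] at hF hK
  obtain ⟨σ, hσ⟩ := FiniteField.exists_ringHom_eq_pow (hF ▸ dvd_pow_self q two_ne_zero)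
  have hKσ : ∀ y, y ∈ K ↔ σ y = y := fun y => by rw [hσ, K.mem_iff_pow_card_eq_self, hK]
  have hαK : α ∉ K := fun h => hdns ⟨α, h, by rw [← hα, sq]⟩
  have hσα : σ α = -α := map_eq_neg_of_sq_mem hKσ (hα ▸ hdK) hαK
  obtain rfl : φ = cayley := funext fun γ => by
    by_cases hγ : γ = 1
    · rw [hγ, hφ1, cayley_one]
    · rw [hφ γ hγ, cayley_of_ne_one hγ]
  subst hQ hQ₀
  rw [Set.image_union, Set.image_singleton, cayley_zero,
    cayley_image_sq_image_setOf_pow_eq_one hq hF hσ,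
    setOf_map_eq_neg_and hKσ hσα (ne_of_mem_of_not_mem K.zero_mem hαK).symm]
  refine ⟨fun hq1 => ?_, fun hq3 => ?_⟩
  · have hm : ¬ Even ((q + 1) / 2) := by rw [Nat.even_iff]; omega
    simp only [hm, iff_false]
  · have hm : Even ((q + 1) / 2) := by rw [Nat.even_iff]; omega
    simp only [hm, iff_true]
    rw [Set.union_right_comm, Set.union_singleton, Set.pair_comm]

/-- φ carries the Q-construction onto the (αF_q, 1)-construction.
If q ≡ 1 (mod 4), then φ(Q₀) = {1} ∪ {cα : c ∈ F_q, cα − 1 not a square};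
if q ≡ 3 (mod 4), then φ(Q₀ ∪ {0}) = {1, −1} ∪ {cα : c ∈ F_q, cα − 1 a square}. -/
theorem stmt_14 (q : ℕ) (hq : Odd q) (hq' : IsPrimePow q)
    (F : Type*) [Field F] (hF : Nat.card F = q ^ 2)
    (K : Subfield F) (hK : Nat.card K = q)
    (d : F) (hdK : d ∈ K) (hd0 : d ≠ 0) (hdns : ¬ ∃ c ∈ K, c * c = d)
    (α : F) (hα : α ^ 2 = d)
    (φ : F → F) (hφ : ∀ γ : F, γ ≠ 1 → φ γ = (γ + 1) / (γ - 1)) (hφ1 : φ 1 = 1)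
    (Q Q₀ : Set F) (hQ : Q = {γ : F | γ ^ (q + 1) = 1})
    (hQ₀ : Q₀ = (fun γ => γ ^ 2) '' Q) :
    (q % 4 = 1 →
      φ '' Q₀ = {1} ∪ {x : F | ∃ c ∈ K, x = c * α ∧ ¬ IsSquare (c * α - 1)}) ∧
    (q % 4 = 3 →
      φ '' (Q₀ ∪ {0}) = {1, -1} ∪ {x : F | ∃ c ∈ K, x = c * α ∧ IsSquare (c * α - 1)}) :=
  stmt_14_general q hq F hF K hK d hdK hdns α hα φ hφ hφ1 Q Q₀ hQ hQ₀
end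

section
/- Let q be an odd prime power, d a non-square in F_q*, α in F_{q^2} with α² = d, Q = {γ in F_{q^2} : γ^{q+1} = 1}, Q₀ = {γ² : γ in Q}, and Q₁ = Q \ Q₀. If q ≡ 1 (mod 4), then in the Paley graph P(q²) the set φ(Q₁) is an independent set, the vertex 1 is adjacent to every element of φ(Q₁), and 1 ∉ φ(Q₁); i.e., φ(Q₁ ∪ {1}) induces a complete bipartite graph with parts φ(Q₁) and {1}. If q ≡ 3 (mod 4), then φ(Q₁) is a clique in P(q²), the vertices 1 and −1 are adjacent, and no element of φ(Q₁) is adjacent to 1 or to −1; i.e., φ(Q₁ ∪ {0, 1}) induces the disjoint union of the clique φ(Q₁) and the edge {1, −1}. -/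
/-- if q ≡ 1 (mod 4), then φ(Q₁ ∪ {1}) induces a complete bipartite
graph with parts φ(Q₁) and {1} in P(q²); if q ≡ 3 (mod 4), then φ(Q₁ ∪ {0, 1})
induces the disjoint union of the clique φ(Q₁) and the edge {1, −1}. -/
theorem stmt_15 (q : ℕ) (hq : Odd q) (hq' : IsPrimePow q)
    (F : Type*) [Field F] (hF : Nat.card F = q ^ 2)
    (K : Subfield F) (hK : Nat.card K = q)
    (d : F) (hdK : d ∈ K) (hd0 : d ≠ 0) (hdns : ¬ ∃ c ∈ K, c * c = d)
    (α : F) (hα : α ^ 2 = d)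
    (φ : F → F) (hφ : ∀ γ : F, γ ≠ 1 → φ γ = (γ + 1) / (γ - 1)) (hφ1 : φ 1 = 1)
    (Q Q₀ Q₁ : Set F) (hQ : Q = {γ : F | γ ^ (q + 1) = 1})
    (hQ₀ : Q₀ = (fun γ => γ ^ 2) '' Q) (hQ₁ : Q₁ = Q \ Q₀) :
    (q % 4 = 1 →
      paleyIndep (φ '' Q₁) ∧ (1 : F) ∉ φ '' Q₁ ∧
      ∀ x ∈ φ '' Q₁, IsSquare (1 - x)) ∧
    (q % 4 = 3 →
      paleyClique (φ '' Q₁) ∧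
      (1 : F) ≠ -1 ∧ IsSquare ((1 : F) - (-1)) ∧
      (1 : F) ∉ φ '' Q₁ ∧ (-1 : F) ∉ φ '' Q₁ ∧
      ∀ x ∈ φ '' Q₁, ¬ IsSquare (1 - x) ∧ ¬ IsSquare (-1 - x)) := by
  classical
  obtain ⟨k, hk0⟩ := hq
  have hqk : q = 2 * k + 1 := by omega
  have hqodd : Odd q := ⟨k, by omega⟩
  have hq2 : 2 ≤ q := hq'.two_le
  -- finiteness of F
  have hFfin : Finite F := Nat.finite_of_card_ne_zero (by rw [hF]; positivity)
  cases nonempty_fintype F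
  have hcard : Fintype.card F = q ^ 2 := by rw [← Nat.card_eq_fintype_card, hF]
  -- characteristic
  obtain ⟨p, n, hp, hn, hpn⟩ := hq'
  have hp' : Nat.Prime p := Nat.prime_iff.mpr hp
  have hchar : CharP F (ringChar F) := ringChar.charP F
  obtain ⟨m, hm, hcard'⟩ := FiniteField.card F (ringChar F)
  have hpr : p = ringChar F := by
    have h1 : p ∣ (ringChar F) ^ (m : ℕ) := by
      rw [← hcard', hcard, ← hpn]
      exact dvd_pow (dvd_pow_self p hn.ne') (by norm_num)
    exact (Nat.prime_dvd_prime_iff_eq hp' hm).mp (hp'.dvd_of_dvd_pow h1)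
  haveI : Fact (Nat.Prime p) := ⟨hp'⟩
  haveI : CharP F p := by rw [hpr]; exact hchar
  -- frobenius
  have hfrob_add : ∀ x y : F, (x + y) ^ q = x ^ q + y ^ q := by
    intro x y; rw [← hpn]; exact add_pow_char_pow x y p n
  have hfrob_sub : ∀ x y : F, (x - y) ^ q = x ^ q - y ^ q := by
    intro x y; rw [← hpn]; exact sub_pow_char_pow x y n
  -- char ≠ 2 facts
  have hpodd : p ≠ 2 := by
    intro h
    have hdvd : p ∣ q := by rw [← hpn]; exact dvd_pow_self p hn.ne'
    rw [h] at hdvd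
    omega
  have hchar2 : ringChar F ≠ 2 := by rw [← hpr]; exact hpodd
  have h2 : (2 : F) ≠ 0 := by
    intro h
    have h' : ((2 : ℕ) : F) = 0 := by exact_mod_cast h
    have hd2 := (CharP.cast_eq_zero_iff F p 2).mp h'
    have := Nat.le_of_dvd (by norm_num) hd2
    have := hp'.two_le
    interval_cases p
    · exact hpodd rfl
  have hm1 : (-1 : F) ≠ 1 := by
    intro h; apply h2; linear_combination -h
  -- square criterion
  have hexp : Fintype.card F / 2 = (q + 1) * k := by
    rw [hcard]
    have h1 : q ^ 2 = 2 * ((q + 1) * k) + 1 := by rw [hqk]; ring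
    omega
  have hsq : ∀ z : F, z ≠ 0 → (IsSquare z ↔ z ^ ((q + 1) * k) = 1) := by
    intro z hz
    rw [← hexp]
    exact FiniteField.isSquare_iff hchar2 hz
  have hnsq : ∀ z : F, z ≠ 0 → z ^ ((q + 1) * k) = -1 → ¬ IsSquare z := by
    intro z hz hv hs
    exact hm1 (by rw [← hv]; exact (hsq z hz).mp hs)
  -- K facts
  have hKfin : Finite K := Nat.finite_of_card_ne_zero (by rw [hK]; omega)
  cases nonempty_fintype K
  have hKcard : Fintype.card K = q := by rw [← Nat.card_eq_fintype_card, hK]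
  have hKpow : ∀ c : F, c ∈ K → c ≠ 0 → c ^ (q - 1) = 1 := by
    intro c hc hc0
    have hc' : (⟨c, hc⟩ : K) ≠ 0 := by
      intro h
      exact hc0 (congrArg Subtype.val h)
    have h1 := FiniteField.pow_card_sub_one_eq_one (⟨c, hc⟩ : K) hc'
    rw [hKcard] at h1
    simpa using congrArg Subtype.val h1
  have h2K : (2 : F) ∈ K := by
    have := K.add_mem K.one_mem K.one_mem
    rwa [one_add_one_eq_two] at this
  have hKsq : ∀ c : F, c ∈ K → c ≠ 0 → IsSquare c := by
    intro c hc hc0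
    rw [hsq c hc0]
    have hq1 : q - 1 = 2 * k := by omega
    have he : (q + 1) * k = (q - 1) * (k + 1) := by
      rw [hq1, hqk]; ring
    rw [he, pow_mul, hKpow c hc hc0, one_pow]
  have h2pow : (2 : F) ^ (q - 1) = 1 := hKpow 2 h2K h2
  have h2q : (2 : F) ^ q = 2 := by
    calc (2 : F) ^ q = 2 ^ (q - 1) * 2 := by
          rw [← pow_succ]; congr 1; omega
      _ = 2 := by rw [h2pow, one_mul]
  -- Q facts
  subst hQ
  subst hQ₀
  subst hQ₁
  have hQ0 : ∀ γ : F, γ ^ (q + 1) = 1 → γ ≠ 0 := by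
    intro γ h h0
    rw [h0, zero_pow (by omega : q + 1 ≠ 0)] at h
    exact zero_ne_one h
  have hQinv : ∀ γ : F, γ ^ (q + 1) = 1 → γ ^ q = γ⁻¹ := by
    intro γ h
    have h1 : γ ^ q * γ = 1 := by rw [← pow_succ]; exact h
    exact eq_inv_of_mul_eq_one_left h1
  have hQsqF : ∀ γ : F, γ ^ (q + 1) = 1 → IsSquare γ := by
    intro γ h
    rw [hsq γ (hQ0 γ h), pow_mul, h, one_pow]
  have hQ1pow : ∀ γ : F, γ ^ (q + 1) = 1 →
      (¬ ∃ b : F, b ^ (q + 1) = 1 ∧ b ^ 2 = γ) → γ ^ (k + 1) = -1 := by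
    intro γ h hns
    obtain ⟨b, hb⟩ := hQsqF γ h
    have hb2 : b ^ 2 = γ := by rw [sq]; exact hb.symm
    have h1 : (b ^ (q + 1)) * (b ^ (q + 1)) = 1 := by
      calc b ^ (q + 1) * b ^ (q + 1) = (b * b) ^ (q + 1) := (mul_pow b b (q + 1)).symm
        _ = γ ^ (q + 1) := by rw [← hb]
        _ = 1 := h
    rcases mul_self_eq_one_iff.mp h1 with h2 | h2
    · exact absurd ⟨b, h2, hb2⟩ hns
    · calc γ ^ (k + 1) = (b ^ 2) ^ (k + 1) := by rw [hb2]
        _ = b ^ (2 * (k + 1)) := by rw [← pow_mul]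
        _ = b ^ (q + 1) := by congr 1; omega
        _ = -1 := h2
  -- membership in Q₁
  have hmem : ∀ γ : F, γ ∈ ({γ : F | γ ^ (q + 1) = 1} \
      (fun γ => γ ^ 2) '' {γ : F | γ ^ (q + 1) = 1}) →
      γ ^ (q + 1) = 1 ∧ γ ≠ 1 ∧ γ ^ (k + 1) = -1 := by
    intro γ hγ
    obtain ⟨h1', h2'⟩ := hγ
    have h1'' : γ ^ (q + 1) = 1 := h1'
    have hns : ¬ ∃ b : F, b ^ (q + 1) = 1 ∧ b ^ 2 = γ := by
      rintro ⟨b, hb1, hb2⟩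
      exact h2' ⟨b, hb1, hb2⟩
    refine ⟨h1'', ?_, hQ1pow γ h1'' hns⟩
    intro h
    exact hns ⟨1, by rw [one_pow], by rw [h, one_pow]⟩
  -- key computations about φ
  have hkey : ∀ γ : F, γ ^ (q + 1) = 1 → γ ≠ 1 →
      (φ γ) ^ q = -φ γ ∧ (1 - φ γ) ≠ 0 ∧
      (1 - φ γ) ^ q = -(γ * (1 - φ γ)) ∧ (-1 - φ γ) = γ * (1 - φ γ) := by
    intro γ h h1
    have h0 := hQ0 γ h
    have hqi := hQinv γ h
    have hd1 : γ - 1 ≠ 0 := sub_ne_zero.mpr h1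
    have h1m : (1 : F) - γ ≠ 0 := sub_ne_zero.mpr (Ne.symm h1)
    have hdi : γ⁻¹ - 1 ≠ 0 := by
      intro hh
      apply h1
      have h3 : γ⁻¹ = 1 := by rwa [sub_eq_zero] at hh
      rwa [inv_eq_one] at h3
    rw [hφ γ h1]
    have hz : 1 - (γ + 1) / (γ - 1) = -2 / (γ - 1) := by
      field_simp
      ring
    refine ⟨?_, ?_, ?_, ?_⟩
    · rw [div_pow, hfrob_add, hfrob_sub, one_pow, hqi, ← neg_div,
        div_eq_div_iff hdi hd1]
      field_simp
      ring
    · rw [hz]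
      exact div_ne_zero (neg_ne_zero.mpr h2) hd1
    · rw [hz, div_pow, hfrob_sub, one_pow, hqi, hqodd.neg_pow, h2q]
      field_simp
      ring
    · field_simp
      ring
  -- power computations
  have hpow_neg : ∀ z : F, z ≠ 0 → z ^ q = -z → z ^ ((q + 1) * k) = (-1 : F) ^ (k + 1) := by
    intro z hz hzq
    have hz1 : z ^ (q - 1) = -1 := by
      have h1 : z ^ (q - 1) * z = -1 * z := by
        rw [← pow_succ, (by omega : q - 1 + 1 = q), hzq]; ring
      exact mul_right_cancel₀ hz h1
    have hz2 : z ^ (q + 1) = -1 * z ^ 2 := by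
      rw [pow_succ, hzq]; ring
    have h2k : 2 * k = q - 1 := by omega
    calc z ^ ((q + 1) * k) = (z ^ (q + 1)) ^ k := by rw [pow_mul]
      _ = (-1 : F) ^ k * z ^ (2 * k) := by rw [hz2, mul_pow, ← pow_mul]
      _ = (-1 : F) ^ k * z ^ (q - 1) := by rw [h2k]
      _ = (-1 : F) ^ k * (-1) := by rw [hz1]
      _ = (-1 : F) ^ (k + 1) := by rw [pow_succ]
  have hpow_g : ∀ g z : F, g ^ (q + 1) = 1 → g ^ (k + 1) = -1 → z ≠ 0 →
      z ^ q = -(g * z) → z ^ ((q + 1) * k) = (-1 : F) ^ k := by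
    intro g z hg hgk hz hzq
    have hz1 : z ^ (q - 1) = -g := by
      have h1 : z ^ (q - 1) * z = -g * z := by
        rw [← pow_succ, (by omega : q - 1 + 1 = q), hzq]; ring
      exact mul_right_cancel₀ hz h1
    have hz2 : z ^ (q + 1) = -1 * g * z ^ 2 := by
      rw [pow_succ, hzq]; ring
    have h2k : 2 * k = q - 1 := by omega
    have h3 : z ^ ((q + 1) * k) = (-1 : F) ^ k * g ^ k * z ^ (2 * k) := by
      rw [pow_mul, hz2, mul_pow, mul_pow, ← pow_mul]
    rw [h3, h2k, hz1]
    have h4 : g ^ k * (-g) = 1 := by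
      calc g ^ k * (-g) = -(g ^ (k + 1)) := by rw [pow_succ]; ring
        _ = 1 := by rw [hgk]; ring
    rw [mul_assoc, h4, mul_one]
  -- assembly
  constructor
  · intro hq4
    have hkeven : Even k := by rw [Nat.even_iff]; omega
    refine ⟨?_, ?_, ?_⟩
    · rintro x ⟨γ, hγ, rfl⟩ y ⟨δ, hδ, rfl⟩ hxy
      obtain ⟨hγ1, hγ2, hγ3⟩ := hmem γ hγ
      obtain ⟨hδ1, hδ2, hδ3⟩ := hmem δ hδ
      have hz0 : φ γ - φ δ ≠ 0 := sub_ne_zero.mpr hxy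
      have hzq : (φ γ - φ δ) ^ q = -(φ γ - φ δ) := by
        rw [hfrob_sub, (hkey γ hγ1 hγ2).1, (hkey δ hδ1 hδ2).1]; ring
      apply hnsq _ hz0
      rw [hpow_neg _ hz0 hzq, pow_succ, hkeven.neg_one_pow, one_mul]
    · rintro ⟨γ, hγ, hγe⟩
      obtain ⟨hγ1, hγ2, _⟩ := hmem γ hγ
      exact (hkey γ hγ1 hγ2).2.1 (by rw [hγe]; ring)
    · rintro x ⟨γ, hγ, rfl⟩
      obtain ⟨hγ1, hγ2, hγ3⟩ := hmem γ hγ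
      obtain ⟨hφq, hz0, hzq, hw⟩ := hkey γ hγ1 hγ2
      rw [hsq _ hz0, hpow_g γ (1 - φ γ) hγ1 hγ3 hz0 hzq]
      exact hkeven.neg_one_pow
  · intro hq4
    have hkodd : Odd k := by rw [Nat.odd_iff]; omega
    refine ⟨?_, ?_, ?_, ?_, ?_, ?_⟩
    · rintro x ⟨γ, hγ, rfl⟩ y ⟨δ, hδ, rfl⟩ hxy
      obtain ⟨hγ1, hγ2, hγ3⟩ := hmem γ hγ
      obtain ⟨hδ1, hδ2, hδ3⟩ := hmem δ hδ
      have hz0 : φ γ - φ δ ≠ 0 := sub_ne_zero.mpr hxy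
      have hzq : (φ γ - φ δ) ^ q = -(φ γ - φ δ) := by
        rw [hfrob_sub, (hkey γ hγ1 hγ2).1, (hkey δ hδ1 hδ2).1]; ring
      rw [hsq _ hz0, hpow_neg _ hz0 hzq]
      exact (hkodd.add_one).neg_one_pow
    · exact fun h => hm1 h.symm
    · have h12 : (1 : F) - (-1) = 2 := by ring
      rw [h12]
      exact hKsq 2 h2K h2
    · rintro ⟨γ, hγ, hγe⟩
      obtain ⟨hγ1, hγ2, _⟩ := hmem γ hγ
      exact (hkey γ hγ1 hγ2).2.1 (by rw [hγe]; ring)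
    · rintro ⟨γ, hγ, hγe⟩
      obtain ⟨hγ1, hγ2, _⟩ := hmem γ hγ
      obtain ⟨_, hz0, _, hw⟩ := hkey γ hγ1 hγ2
      have hne : γ * (1 - φ γ) ≠ 0 := mul_ne_zero (hQ0 γ hγ1) hz0
      rw [← hw] at hne
      exact hne (by rw [hγe]; ring)
    · rintro x ⟨γ, hγ, rfl⟩
      obtain ⟨hγ1, hγ2, hγ3⟩ := hmem γ hγ
      obtain ⟨hφq, hz0, hzq, hw⟩ := hkey γ hγ1 hγ2
      have hval := hpow_g γ (1 - φ γ) hγ1 hγ3 hz0 hzq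
      have hvneg : (1 - φ γ) ^ ((q + 1) * k) = -1 := by
        rw [hval]; exact hkodd.neg_one_pow
      constructor
      · exact hnsq _ hz0 hvneg
      · have hw0 : -1 - φ γ ≠ 0 := by
          rw [hw]; exact mul_ne_zero (hQ0 γ hγ1) hz0
        apply hnsq _ hw0
        rw [hw, mul_pow, pow_mul, hγ1, one_pow, one_mul, hvneg]
end
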